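/- arXiv:1506.02835 — 11 statements merged into one kernel-verified Lean document; each statement's English description precedes it below -/
import Mathlib

section
/- Let β be a real number and let f be a solution of the equation f''' + f·f'' + β·f'·(f'−1) = 0 on an interval I. If there exists t₀ ∈ I such that f'(t₀) ∈ {0,1} and f''(t₀) = 0, then f'' vanishes identically on I (equivalently, f(t) = f(t₀) + f'(t₀)·(t − t₀) for all t ∈ I). -/
open Set Filter Topology

open Metric in
lemma lipAux (β R : ℝ) (hR : 0 ≤ R) :
    LipschitzOnWith (2*R + |β| * (2*R+1) + 1).toNNReal
      (fun p : ℝ × ℝ × ℝ => (p.2.1, p.2.2, -(p.1*p.2.2) - β*(p.2.1*(p.2.1-1))))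
      (Metric.closedBall 0 R) := by
  rw [lipschitzOnWith_iff_dist_le_mul]
  intro p hp q hq
  have hK : ((2*R + |β| * (2*R+1) + 1).toNNReal : ℝ) = 2*R + |β| * (2*R+1) + 1 :=
    Real.coe_toNNReal _ (by positivity)
  rw [hK]
  set d := dist p q with hd
  have hd0 : 0 ≤ d := dist_nonneg
  have hfst : dist p.1 q.1 ≤ d := by rw [hd, Prod.dist_eq]; exact le_max_left _ _
  have hsnd : dist p.2 q.2 ≤ d := by rw [hd, Prod.dist_eq]; exact le_max_right _ _
  have h1 : |p.1 - q.1| ≤ d := by simpa [Real.dist_eq] using hfst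
  have h2 : |p.2.1 - q.2.1| ≤ d := by
    refine le_trans ?_ hsnd
    rw [Prod.dist_eq]; simpa [Real.dist_eq] using le_max_left (dist p.2.1 q.2.1) (dist p.2.2 q.2.2)
  have h3 : |p.2.2 - q.2.2| ≤ d := by
    refine le_trans ?_ hsnd
    rw [Prod.dist_eq]; simpa [Real.dist_eq] using le_max_right (dist p.2.1 q.2.1) (dist p.2.2 q.2.2)
  have hpR : ‖p‖ ≤ R := mem_closedBall_zero_iff.mp hp
  have hqR : ‖q‖ ≤ R := mem_closedBall_zero_iff.mp hq
  have hp1 : |p.1| ≤ R := le_trans (norm_fst_le p) hpR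
  have hq1 : |q.1| ≤ R := le_trans (norm_fst_le q) hqR
  have hp21 : |p.2.1| ≤ R := le_trans (le_trans (norm_fst_le p.2) (norm_snd_le p)) hpR
  have hq21 : |q.2.1| ≤ R := le_trans (le_trans (norm_fst_le q.2) (norm_snd_le q)) hqR
  have hp22 : |p.2.2| ≤ R := le_trans (le_trans (norm_snd_le p.2) (norm_snd_le p)) hpR
  have hq22 : |q.2.2| ≤ R := le_trans (le_trans (norm_snd_le q.2) (norm_snd_le q)) hqR
  have hb0 : 0 ≤ |β| := abs_nonneg β
  have hKd : d ≤ (2*R + |β| * (2*R+1) + 1) * d := by nlinarith [mul_nonneg hR hd0, mul_nonneg hb0 hd0, mul_nonneg (mul_nonneg hb0 hR) hd0]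
  rw [Prod.dist_eq, Prod.dist_eq, max_le_iff, max_le_iff]
  refine ⟨le_trans (le_trans (le_of_eq (Real.dist_eq _ _)) h2) hKd,
    le_trans (le_trans (le_of_eq (Real.dist_eq _ _)) h3) hKd, ?_⟩
  rw [Real.dist_eq]
  have key1 : |p.1*p.2.2 - q.1*q.2.2| ≤ 2*R*d := by
    have e : p.1*p.2.2 - q.1*q.2.2 = p.1*(p.2.2-q.2.2) + q.2.2*(p.1-q.1) := by ring
    rw [e]
    refine (abs_add_le _ _).trans ?_
    rw [abs_mul, abs_mul]
    nlinarith [mul_le_mul hp1 h3 (abs_nonneg _) hR, mul_le_mul hq22 h1 (abs_nonneg _) hR]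
  have key2 : |p.2.1*(p.2.1-1) - q.2.1*(q.2.1-1)| ≤ (2*R+1)*d := by
    have e : p.2.1*(p.2.1-1) - q.2.1*(q.2.1-1) = (p.2.1 + q.2.1 - 1)*(p.2.1 - q.2.1) := by ring
    rw [e, abs_mul]
    have hs : |p.2.1 + q.2.1 - 1| ≤ 2*R+1 := by
      rw [abs_le]
      constructor <;> [skip; skip] <;>
        · have := abs_le.mp hp21; have := abs_le.mp hq21; linarith
    exact mul_le_mul hs h2 (abs_nonneg _) (by positivity)
  have e : -(p.1*p.2.2) - β*(p.2.1*(p.2.1-1)) - (-(q.1*q.2.2) - β*(q.2.1*(q.2.1-1)))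
      = -((p.1*p.2.2 - q.1*q.2.2) + β*(p.2.1*(p.2.1-1) - q.2.1*(q.2.1-1))) := by ring
  rw [e, abs_neg]
  refine (abs_add_le _ _).trans ?_
  rw [abs_mul]
  nlinarith [mul_le_mul_of_nonneg_left key2 hb0]

/-- If a solution of `f''' + f f'' + β f'(f'-1) = 0` on an interval `I`
has `f'(t₀) ∈ {0,1}` and `f''(t₀) = 0` at some `t₀ ∈ I`, then `f''` vanishes
identically on `I` (equivalently `f` is affine on `I`). -/
theorem stmt0 (β : ℝ) (f : ℝ → ℝ) (I : Set ℝ) (hI : I.OrdConnected)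
    (hf : ContDiff ℝ 3 f)
    (heq : ∀ t ∈ I, deriv (deriv (deriv f)) t + f t * deriv (deriv f) t
      + β * deriv f t * (deriv f t - 1) = 0)
    (t₀ : ℝ) (ht₀ : t₀ ∈ I)
    (h1 : deriv f t₀ = 0 ∨ deriv f t₀ = 1)
    (h2 : deriv (deriv f) t₀ = 0) :
    ∀ t ∈ I, deriv (deriv f) t = 0 ∧ f t = f t₀ + deriv f t₀ * (t - t₀) := by
  set c := deriv f t₀ with hc
  have hcc : c * (c - 1) = 0 := by rcases h1 with h | h <;> rw [← hc] at * <;> simp [h]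
  have hfd : Differentiable ℝ f := hf.differentiable (by norm_num)
  have hd2 : Differentiable ℝ (deriv f) := by
    have h1' : ContDiff ℝ 2 (deriv f) :=
      (contDiff_succ_iff_deriv.mp (show ContDiff ℝ (2+1) f by norm_num at hf ⊢; exact hf)).2.2
    exact h1'.differentiable (by norm_num)
  have hc2 : ContDiff ℝ 2 (deriv f) :=
    (contDiff_succ_iff_deriv.mp (show ContDiff ℝ (2+1) f by norm_num at hf ⊢; exact hf)).2.2
  have hd3 : Differentiable ℝ (deriv (deriv f)) := by
    have h2' : ContDiff ℝ 1 (deriv (deriv f)) :=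
      (contDiff_succ_iff_deriv.mp (show ContDiff ℝ (1+1) (deriv f) by norm_num at hc2 ⊢; exact hc2)).2.2
    exact h2'.differentiable (by norm_num)
  set F : ℝ → ℝ × ℝ × ℝ := fun s => (f s, deriv f s, deriv (deriv f) s) with hF
  set G : ℝ → ℝ × ℝ × ℝ := fun s => (f t₀ + c * (s - t₀), c, 0) with hG
  set v : ℝ × ℝ × ℝ → ℝ × ℝ × ℝ :=
    fun p => (p.2.1, p.2.2, -(p.1 * p.2.2) - β * (p.2.1 * (p.2.1 - 1))) with hv
  have hFc : Continuous F :=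
    (hfd.continuous).prodMk ((hd2.continuous).prodMk hd3.continuous)
  have hGc : Continuous G := by fun_prop
  have hF' : ∀ s ∈ I, HasDerivAt F (v (F s)) s := by
    intro s hs
    have h3 : deriv (deriv (deriv f)) s
        = -(f s * deriv (deriv f) s) - β * (deriv f s * (deriv f s - 1)) := by
      have := heq s hs; ring_nf; ring_nf at this; linarith
    have : HasDerivAt F (deriv f s, deriv (deriv f) s, deriv (deriv (deriv f)) s) s :=
      ((hfd s).hasDerivAt).prodMk (((hd2 s).hasDerivAt).prodMk ((hd3 s).hasDerivAt))
    simpa [hF, hv, h3] using this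
  have hG' : ∀ s : ℝ, HasDerivAt G (v (G s)) s := by
    intro s
    have hlin : HasDerivAt (fun u : ℝ => f t₀ + c * (u - t₀)) c s := by
      simpa using (((hasDerivAt_id s).sub_const t₀).const_mul c).const_add (f t₀)
    have : HasDerivAt G (c, (0:ℝ), (0:ℝ)) s :=
      hlin.prodMk ((hasDerivAt_const s c).prodMk (hasDerivAt_const s 0))
    simpa [hG, hv, hcc] using this
  have hFt₀ : F t₀ = G t₀ := by simp [hF, hG, ← hc, h2]
  -- main claim
  suffices h : ∀ t ∈ I, F t = G t by
    intro t ht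
    have := h t ht
    rw [hF, hG, Prod.ext_iff, Prod.ext_iff] at this
    exact ⟨this.2.2, this.1⟩
  intro t ht
  rcases le_total t₀ t with hle | hle
  · -- right interval [t₀, t]
    have hsub : Icc t₀ t ⊆ I := hI.out ht₀ ht
    obtain ⟨C, hC⟩ := (isCompact_Icc (a := t₀) (b := t)).exists_bound_of_continuousOn
      hFc.continuousOn
    obtain ⟨C', hC'⟩ := (isCompact_Icc (a := t₀) (b := t)).exists_bound_of_continuousOn
      hGc.continuousOn
    set R := max C C' with hR
    have hR0 : 0 ≤ R := le_trans (norm_nonneg (F t₀)) (le_trans (hC t₀ (by simp [hle])) (le_max_left _ _))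
    have hlip : ∀ s : ℝ, LipschitzOnWith (2*R + |β| * (2*R+1) + 1).toNNReal
        ((fun _ : ℝ => v) s) ((fun _ : ℝ => Metric.closedBall (0 : ℝ × ℝ × ℝ) R) s) :=
      fun _ => lipAux β R hR0
    have key : EqOn F G (Icc t₀ t) := by
      apply ODE_solution_unique_of_mem_Icc_right (fun s _ => hlip s) hFc.continuousOn
        (fun s hs => (hF' s (hsub (Ico_subset_Icc_self hs))).hasDerivWithinAt)
        (fun s hs => mem_closedBall_zero_iff.mpr
          (le_trans (hC s (Ico_subset_Icc_self hs)) (le_max_left _ _)))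
        hGc.continuousOn
        (fun s hs => (hG' s).hasDerivWithinAt)
        (fun s hs => mem_closedBall_zero_iff.mpr
          (le_trans (hC' s (Ico_subset_Icc_self hs)) (le_max_right _ _)))
        hFt₀
    exact key (right_mem_Icc.mpr hle)
  · -- left interval [t, t₀]
    have hsub : Icc t t₀ ⊆ I := hI.out ht ht₀
    obtain ⟨C, hC⟩ := (isCompact_Icc (a := t) (b := t₀)).exists_bound_of_continuousOn
      hFc.continuousOn
    obtain ⟨C', hC'⟩ := (isCompact_Icc (a := t) (b := t₀)).exists_bound_of_continuousOn
      hGc.continuousOn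
    set R := max C C' with hR
    have hR0 : 0 ≤ R := le_trans (norm_nonneg (F t₀)) (le_trans (hC t₀ (by simp [hle])) (le_max_left _ _))
    have hlip : ∀ s : ℝ, LipschitzOnWith (2*R + |β| * (2*R+1) + 1).toNNReal
        ((fun _ : ℝ => v) s) ((fun _ : ℝ => Metric.closedBall (0 : ℝ × ℝ × ℝ) R) s) :=
      fun _ => lipAux β R hR0
    have key : EqOn F G (Icc t t₀) := by
      apply ODE_solution_unique_of_mem_Icc_left (fun s _ => hlip s) hFc.continuousOn
        (fun s hs => (hF' s (hsub (Ioc_subset_Icc_self hs))).hasDerivWithinAt)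
        (fun s hs => mem_closedBall_zero_iff.mpr
          (le_trans (hC s (Ioc_subset_Icc_self hs)) (le_max_left _ _)))
        hGc.continuousOn
        (fun s hs => (hG' s).hasDerivWithinAt)
        (fun s hs => mem_closedBall_zero_iff.mpr
          (le_trans (hC' s (Ioc_subset_Icc_self hs)) (le_max_right _ _)))
        hFt₀
    exact key (left_mem_Icc.mpr hle)
end

section
/- Let β > 0 and let f be a solution of the equation f''' + f·f'' + β·f'·(f'−1) = 0 on an interval I such that f' is not constant on I. (1) If there exist s < r in I with f''(s) ≤ 0 and f'(t)·(f'(t)−1) > 0 for all t ∈ (s,r), then f''(t) < 0 for all t ∈ (s,r]. (2) If there exist s < r in I with f''(s) ≥ 0 and f'(t)·(f'(t)−1) < 0 for all t ∈ (s,r), then f''(t) > 0 for all t ∈ (s,r]. -/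
open Set Filter Topology

lemma aux_key (f : ℝ → ℝ) (hf : ContDiff ℝ 3 f) :
    ∀ t : ℝ, HasDerivAt (fun u => Real.exp (∫ x in (0:ℝ)..u, f x) * deriv (deriv f) u)
      (Real.exp (∫ x in (0:ℝ)..t, f x) * (f t * deriv (deriv f) t + deriv (deriv (deriv f)) t))
      t := by
  intro t
  have hcf : Continuous f := hf.continuous
  have hF : HasDerivAt (fun u => ∫ x in (0:ℝ)..u, f x) (f t) t :=
    intervalIntegral.integral_hasDerivAt_right (hcf.intervalIntegrable _ _)
      (hcf.stronglyMeasurableAtFilter _ _) hcf.continuousAt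
  have hE : HasDerivAt (fun u => Real.exp (∫ x in (0:ℝ)..u, f x))
      (Real.exp (∫ x in (0:ℝ)..t, f x) * f t) t := (Real.hasDerivAt_exp _).comp t hF
  have hg2 : ContDiff ℝ 1 (deriv (deriv f)) := by
    have h2 : deriv^[2] f = deriv (deriv f) := rfl
    have := ContDiff.iterate_deriv' 1 2 (f := f) (by exact_mod_cast hf)
    rwa [h2] at this
  have hg : HasDerivAt (deriv (deriv f)) (deriv (deriv (deriv f)) t) t :=
    (hg2.differentiable one_ne_zero t).hasDerivAt
  have := hE.mul hg
  exact this.congr_deriv (by ring)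

/-- sign propagation of `f''` for solutions of
`f''' + f f'' + β f'(f'-1) = 0` with `β > 0` and `f'` not constant. -/
theorem stmt1 (β : ℝ) (hβ : 0 < β) (f : ℝ → ℝ) (I : Set ℝ) (hI : I.OrdConnected)
    (hf : ContDiff ℝ 3 f)
    (heq : ∀ t ∈ I, deriv (deriv (deriv f)) t + f t * deriv (deriv f) t
      + β * deriv f t * (deriv f t - 1) = 0)
    (hnc : ¬ ∀ x ∈ I, ∀ y ∈ I, deriv f x = deriv f y) :
    (∀ s ∈ I, ∀ r ∈ I, s < r → deriv (deriv f) s ≤ 0 →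
      (∀ t ∈ Ioo s r, 0 < deriv f t * (deriv f t - 1)) →
      ∀ t ∈ Ioc s r, deriv (deriv f) t < 0) ∧
    (∀ s ∈ I, ∀ r ∈ I, s < r → 0 ≤ deriv (deriv f) s →
      (∀ t ∈ Ioo s r, deriv f t * (deriv f t - 1) < 0) →
      ∀ t ∈ Ioc s r, 0 < deriv (deriv f) t) := by
  set F : ℝ → ℝ := fun u => ∫ x in (0:ℝ)..u, f x with hFdef
  set h : ℝ → ℝ := fun u => Real.exp (F u) * deriv (deriv f) u with hhdef
  have hkey := aux_key f hf
  have hdiff : Differentiable ℝ h := fun t => (hkey t).differentiableAt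
  have hcont : Continuous h := hdiff.continuous
  have hderiv : ∀ x ∈ I, deriv h x = -(Real.exp (F x) * (β * deriv f x * (deriv f x - 1))) := by
    intro x hx
    rw [(hkey x).deriv]
    have := heq x hx
    have h3 : deriv (deriv (deriv f)) x = -(f x * deriv (deriv f) x)
        - β * deriv f x * (deriv f x - 1) := by linarith
    rw [h3]; ring
  constructor
  · intro s hs r hr hsr hgs hpos t ht
    have hIcc : Icc s r ⊆ I := hI.out hs hr
    have hanti : StrictAntiOn h (Icc s r) := by
      apply strictAntiOn_of_deriv_neg (convex_Icc s r) (hcont.continuousOn)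
      intro x hx
      rw [interior_Icc] at hx
      rw [hderiv x (hIcc (Ioo_subset_Icc_self hx))]
      have hp := mul_pos (Real.exp_pos (F x)) (mul_pos hβ (hpos x hx))
      nlinarith [hp]
    have h1 : h t < h s := hanti ⟨le_rfl, le_of_lt hsr⟩ ⟨le_of_lt ht.1, ht.2⟩ ht.1
    have h2 : h s ≤ 0 := mul_nonpos_of_nonneg_of_nonpos (Real.exp_pos (F s)).le hgs
    have h3 : Real.exp (F t) * deriv (deriv f) t < 0 := lt_of_lt_of_le h1 h2
    nlinarith [Real.exp_pos (F t)]
  · intro s hs r hr hsr hgs hpos t ht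
    have hIcc : Icc s r ⊆ I := hI.out hs hr
    have hmono : StrictMonoOn h (Icc s r) := by
      apply strictMonoOn_of_deriv_pos (convex_Icc s r) (hcont.continuousOn)
      intro x hx
      rw [interior_Icc] at hx
      rw [hderiv x (hIcc (Ioo_subset_Icc_self hx))]
      have hp := mul_pos (Real.exp_pos (F x)) (mul_pos hβ (neg_pos.mpr (hpos x hx)))
      nlinarith [hp]
    have h1 : h s < h t := hmono ⟨le_rfl, le_of_lt hsr⟩ ⟨le_of_lt ht.1, ht.2⟩ ht.1
    have h2 : 0 ≤ h s := mul_nonneg (Real.exp_pos (F s)).le hgs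
    have h3 : 0 < Real.exp (F t) * deriv (deriv f) t := lt_of_le_of_lt h2 h1
    nlinarith [Real.exp_pos (F t)]
end

section
/- Let β ≠ 0 and let f be a solution of the equation f''' + f·f'' + β·f'·(f'−1) = 0 on an interval (τ, +∞). (1) If f'(t) converges to a real limit λ as t → +∞, then λ ∈ {0,1}. (2) If moreover f has constant sign at infinity (i.e. there exists T ≥ τ such that f > 0 on [T,∞) or f < 0 on [T,∞)), then f''(t) → 0 as t → +∞. -/
open Set Filter Topology


/-- If `g' ≥ ε > 0` on `[S,∞)` then `g → ∞`, contradicting `g → l`. -/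
lemma growth_contra {g g' : ℝ → ℝ} {S ε l : ℝ} (hε : 0 < ε)
    (hg : ∀ t, HasDerivAt g (g' t) t) (hge : ∀ t ∈ Ici S, ε ≤ g' t)
    (hl : Tendsto g atTop (𝓝 l)) : False := by
  have hdiff : Differentiable ℝ g := fun t => (hg t).differentiableAt
  have key : ∀ t ∈ Ici S, ε * (t - S) ≤ g t - g S := by
    intro t ht
    exact (convex_Ici S).mul_sub_le_image_sub_of_le_deriv hdiff.continuous.continuousOn
      hdiff.differentiableOn
      (fun x hx => by rw [(hg x).deriv]; exact hge x (interior_subset hx)) S self_mem_Ici t ht ht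
  have : Tendsto g atTop atTop := by
    apply tendsto_atTop_mono' _ (_ : ∀ᶠ t in atTop, ε * (t - S) + g S ≤ g t)
    · exact Tendsto.atTop_add (by
        have := (tendsto_atTop_add_const_right atTop (-S) tendsto_id).const_mul_atTop hε
        simpa [mul_comm, sub_eq_add_neg] using this) tendsto_const_nhds
    · filter_upwards [eventually_ge_atTop S] with t ht
      linarith [key t ht]
  exact not_tendsto_atTop_of_tendsto_nhds hl this

/-- If `|g'| ≥ ε > 0` on `[S,∞)` with `g'` continuous, then `g` can't converge. -/
lemma abs_deriv_contra {g g' : ℝ → ℝ} {S ε l : ℝ} (hε : 0 < ε)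
    (hg : ∀ t, HasDerivAt g (g' t) t) (hc : Continuous g')
    (hge : ∀ t ∈ Ici S, ε ≤ |g' t|) (hl : Tendsto g atTop (𝓝 l)) : False := by
  have hsign : (∀ t ∈ Ici S, ε ≤ g' t) ∨ (∀ t ∈ Ici S, g' t ≤ -ε) := by
    rcases le_abs'.mp (hge S self_mem_Ici) with h | h
    · right
      intro t ht
      by_contra hcon
      push_neg at hcon
      have h0 : g' t > 0 := by
        rcases le_abs'.mp (hge t ht) with h' | h'
        · linarith
        · linarith
      -- g' S ≤ -ε < 0 < g' t : IVT gives a zero in [S,t]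
      have hiv : (0 : ℝ) ∈ g' '' Icc S t := by
        apply intermediate_value_Icc ht hc.continuousOn
        constructor <;> [linarith; linarith]
      obtain ⟨z, hz, hz0⟩ := hiv
      have := hge z hz.1
      rw [hz0] at this; simp at this; linarith
    · left
      intro t ht
      by_contra hcon
      push_neg at hcon
      have h0 : g' t < 0 := by
        rcases le_abs'.mp (hge t ht) with h' | h'
        · linarith
        · linarith
      have hiv : (0 : ℝ) ∈ g' '' Icc S t := by
        apply intermediate_value_Icc' ht hc.continuousOn
        constructor <;> [linarith; linarith]
      obtain ⟨z, hz, hz0⟩ := hiv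
      have := hge z hz.1
      rw [hz0] at this; simp at this; linarith
  rcases hsign with h | h
  · exact growth_contra hε hg h hl
  · exact growth_contra hε (g := fun t => -g t) (g' := fun t => -g' t)
      (fun t => (hg t).neg) (fun t ht => by show ε ≤ -g' t; linarith [h t ht]) hl.neg

lemma cesaro {g g' : ℝ → ℝ} {a c : ℝ}
    (hg : ∀ t ∈ Ioi a, HasDerivAt g (g' t) t)
    (hl : Tendsto g' atTop (𝓝 c)) :
    Tendsto (fun t => g t / t) atTop (𝓝 c) := by
  rw [Metric.tendsto_atTop]
  intro ε hε
  have hε4 : 0 < ε / 4 := by linarith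
  obtain ⟨T₀, hT₀⟩ := (Metric.tendsto_atTop.mp hl) (ε/4) hε4
  set T : ℝ := max T₀ (a + 1) with hT
  have hTa : a < T := lt_of_lt_of_le (by linarith) (le_max_right _ _)
  have hsub : Ici T ⊆ Ioi a := fun x hx => lt_of_lt_of_le hTa hx
  have hcont : ContinuousOn g (Ici T) :=
    fun x hx => ((hg x (hsub hx)).continuousAt).continuousWithinAt
  have hdiff : DifferentiableOn ℝ g (interior (Ici T)) := by
    rw [interior_Ici]
    exact fun x hx => ((hg x (hsub (Ioi_subset_Ici_self hx))).differentiableAt).differentiableWithinAt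
  have hderiv : ∀ x ∈ interior (Ici T), deriv g x = g' x := by
    rw [interior_Ici]
    exact fun x hx => (hg x (hsub (Ioi_subset_Ici_self hx))).deriv
  have hbnd : ∀ x ∈ interior (Ici T), |g' x - c| < ε/4 := by
    rw [interior_Ici]
    intro x hx
    have := hT₀ x (le_trans (le_max_left _ _) (le_of_lt hx))
    rwa [Real.dist_eq] at this
  have key1 : ∀ t ∈ Ici T, g t - g T ≤ (c + ε/4) * (t - T) := by
    intro t ht
    refine (convex_Ici T).image_sub_le_mul_sub_of_deriv_le hcont hdiff ?_ T self_mem_Ici t ht ht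
    intro x hx
    rw [hderiv x hx]
    have := abs_lt.mp (hbnd x hx)
    linarith [this.2]
  have key2 : ∀ t ∈ Ici T, (c - ε/4) * (t - T) ≤ g t - g T := by
    intro t ht
    refine (convex_Ici T).mul_sub_le_image_sub_of_le_deriv hcont hdiff ?_ T self_mem_Ici t ht ht
    intro x hx
    rw [hderiv x hx]
    have := abs_lt.mp (hbnd x hx)
    linarith [this.1]
  set C1 : ℝ := g T - c * T - (ε/4) * T with hC1
  set C2 : ℝ := g T - c * T + (ε/4) * T with hC2
  clear_value T C1 C2
  refine ⟨max (max T 1) (4 * (|C1| + |C2| + 1) / ε), fun t ht => ?_⟩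
  have ht1 : (1 : ℝ) ≤ t := le_trans (le_trans (le_max_right _ _) (le_max_left _ _)) ht
  have htT : T ≤ t := le_trans (le_trans (le_max_left _ _) (le_max_left _ _)) ht
  have htpos : (0 : ℝ) < t := by linarith
  have hMt : 4 * (|C1| + |C2| + 1) ≤ ε * t := by
    have := le_trans (le_max_right (max T 1) _) ht
    rw [div_le_iff₀ hε] at this
    linarith
  have habs1 : C1 ≤ |C1| := le_abs_self _
  have habs2 : -C2 ≤ |C2| := neg_le_abs _
  have habsn1 : (0:ℝ) ≤ |C1| := abs_nonneg _
  have habsn2 : (0:ℝ) ≤ |C2| := abs_nonneg _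
  rw [Real.dist_eq]
  have heqn : g t / t - c = (g t - c * t) / t := by field_simp
  rw [heqn, abs_div, abs_of_pos htpos, div_lt_iff₀ htpos]
  rw [abs_lt]
  have k1 := key1 t htT
  have k2 := key2 t htT
  have e1 : (c + ε/4) * (t - T) = c*t - c*T + ε/4*t - ε/4*T := by ring
  have e2 : (c - ε/4) * (t - T) = c*t - c*T - ε/4*t + ε/4*T := by ring
  rw [e1] at k1
  rw [e2] at k2
  constructor
  · linarith [hMt, habs2, habsn1, habsn2, k2, hC2]
  · linarith [hMt, habs1, habsn1, habsn2, k1, hC1]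

lemma part1 {β τ : ℝ} {f : ℝ → ℝ}
    (hD1 : ∀ t, HasDerivAt f (deriv f t) t)
    (hD2 : ∀ t, HasDerivAt (deriv f) (deriv (deriv f) t) t)
    (hD3 : ∀ t, HasDerivAt (deriv (deriv f)) (deriv (deriv (deriv f)) t) t)
    (hc2 : Continuous (deriv (deriv f)))
    (heq : ∀ t ∈ Ioi τ, deriv (deriv (deriv f)) t + f t * deriv (deriv f) t
      + β * deriv f t * (deriv f t - 1) = 0)
    {l : ℝ} (hl : Tendsto (deriv f) atTop (𝓝 l))
    (hd0 : β * l * (l - 1) ≠ 0) : False := by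
  set d : ℝ := -(β * l * (l - 1)) with hd
  have hdne : d ≠ 0 := by simpa [hd] using hd0
  -- the auxiliary function H = f'' + f f'
  have hH : ∀ t ∈ Ioi τ, HasDerivAt (fun t => deriv (deriv f) t + f t * deriv f t)
      (deriv f t ^ 2 - β * deriv f t * (deriv f t - 1)) t := by
    intro t ht
    have h := (hD3 t).add ((hD1 t).mul (hD2 t))
    refine h.congr_deriv ?_
    linear_combination heq t ht
  have hH' : Tendsto (fun t => deriv f t ^ 2 - β * deriv f t * (deriv f t - 1)) atTop
      (𝓝 (l ^ 2 - β * l * (l - 1))) :=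
    (hl.pow 2).sub (((tendsto_const_nhds.mul hl)).mul (hl.sub tendsto_const_nhds))
  have hHc := cesaro hH hH'
  have hfc := cesaro (a := τ) (fun t _ => hD1 t) hl
  have h2 : Tendsto (fun t => deriv (deriv f) t / t) atTop (𝓝 d) := by
    have hcomb : Tendsto (fun t => (deriv (deriv f) t + f t * deriv f t) / t
        - (f t / t) * deriv f t) atTop (𝓝 ((l ^ 2 - β * l * (l - 1)) - l * l)) :=
      hHc.sub (hfc.mul hl)
    have hev : (fun t => (deriv (deriv f) t + f t * deriv f t) / t - (f t / t) * deriv f t)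
        =ᶠ[atTop] fun t => deriv (deriv f) t / t := by
      filter_upwards [eventually_ge_atTop (1:ℝ)] with t ht
      have : t ≠ 0 := by linarith
      field_simp
      ring
    have := hcomb.congr' hev
    convert this using 2
    rw [hd]; ring
  obtain ⟨N, hN⟩ := Metric.tendsto_atTop.mp h2 (|d| / 2) (by positivity)
  refine abs_deriv_contra (S := max N 1) (show (0:ℝ) < |d|/2 by positivity) hD2 hc2 ?_ hl
  intro t ht
  have htN : N ≤ t := le_trans (le_max_left _ _) ht
  have ht1 : (1:ℝ) ≤ t := le_trans (le_max_right _ _) ht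
  have htpos : (0:ℝ) < t := by linarith
  have hdist := hN t htN
  rw [Real.dist_eq] at hdist
  have habs : |d| - |deriv (deriv f) t / t| ≤ |deriv (deriv f) t / t - d| := by
    have := abs_sub_abs_le_abs_sub d (deriv (deriv f) t / t)
    rw [abs_sub_comm] at this
    linarith
  have h3 : |d| / 2 < |deriv (deriv f) t / t| := by linarith
  rw [abs_div, abs_of_pos htpos, lt_div_iff₀ htpos] at h3
  nlinarith [abs_nonneg d]

lemma ev_abs_contra {g g' : ℝ → ℝ} {ε l : ℝ} (hε : 0 < ε)
    (hg : ∀ t, HasDerivAt g (g' t) t) (hc : Continuous g')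
    (hge : ∀ᶠ t in atTop, ε ≤ |g' t|) (hl : Tendsto g atTop (𝓝 l)) : False := by
  obtain ⟨S, hS⟩ := eventually_atTop.mp hge
  exact abs_deriv_contra hε hg hc (fun t ht => hS t ht) hl

lemma part2 {β τ : ℝ} {f : ℝ → ℝ}
    (hD1 : ∀ t, HasDerivAt f (deriv f t) t)
    (hD2 : ∀ t, HasDerivAt (deriv f) (deriv (deriv f) t) t)
    (hD3 : ∀ t, HasDerivAt (deriv (deriv f)) (deriv (deriv (deriv f)) t) t)
    (hc2 : Continuous (deriv (deriv f)))
    (heq : ∀ t ∈ Ioi τ, deriv (deriv (deriv f)) t + f t * deriv (deriv f) t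
      + β * deriv f t * (deriv f t - 1) = 0)
    {l T : ℝ} (hl : Tendsto (deriv f) atTop (𝓝 l)) (hτT : τ ≤ T)
    (hsgn : (∀ t ∈ Ici T, 0 < f t) ∨ (∀ t ∈ Ici T, f t < 0)) :
    Tendsto (deriv (deriv f)) atTop (𝓝 0) := by
  obtain ⟨E, hEdef⟩ : ∃ E : ℝ → ℝ, E = fun t =>
      (deriv (deriv f) t) ^ 2 / 2 + β * ((deriv f t) ^ 3 / 3 - (deriv f t) ^ 2 / 2) :=
    ⟨_, rfl⟩
  -- derivative of E on (τ, ∞)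
  have hEd : ∀ t ∈ Ioi τ, HasDerivAt E (-(f t) * (deriv (deriv f) t) ^ 2) t := by
    intro t ht
    have h := (((hD3 t).pow 2).div_const 2).add
      (((((hD2 t).pow 3).div_const 3).sub (((hD2 t).pow 2).div_const 2)).const_mul β)
    rw [hEdef]
    refine h.congr_deriv ?_
    have h0 := heq t ht
    push_cast
    linear_combination (deriv (deriv f) t) * h0
  -- E is differentiable everywhere
  have hEdiff : ∀ t, HasDerivAt E (deriv (deriv f) t * deriv (deriv (deriv f)) t
      + β * ((deriv f t) ^ 2 * deriv (deriv f) t - deriv f t * deriv (deriv f) t)) t := by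
    intro t
    have h := (((hD3 t).pow 2).div_const 2).add
      (((((hD2 t).pow 3).div_const 3).sub (((hD2 t).pow 2).div_const 2)).const_mul β)
    rw [hEdef]
    refine h.congr_deriv ?_
    push_cast
    ring
  have hEval : ∀ t, (deriv (deriv f) t) ^ 2
      = 2 * E t - 2 * β * ((deriv f t) ^ 3 / 3 - (deriv f t) ^ 2 / 2) := by
    intro t; rw [hEdef]; ring
  have hEcont : ContinuousOn E (Ici T) := fun x _ =>
    ((hEdiff x).continuousAt).continuousWithinAt
  have hEdO : DifferentiableOn ℝ E (interior (Ici T)) := by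
    rw [interior_Ici]
    exact fun x _ => ((hEdiff x).differentiableAt).differentiableWithinAt
  have hderivE : ∀ x ∈ Ioi T, deriv E x = -(f x) * (deriv (deriv f) x) ^ 2 := by
    intro x hx
    exact (hEd x (lt_of_le_of_lt hτT hx)).deriv
  -- bound on the f' part
  obtain ⟨T₂', hT₂'⟩ := eventually_atTop.mp (hl.eventually (eventually_abs_sub_lt l one_pos))
  obtain ⟨M, hM⟩ : ∃ M : ℝ, M = |l| + 1 := ⟨_, rfl⟩
  have hMb : ∀ t, T₂' ≤ t → |deriv f t| ≤ M := by
    intro t ht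
    have := hT₂' t ht
    have h1 := abs_sub_abs_le_abs_sub (deriv f t) l
    rw [hM]; linarith
  obtain ⟨T₂, hT₂⟩ : ∃ x : ℝ, x = max T T₂' := ⟨_, rfl⟩
  have hTT₂ : T ≤ T₂ := hT₂ ▸ le_max_left _ _
  -- the limit of the cubic part
  have hQ : Tendsto (fun t => (deriv f t) ^ 3 / 3 - (deriv f t) ^ 2 / 2) atTop
      (𝓝 (l ^ 3 / 3 - l ^ 2 / 2)) := ((hl.pow 3).div_const 3).sub ((hl.pow 2).div_const 2)
  -- the key step : E converges to a real limit, or |f''| is eventually large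
  have key : (∃ L : ℝ, Tendsto E atTop (𝓝 L)) ∨ Tendsto E atTop atTop := by
    rcases hsgn with hpos | hneg
    · -- E is antitone on [T,∞), bounded below
      have hanti : AntitoneOn E (Ici T) := by
        apply antitoneOn_of_deriv_nonpos (convex_Ici T) hEcont hEdO
        intro x hx
        rw [interior_Ici] at hx
        rw [hderivE x hx]
        have := hpos x (Ioi_subset_Ici_self hx)
        nlinarith [sq_nonneg (deriv (deriv f) x)]
      left
      obtain ⟨g, hg⟩ : ∃ g : ℝ → ℝ, g = fun t => E (max t T₂) := ⟨_, rfl⟩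
      have hganti : Antitone g := by
        intro s t hst
        rw [hg]; dsimp only
        exact hanti (le_trans hTT₂ (le_max_right s T₂)) (le_trans hTT₂ (le_max_right t T₂))
          (max_le_max hst le_rfl)
      have hgbdd : BddBelow (range g) := by
        refine ⟨-(|β| * (M ^ 3 / 3 + M ^ 2 / 2)), ?_⟩
        rintro x ⟨t, rfl⟩
        rw [hg]; dsimp only
        have hm : |deriv f (max t T₂)| ≤ M :=
          hMb _ (le_trans (le_of_le_of_eq (le_max_right T T₂') hT₂.symm) (le_max_right t T₂))
        have habs : |(deriv f (max t T₂)) ^ 3 / 3 - (deriv f (max t T₂)) ^ 2 / 2|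
            ≤ M ^ 3 / 3 + M ^ 2 / 2 := by
          have h3 : |(deriv f (max t T₂)) ^ 3| ≤ M ^ 3 := by
            rw [abs_pow]; exact pow_le_pow_left₀ (abs_nonneg _) hm 3
          have h4 : |(deriv f (max t T₂)) ^ 2| ≤ M ^ 2 := by
            rw [abs_pow]; exact pow_le_pow_left₀ (abs_nonneg _) hm 2
          calc |(deriv f (max t T₂)) ^ 3 / 3 - (deriv f (max t T₂)) ^ 2 / 2|
              ≤ |(deriv f (max t T₂)) ^ 3 / 3| + |(deriv f (max t T₂)) ^ 2 / 2| := abs_sub _ _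
            _ ≤ M ^ 3 / 3 + M ^ 2 / 2 := by
                rw [abs_div, abs_div]
                simp only [Nat.abs_ofNat]
                linarith
        have hprod : |β * ((deriv f (max t T₂)) ^ 3 / 3 - (deriv f (max t T₂)) ^ 2 / 2)|
            ≤ |β| * (M ^ 3 / 3 + M ^ 2 / 2) := by
          rw [abs_mul]
          exact mul_le_mul_of_nonneg_left habs (abs_nonneg β)
        have := neg_abs_le (β * ((deriv f (max t T₂)) ^ 3 / 3 - (deriv f (max t T₂)) ^ 2 / 2))
        have hsq := sq_nonneg (deriv (deriv f) (max t T₂))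
        rw [hEdef]; dsimp only
        nlinarith
      have := tendsto_atTop_ciInf hganti hgbdd
      refine ⟨_, Tendsto.congr' ?_ this⟩
      filter_upwards [eventually_ge_atTop T₂] with t ht
      rw [hg]; simp only [max_eq_left ht]
    · -- E is monotone on [T,∞)
      have hmono : MonotoneOn E (Ici T) := by
        apply monotoneOn_of_deriv_nonneg (convex_Ici T) hEcont hEdO
        intro x hx
        rw [interior_Ici] at hx
        rw [hderivE x hx]
        have := hneg x (Ioi_subset_Ici_self hx)
        nlinarith [sq_nonneg (deriv (deriv f) x)]
      obtain ⟨g, hg⟩ : ∃ g : ℝ → ℝ, g = fun t => E (max t T₂) := ⟨_, rfl⟩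
      have hgmono : Monotone g := by
        intro s t hst
        rw [hg]; dsimp only
        exact hmono (le_trans hTT₂ (le_max_right s T₂)) (le_trans hTT₂ (le_max_right t T₂))
          (max_le_max hst le_rfl)
      have hgE : E =ᶠ[atTop] g := by
        filter_upwards [eventually_ge_atTop T₂] with t ht
        rw [hg]; simp only [max_eq_left ht]
      by_cases hbdd : BddAbove (range g)
      · left
        exact ⟨_, Tendsto.congr' hgE.symm (tendsto_atTop_ciSup hgmono hbdd)⟩
      · right
        exact Tendsto.congr' hgE.symm (tendsto_atTop_atTop_of_monotone' hgmono hbdd)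
  -- now conclude
  rcases key with ⟨L, hL⟩ | htop
  · -- f''² tends to c2 := 2L - 2β(l³/3 - l²/2)
    have hsq : Tendsto (fun t => (deriv (deriv f) t) ^ 2) atTop
        (𝓝 (2 * L - 2 * β * (l ^ 3 / 3 - l ^ 2 / 2))) := by
      have := ((hL.const_mul 2).sub ((hQ.const_mul β).const_mul 2))
      apply Tendsto.congr _ (by convert this using 2; ring)
      intro t
      rw [hEval t]
      ring
    set c2 : ℝ := 2 * L - 2 * β * (l ^ 3 / 3 - l ^ 2 / 2) with hc2def
    clear_value c2
    have hc2nonneg : 0 ≤ c2 := ge_of_tendsto' hsq (fun t => sq_nonneg _)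
    rcases eq_or_lt_of_le hc2nonneg with hzero | hposc
    · -- f''² → 0 hence f'' → 0
      rw [← hzero] at hsq
      rw [tendsto_zero_iff_abs_tendsto_zero]
      have : Tendsto (fun t => Real.sqrt ((deriv (deriv f) t) ^ 2)) atTop (𝓝 (Real.sqrt 0)) :=
        (Real.continuous_sqrt.continuousAt).tendsto.comp hsq
      rw [Real.sqrt_zero] at this
      refine this.congr fun t => ?_
      rw [Real.sqrt_sq_eq_abs]
      rfl
    · -- |f''| eventually ≥ √(c2/2) > 0 : contradiction
      exfalso
      have hev : ∀ᶠ t in atTop, Real.sqrt (c2 / 2) ≤ |deriv (deriv f) t| := by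
        filter_upwards [hsq.eventually (eventually_ge_nhds (show c2 / 2 < c2 by linarith))] with t ht
        have h1 : Real.sqrt (c2 / 2) ≤ Real.sqrt ((deriv (deriv f) t) ^ 2) := Real.sqrt_le_sqrt ht
        rwa [Real.sqrt_sq_eq_abs] at h1
      exact ev_abs_contra (Real.sqrt_pos.mpr (by linarith)) hD2 hc2 hev hl
  · -- E → ∞ : f''² → ∞, contradiction
    exfalso
    have hsqtop : Tendsto (fun t => (deriv (deriv f) t) ^ 2) atTop atTop := by
      have h1 : Tendsto (fun t => 2 * E t) atTop atTop :=
        (tendsto_const_mul_atTop_of_pos two_pos).mpr htop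
      have := h1.atTop_add ((hQ.const_mul β).const_mul (-2))
      apply Tendsto.congr _ (by convert this using 1)
      intro t
      rw [hEval t]
      ring
    have hev : ∀ᶠ t in atTop, (1:ℝ) ≤ |deriv (deriv f) t| := by
      filter_upwards [hsqtop.eventually_ge_atTop 1] with t ht
      nlinarith [abs_nonneg (deriv (deriv f) t), sq_abs (deriv (deriv f) t)]
    exact ev_abs_contra one_pos hD2 hc2 hev hl

/-- for a solution of `f''' + f f'' + β f'(f'-1) = 0` on `(τ,∞)`
with `β ≠ 0`: (1) if `f'` tends to a real limit `l` at `+∞`, then `l ∈ {0,1}`;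
(2) if moreover `f` has constant sign at infinity, then `f'' → 0` at `+∞`. -/
theorem stmt3 (β τ : ℝ) (hβ : β ≠ 0) (f : ℝ → ℝ) (hf : ContDiff ℝ 3 f)
    (heq : ∀ t ∈ Ioi τ, deriv (deriv (deriv f)) t + f t * deriv (deriv f) t
      + β * deriv f t * (deriv f t - 1) = 0) :
    (∀ l : ℝ, Tendsto (deriv f) atTop (𝓝 l) → l = 0 ∨ l = 1) ∧
    ((∃ l : ℝ, Tendsto (deriv f) atTop (𝓝 l)) →
      ((∃ T, τ ≤ T ∧ ∀ t ∈ Ici T, 0 < f t) ∨ (∃ T, τ ≤ T ∧ ∀ t ∈ Ici T, f t < 0)) →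
      Tendsto (deriv (deriv f)) atTop (𝓝 0)) := by
  obtain ⟨hd0, hd1, hd2, hc3⟩ : Differentiable ℝ f ∧ Differentiable ℝ (deriv f)
      ∧ Differentiable ℝ (deriv (deriv f)) ∧ Continuous (deriv (deriv (deriv f))) := by
    have h3 : (3 : WithTop ℕ∞) = 2 + 1 := by norm_num
    rw [h3, contDiff_succ_iff_deriv] at hf
    have h2 : (2 : WithTop ℕ∞) = 1 + 1 := by norm_num
    rw [h2, contDiff_succ_iff_deriv] at hf
    have := (contDiff_one_iff_deriv.mp hf.2.2.2.2)
    exact ⟨hf.1, hf.2.2.1, this.1, this.2⟩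
  have hD1 : ∀ t, HasDerivAt f (deriv f t) t := fun t => (hd0 t).hasDerivAt
  have hD2 : ∀ t, HasDerivAt (deriv f) (deriv (deriv f) t) t := fun t => (hd1 t).hasDerivAt
  have hD3 : ∀ t, HasDerivAt (deriv (deriv f)) (deriv (deriv (deriv f)) t) t :=
    fun t => (hd2 t).hasDerivAt
  have hc2 : Continuous (deriv (deriv f)) := hd2.continuous
  constructor
  · intro l hl
    by_contra hne
    push_neg at hne
    refine part1 hD1 hD2 hD3 hc2 heq hl ?_
    exact mul_ne_zero (mul_ne_zero hβ hne.1) (sub_ne_zero.mpr hne.2)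
  · rintro ⟨l, hl⟩ (⟨T, hτT, hpos⟩ | ⟨T, hτT, hneg⟩)
    · exact part2 hD1 hD2 hD3 hc2 heq hl hτT (Or.inl hpos)
    · exact part2 hD1 hD2 hD3 hc2 heq hl hτT (Or.inr hneg)
end

section
/- Let β ≠ 0 and let f be a solution of the equation f''' + f·f'' + β·f'·(f'−1) = 0 on an interval (τ, +∞) such that f'(t) → 0 as t → +∞. Then f(t) does not tend to +∞ as t → +∞, and f(t) does not tend to −∞ as t → +∞. -/
open Set Filter Topology

set_option maxHeartbeats 1000000

lemma mono_aux {g G : ℝ → ℝ} (hg : ∀ t, HasDerivAt g (G t) t) {T : ℝ}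
    (hG : ∀ t ∈ Ioi T, 0 ≤ G t) : MonotoneOn g (Ici T) := by
  have hd : Differentiable ℝ g := fun t => (hg t).differentiableAt
  apply monotoneOn_of_deriv_nonneg (convex_Ici T) hd.continuous.continuousOn
    (fun x _ => (hd x).differentiableWithinAt)
  intro x hx
  rw [interior_Ici] at hx
  rw [(hg x).deriv]
  exact hG x hx

lemma anti_aux {g G : ℝ → ℝ} (hg : ∀ t, HasDerivAt g (G t) t) {T : ℝ}
    (hG : ∀ t ∈ Ioi T, G t ≤ 0) : AntitoneOn g (Ici T) := by
  have hd : Differentiable ℝ g := fun t => (hg t).differentiableAt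
  apply antitoneOn_of_deriv_nonpos (convex_Ici T) hd.continuous.continuousOn
    (fun x _ => (hd x).differentiableWithinAt)
  intro x hx
  rw [interior_Ici] at hx
  rw [(hg x).deriv]
  exact hG x hx

lemma small_aux {u : ℝ → ℝ} (hlim : Tendsto u atTop (𝓝 0)) {δ : ℝ} (hδ : 0 < δ) :
    ∃ N : ℝ, ∀ t ≥ N, |u t| < δ := by
  have := Metric.tendsto_atTop.mp hlim δ hδ
  simpa [Real.dist_eq] using this

lemma grow_contra {u v : ℝ → ℝ} (hud : ∀ t, HasDerivAt u (v t) t) {T c : ℝ} (hc : 0 < c)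
    (hv1 : ∀ t ∈ Ici T, c ≤ v t) (hlim : Tendsto u atTop (𝓝 0)) : False := by
  have hmono : MonotoneOn (fun t => u t - c * t) (Ici T) := by
    apply mono_aux (G := fun t => v t - c)
    · intro t
      have h := (hud t).sub ((hasDerivAt_id t).const_mul c)
      exact h.congr_deriv (by ring)
    · intro t ht; have := hv1 t (mem_Ici.mpr (le_of_lt (mem_Ioi.mp ht))); linarith
  obtain ⟨N, hN⟩ := small_aux hlim one_pos
  set t := max N (T + (1 + |u T|) / c) with hts
  have ht1 : t ≥ N := le_max_left _ _
  have ht2 : T + (1 + |u T|) / c ≤ t := le_max_right _ _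
  have hTt : T ≤ t := by
    have : 0 < (1 + |u T|) / c := by positivity
    linarith
  have hm := hmono (self_mem_Ici) (mem_Ici.mpr hTt) hTt
  simp only at hm
  have h4 : c * (t - T) ≥ 1 + |u T| := by
    have h : t - T ≥ (1 + |u T|) / c := by linarith
    calc c * (t - T) ≥ c * ((1 + |u T|) / c) := by nlinarith
    _ = 1 + |u T| := by field_simp
  have h5 := abs_lt.mp (hN t ht1)
  have h6 : -|u T| ≤ u T := neg_abs_le _
  nlinarith [h5.2]

lemma shrink_contra {u v : ℝ → ℝ} (hud : ∀ t, HasDerivAt u (v t) t) {T c : ℝ} (hc : c < 0)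
    (hv1 : ∀ t ∈ Ici T, v t ≤ c) (hlim : Tendsto u atTop (𝓝 0)) : False := by
  apply grow_contra (u := fun t => -u t) (v := fun t => -v t) (fun t => (hud t).neg)
    (T := T) (c := -c) (by linarith)
    (fun t ht => by simpa using neg_le_neg (hv1 t ht))
  simpa using hlim.neg

lemma pos_tail (β τ : ℝ) (hβ : 0 < β) (f u v w : ℝ → ℝ)
    (hcu : Continuous u) (hcv : Continuous v)
    (hfd : ∀ t, HasDerivAt f (u t) t) (hud : ∀ t, HasDerivAt u (v t) t)
    (hvd : ∀ t, HasDerivAt v (w t) t)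
    (heq : ∀ t ∈ Ioi τ, w t = β * u t * (1 - u t) - f t * v t)
    (hlim : Tendsto u atTop (𝓝 0))
    (htop : Tendsto f atTop atTop)
    {T₀ : ℝ} (hT₀ : τ < T₀) (hsmall : ∀ t ≥ T₀, |u t| < 1/2)
    {b : ℝ} (hb : T₀ ≤ b) : 0 < u b := by
  have hdf : Differentiable ℝ f := fun t => (hfd t).differentiableAt
  have hcf : Continuous f := hdf.continuous
  by_contra hub
  push_neg at hub
  obtain ⟨M, hM⟩ := eventually_atTop.mp (htop.eventually_ge_atTop (f b + 1))
  set c := max M (b + 1) with hc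
  have hbc : b < c := lt_of_lt_of_le (by linarith) (le_max_right _ _)
  have hfc : f b + 1 ≤ f c := hM c (le_max_left _ _)
  obtain ⟨s₀, hs₀mem, hs₀⟩ := exists_hasDerivAt_eq_slope f u hbc hcf.continuousOn
    (fun x _ => hfd x)
  have hm : 0 < u s₀ := by
    rw [hs₀]
    apply div_pos <;> linarith
  set m := u s₀ with hmdef
  obtain ⟨N, hN⟩ := small_aux hlim (half_pos hm)
  set d := max N c with hd
  have hcd : c ≤ d := le_max_right _ _
  have hNd : N ≤ d := le_max_left _ _
  have hbd : b ≤ d := by linarith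
  obtain ⟨s, hsmem, hsmax⟩ := isCompact_Icc.exists_isMaxOn (nonempty_Icc.mpr hbd)
    hcu.continuousOn
  have hs₀Icc : s₀ ∈ Icc b d := ⟨hs₀mem.1.le, by linarith [hs₀mem.2]⟩
  have hms : m ≤ u s := hsmax hs₀Icc
  have hsb : b < s := by
    rcases eq_or_lt_of_le hsmem.1 with h | h
    · have : u s ≤ 0 := h ▸ hub
      linarith
    · exact h
  have hsd : s < d := by
    rcases eq_or_lt_of_le hsmem.2 with h | h
    · exfalso
      have := abs_lt.mp (hN d hNd)
      rw [h] at hms; linarith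
    · exact h
  have hglobal : ∀ x ≥ b, u x ≤ u s := by
    intro x hx
    rcases le_or_gt x d with h | h
    · exact hsmax ⟨hx, h⟩
    · have := abs_lt.mp (hN x (by linarith))
      linarith
  have hloc : IsLocalMax u s := by
    filter_upwards [Ioo_mem_nhds hsb hsd] with x hx
    exact hsmax ⟨hx.1.le, hx.2.le⟩
  have hvs : v s = 0 := hloc.hasDerivAt_eq_zero (hud s)
  have hτs : τ < s := by linarith
  have hsT₀ : T₀ ≤ s := by linarith
  have hus2 := abs_lt.mp (hsmall s hsT₀)
  set φ : ℝ → ℝ := fun t => β * u t * (1 - u t) - f t * v t with hφ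
  have hφc : Continuous φ := by fun_prop
  have hφs : 0 < φ s := by
    simp only [hφ, hvs, mul_zero, sub_zero]
    have h1 : 0 < u s := lt_of_lt_of_le hm hms
    have h2 : (0:ℝ) < 1 - u s := by linarith [hus2.2]
    nlinarith [mul_pos (mul_pos hβ h1) h2]
  have hev : ∀ᶠ x in 𝓝 s, 0 < φ x ∧ τ < x := by
    filter_upwards [hφc.continuousAt (Ioi_mem_nhds hφs), Ioi_mem_nhds hτs] with x h1 h2
    exact ⟨h1, h2⟩
  obtain ⟨ε, hε, hball⟩ := Metric.eventually_nhds_iff_ball.mp hev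
  set e := s + ε/2 with he
  have hse : s < e := by simp [he]; linarith
  have hmemball : ∀ x ∈ Ioo s e, x ∈ Metric.ball s ε := by
    intro x hx
    rw [Metric.mem_ball, Real.dist_eq, abs_lt]
    constructor <;> [linarith [hx.1]; linarith [hx.2, he ▸ hx.2]]
  have hvmono : StrictMonoOn v (Icc s e) := by
    apply strictMonoOn_of_deriv_pos (convex_Icc s e) hcv.continuousOn
    intro x hx
    rw [interior_Icc] at hx
    have hb := hball x (hmemball x hx)
    rw [(hvd x).deriv, heq x hb.2]
    exact hb.1
  have humono : StrictMonoOn u (Icc s e) := by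
    apply strictMonoOn_of_deriv_pos (convex_Icc s e) hcu.continuousOn
    intro x hx
    rw [interior_Icc] at hx
    have hvx : 0 < v x := by
      have := hvmono (left_mem_Icc.mpr hse.le) ⟨hx.1.le, hx.2.le⟩ hx.1
      rw [hvs] at this
      exact this
    rw [(hud x).deriv]
    exact hvx
  have : u s < u e := humono (left_mem_Icc.mpr hse.le) (right_mem_Icc.mpr hse.le) hse
  have := hglobal e (by linarith)
  linarith

lemma neg_tail (β τ : ℝ) (hβ : 0 < β) (f u v w : ℝ → ℝ)
    (hcu : Continuous u) (hcv : Continuous v)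
    (hfd : ∀ t, HasDerivAt f (u t) t) (hud : ∀ t, HasDerivAt u (v t) t)
    (hvd : ∀ t, HasDerivAt v (w t) t)
    (heq : ∀ t ∈ Ioi τ, w t = β * u t * (1 - u t) - f t * v t)
    (hlim : Tendsto u atTop (𝓝 0))
    (hbot : Tendsto f atTop atBot)
    {T₀ : ℝ} (hT₀ : τ < T₀) (hsmall : ∀ t ≥ T₀, |u t| < 1/2)
    {b : ℝ} (hb : T₀ ≤ b) : u b < 0 := by
  have hdf : Differentiable ℝ f := fun t => (hfd t).differentiableAt
  have hcf : Continuous f := hdf.continuous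
  by_contra hub
  push_neg at hub
  obtain ⟨M, hM⟩ := eventually_atTop.mp (hbot.eventually_le_atBot (f b - 1))
  set c := max M (b + 1) with hc
  have hbc : b < c := lt_of_lt_of_le (by linarith) (le_max_right _ _)
  have hfc : f c ≤ f b - 1 := hM c (le_max_left _ _)
  obtain ⟨s₀, hs₀mem, hs₀⟩ := exists_hasDerivAt_eq_slope f u hbc hcf.continuousOn
    (fun x _ => hfd x)
  have hm : u s₀ < 0 := by
    rw [hs₀]
    apply div_neg_of_neg_of_pos <;> linarith
  set m := u s₀ with hmdef
  obtain ⟨N, hN⟩ := small_aux hlim (by linarith : (0:ℝ) < -m/2)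
  set d := max N c with hd
  have hcd : c ≤ d := le_max_right _ _
  have hNd : N ≤ d := le_max_left _ _
  have hbd : b ≤ d := by linarith
  obtain ⟨s, hsmem, hsmin⟩ := isCompact_Icc.exists_isMinOn (nonempty_Icc.mpr hbd)
    hcu.continuousOn
  have hs₀Icc : s₀ ∈ Icc b d := ⟨hs₀mem.1.le, by linarith [hs₀mem.2]⟩
  have hms : u s ≤ m := hsmin hs₀Icc
  have hsb : b < s := by
    rcases eq_or_lt_of_le hsmem.1 with h | h
    · have : 0 ≤ u s := h ▸ hub
      linarith
    · exact h
  have hsd : s < d := by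
    rcases eq_or_lt_of_le hsmem.2 with h | h
    · exfalso
      have := abs_lt.mp (hN d hNd)
      rw [h] at hms; linarith
    · exact h
  have hglobal : ∀ x ≥ b, u s ≤ u x := by
    intro x hx
    rcases le_or_gt x d with h | h
    · exact hsmin ⟨hx, h⟩
    · have := abs_lt.mp (hN x (by linarith))
      linarith
  have hloc : IsLocalMin u s := by
    filter_upwards [Ioo_mem_nhds hsb hsd] with x hx
    exact hsmin ⟨hx.1.le, hx.2.le⟩
  have hvs : v s = 0 := hloc.hasDerivAt_eq_zero (hud s)
  have hτs : τ < s := by linarith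
  have hsT₀ : T₀ ≤ s := by linarith
  have hus2 := abs_lt.mp (hsmall s hsT₀)
  set φ : ℝ → ℝ := fun t => β * u t * (1 - u t) - f t * v t with hφ
  have hφc : Continuous φ := by fun_prop
  have hφs : φ s < 0 := by
    simp only [hφ, hvs, mul_zero, sub_zero]
    have h1 : u s < 0 := lt_of_le_of_lt hms hm
    have h2 : (0:ℝ) < 1 - u s := by linarith [hus2.2]
    nlinarith [mul_pos (mul_pos hβ (by linarith : (0:ℝ) < -u s)) h2]
  have hev : ∀ᶠ x in 𝓝 s, φ x < 0 ∧ τ < x := by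
    filter_upwards [hφc.continuousAt (Iio_mem_nhds hφs), Ioi_mem_nhds hτs] with x h1 h2
    exact ⟨h1, h2⟩
  obtain ⟨ε, hε, hball⟩ := Metric.eventually_nhds_iff_ball.mp hev
  set e := s + ε/2 with he
  have hse : s < e := by simp [he]; linarith
  have hmemball : ∀ x ∈ Ioo s e, x ∈ Metric.ball s ε := by
    intro x hx
    rw [Metric.mem_ball, Real.dist_eq, abs_lt]
    constructor <;> [linarith [hx.1]; linarith [hx.2, he ▸ hx.2]]
  have hvanti : StrictAntiOn v (Icc s e) := by
    apply strictAntiOn_of_deriv_neg (convex_Icc s e) hcv.continuousOn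
    intro x hx
    rw [interior_Icc] at hx
    have hb := hball x (hmemball x hx)
    rw [(hvd x).deriv, heq x hb.2]
    exact hb.1
  have huanti : StrictAntiOn u (Icc s e) := by
    apply strictAntiOn_of_deriv_neg (convex_Icc s e) hcu.continuousOn
    intro x hx
    rw [interior_Icc] at hx
    have hvx : v x < 0 := by
      have := hvanti (left_mem_Icc.mpr hse.le) ⟨hx.1.le, hx.2.le⟩ hx.1
      rw [hvs] at this
      exact this
    rw [(hud x).deriv]
    exact hvx
  have : u e < u s := huanti (left_mem_Icc.mpr hse.le) (right_mem_Icc.mpr hse.le) hse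
  have := hglobal e (by linarith)
  linarith

lemma caseA (β τ : ℝ) (hβ : 0 < β) (f u v w : ℝ → ℝ)
    (hcu : Continuous u) (hcv : Continuous v)
    (hfd : ∀ t, HasDerivAt f (u t) t) (hud : ∀ t, HasDerivAt u (v t) t)
    (hvd : ∀ t, HasDerivAt v (w t) t)
    (heq : ∀ t ∈ Ioi τ, w t = β * u t * (1 - u t) - f t * v t)
    (hlim : Tendsto u atTop (𝓝 0))
    (htop : Tendsto f atTop atTop) : False := by
  obtain ⟨δ, hδpos, hδhalf, hδβ4, hδkey⟩ :
      ∃ δ : ℝ, 0 < δ ∧ δ ≤ 1/2 ∧ δ ≤ β/4 ∧ |1-β| * δ ≤ β/2 := by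
    have habs : 0 < |1-β| + 1 := by positivity
    refine ⟨min (min (1/2) (β/4)) (β/(2*(|1-β|+1))), ?_, ?_, ?_, ?_⟩
    · apply lt_min (lt_min (by norm_num) (by linarith))
      positivity
    · exact le_trans (min_le_left _ _) (min_le_left _ _)
    · exact le_trans (min_le_left _ _) (min_le_right _ _)
    · have h1 : min (min (1/2) (β/4)) (β/(2*(|1-β|+1))) ≤ β/(2*(|1-β|+1)) :=
        min_le_right _ _
      have h0 : 0 < min (min (1/2) (β/4)) (β/(2*(|1-β|+1))) := by
        apply lt_min (lt_min (by norm_num) (by linarith)); positivity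
      have h2 : (|1-β|+1) * min (min (1/2) (β/4)) (β/(2*(|1-β|+1))) ≤
          (|1-β|+1) * (β/(2*(|1-β|+1))) := by nlinarith
      have h4 : (|1-β|+1) * (β/(2*(|1-β|+1))) = β/2 := by field_simp
      nlinarith [abs_nonneg (1-β)]
  obtain ⟨N, hN⟩ := small_aux hlim hδpos
  obtain ⟨T₀, hT₀N, hT₀τ⟩ : ∃ T₀, N ≤ T₀ ∧ τ < T₀ :=
    ⟨max N (τ+1), le_max_left _ _, lt_of_lt_of_le (by linarith) (le_max_right _ _)⟩
  have hsmallδ : ∀ t ≥ T₀, |u t| < δ := fun t ht => hN t (by linarith)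
  have hsmall : ∀ t ≥ T₀, |u t| < 1/2 := fun t ht => lt_of_lt_of_le (hsmallδ t ht) hδhalf
  have hpos : ∀ t ≥ T₀, 0 < u t := fun b hb =>
    pos_tail β τ hβ f u v w hcu hcv hfd hud hvd heq hlim htop hT₀τ hsmall hb
  obtain ⟨M₁, hM₁⟩ := eventually_atTop.mp (htop.eventually_ge_atTop 0)
  obtain ⟨T₁, hT₁T₀, hT₁M⟩ : ∃ T₁, T₀ ≤ T₁ ∧ M₁ ≤ T₁ :=
    ⟨max T₀ M₁, le_max_left _ _, le_max_right _ _⟩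
  have hRd : ∀ t, HasDerivAt (fun t => v t + f t * u t - β/2 * f t)
      (w t + (u t * u t + f t * v t) - β/2 * u t) t := by
    intro t
    exact ((hvd t).add ((hfd t).mul (hud t))).sub ((hfd t).const_mul (β/2))
  have hmono : MonotoneOn (fun t => v t + f t * u t - β/2 * f t) (Ici T₁) := by
    apply mono_aux hRd
    intro t ht
    simp only [mem_Ioi] at ht
    have htτ : t ∈ Ioi τ := by simp only [mem_Ioi]; linarith
    rw [heq t htτ]
    have h1 : 0 < u t := hpos t (by linarith)
    have h2 : |u t| < δ := hsmallδ t (by linarith)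
    have h3 : u t < δ := lt_of_abs_lt h2
    have h4 : (1-β) * u t ≥ -(β/2) := by
      have ha : -|1-β| ≤ (1-β) := neg_abs_le _
      have hb1 : |1-β| * u t ≤ |1-β| * δ := by
        apply mul_le_mul_of_nonneg_left h3.le (abs_nonneg _)
      nlinarith [abs_nonneg (1-β)]
    have key : 0 ≤ u t * (β/2 + (1-β) * u t) := mul_nonneg h1.le (by linarith)
    nlinarith [key]
  obtain ⟨M₂, hM₂⟩ := eventually_atTop.mp
    (htop.eventually_ge_atTop ((1 - (v T₁ + f T₁ * u T₁ - β/2 * f T₁)) * 4 / β))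
  obtain ⟨T₂, hT₂T₁, hT₂M⟩ : ∃ T₂, T₁ ≤ T₂ ∧ M₂ ≤ T₂ :=
    ⟨max T₁ M₂, le_max_left _ _, le_max_right _ _⟩
  apply grow_contra hud one_pos (T := T₂) _ hlim
  intro t ht
  simp only [mem_Ici] at ht
  have htT₁ : T₁ ≤ t := by linarith
  have hR1 := hmono self_mem_Ici (mem_Ici.mpr htT₁) htT₁
  simp only at hR1
  have hf0 : 0 ≤ f t := hM₁ t (by linarith)
  have hut : u t < β/4 := lt_of_lt_of_le (lt_of_abs_lt (hsmallδ t (by linarith))) hδβ4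
  have hfu : f t * u t ≤ f t * (β/4) := mul_le_mul_of_nonneg_left hut.le hf0
  have hft := hM₂ t (by linarith)
  rw [div_le_iff₀ hβ] at hft
  nlinarith [hft, hR1, hfu]

lemma caseB (β τ : ℝ) (hβ : 0 < β) (f u v w : ℝ → ℝ)
    (hcu : Continuous u) (hcv : Continuous v)
    (hfd : ∀ t, HasDerivAt f (u t) t) (hud : ∀ t, HasDerivAt u (v t) t)
    (hvd : ∀ t, HasDerivAt v (w t) t)
    (heq : ∀ t ∈ Ioi τ, w t = β * u t * (1 - u t) - f t * v t)
    (hlim : Tendsto u atTop (𝓝 0))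
    (hbot : Tendsto f atTop atBot) : False := by
  obtain ⟨δ, hδpos, hδhalf, hδkey⟩ :
      ∃ δ : ℝ, 0 < δ ∧ δ ≤ 1/2 ∧ |1-β| * δ ≤ β/2 := by
    have habs : 0 < |1-β| + 1 := by positivity
    refine ⟨min (1/2) (β/(2*(|1-β|+1))), ?_, min_le_left _ _, ?_⟩
    · apply lt_min (by norm_num)
      positivity
    · have h1 : min (1/2) (β/(2*(|1-β|+1))) ≤ β/(2*(|1-β|+1)) := min_le_right _ _
      have h0 : 0 < min (1/2) (β/(2*(|1-β|+1))) := by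
        apply lt_min (by norm_num); positivity
      have h2 : (|1-β|+1) * min (1/2) (β/(2*(|1-β|+1))) ≤
          (|1-β|+1) * (β/(2*(|1-β|+1))) := by nlinarith
      have h4 : (|1-β|+1) * (β/(2*(|1-β|+1))) = β/2 := by field_simp
      nlinarith [abs_nonneg (1-β)]
  obtain ⟨N, hN⟩ := small_aux hlim hδpos
  obtain ⟨T₀, hT₀N, hT₀τ⟩ : ∃ T₀, N ≤ T₀ ∧ τ < T₀ :=
    ⟨max N (τ+1), le_max_left _ _, lt_of_lt_of_le (by linarith) (le_max_right _ _)⟩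
  have hsmallδ : ∀ t ≥ T₀, |u t| < δ := fun t ht => hN t (by linarith)
  have hsmall : ∀ t ≥ T₀, |u t| < 1/2 := fun t ht => lt_of_lt_of_le (hsmallδ t ht) hδhalf
  have hneg : ∀ t ≥ T₀, u t < 0 := fun b hb =>
    neg_tail β τ hβ f u v w hcu hcv hfd hud hvd heq hlim hbot hT₀τ hsmall hb
  obtain ⟨M₁, hM₁⟩ := eventually_atTop.mp (hbot.eventually_le_atBot 0)
  obtain ⟨T₁, hT₁T₀, hT₁M⟩ : ∃ T₁, T₀ ≤ T₁ ∧ M₁ ≤ T₁ :=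
    ⟨max T₀ M₁, le_max_left _ _, le_max_right _ _⟩
  have hRd : ∀ t, HasDerivAt (fun t => v t + f t * u t - β/2 * f t)
      (w t + (u t * u t + f t * v t) - β/2 * u t) t := by
    intro t
    exact ((hvd t).add ((hfd t).mul (hud t))).sub ((hfd t).const_mul (β/2))
  have hanti : AntitoneOn (fun t => v t + f t * u t - β/2 * f t) (Ici T₁) := by
    apply anti_aux hRd
    intro t ht
    simp only [mem_Ioi] at ht
    have htτ : t ∈ Ioi τ := by simp only [mem_Ioi]; linarith
    rw [heq t htτ]
    have h1 : u t < 0 := hneg t (by linarith)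
    have h2 : |u t| < δ := hsmallδ t (by linarith)
    have h3 : -δ < u t := neg_lt_of_abs_lt h2
    have h4 : (1-β) * u t ≥ -(β/2) := by
      have ha : (1-β) ≤ |1-β| := le_abs_self _
      have hb1 : |1-β| * (-u t) ≤ |1-β| * δ := by
        apply mul_le_mul_of_nonneg_left (by linarith) (abs_nonneg _)
      nlinarith [abs_nonneg (1-β)]
    have key : u t * (β/2 + (1-β) * u t) ≤ 0 :=
      mul_nonpos_of_nonpos_of_nonneg h1.le (by linarith)
    nlinarith [key]
  obtain ⟨M₂, hM₂⟩ := eventually_atTop.mp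
    (hbot.eventually_le_atBot ((-1 - (v T₁ + f T₁ * u T₁ - β/2 * f T₁)) * 2 / β))
  obtain ⟨T₂, hT₂T₁, hT₂M⟩ : ∃ T₂, T₁ ≤ T₂ ∧ M₂ ≤ T₂ :=
    ⟨max T₁ M₂, le_max_left _ _, le_max_right _ _⟩
  apply shrink_contra hud (by norm_num : (-1:ℝ) < 0) (T := T₂) _ hlim
  intro t ht
  simp only [mem_Ici] at ht
  have htT₁ : T₁ ≤ t := by linarith
  have hR1 := hanti self_mem_Ici (mem_Ici.mpr htT₁) htT₁
  simp only at hR1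
  have hf0 : f t ≤ 0 := hM₁ t (by linarith)
  have h1 : u t < 0 := hneg t (by linarith)
  have hfu : 0 ≤ f t * u t := by nlinarith
  have hft := hM₂ t (by linarith)
  rw [le_div_iff₀ hβ] at hft
  nlinarith [hft, hR1, hfu]

lemma caseC (β τ : ℝ) (hβ : β < 0) (f u v w : ℝ → ℝ)
    (hcu : Continuous u) (hcv : Continuous v)
    (hfd : ∀ t, HasDerivAt f (u t) t) (hud : ∀ t, HasDerivAt u (v t) t)
    (hvd : ∀ t, HasDerivAt v (w t) t)
    (heq : ∀ t ∈ Ioi τ, w t = β * u t * (1 - u t) - f t * v t)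
    (hlim : Tendsto u atTop (𝓝 0))
    (htop : Tendsto f atTop atTop) : False := by
  obtain ⟨δ, hδpos, hδhalf, hδkey⟩ :
      ∃ δ : ℝ, 0 < δ ∧ δ ≤ 1/2 ∧ (1/2 - β) * δ ≤ -β/2 := by
    have h12 : 0 < 1/2 - β := by linarith
    have hq : 0 < (-β)/(2*(1/2-β)) := div_pos (by linarith) (by linarith)
    refine ⟨min (1/2) ((-β)/(2*(1/2-β))), lt_min (by norm_num) hq, min_le_left _ _, ?_⟩
    have h1 : min (1/2) ((-β)/(2*(1/2-β))) ≤ (-β)/(2*(1/2-β)) := min_le_right _ _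
    have h2 : (1/2-β) * min (1/2) ((-β)/(2*(1/2-β))) ≤ (1/2-β) * ((-β)/(2*(1/2-β))) := by
      nlinarith
    have h3 : (1/2-β) * ((-β)/(2*(1/2-β))) = -β/2 := by
      rw [mul_div_assoc', div_eq_div_iff (ne_of_gt (by linarith : (0:ℝ) < 2*(1/2-β))) (by norm_num : (2:ℝ) ≠ 0)]
      ring
    linarith
  obtain ⟨N, hN⟩ := small_aux hlim hδpos
  obtain ⟨M₁, hM₁⟩ := eventually_atTop.mp (htop.eventually_ge_atTop 1)
  obtain ⟨T₀, hT₀N, hT₀τ, hT₀M⟩ : ∃ T₀, N ≤ T₀ ∧ τ < T₀ ∧ M₁ ≤ T₀ :=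
    ⟨max (max N (τ+1)) M₁, le_trans (le_max_left _ _) (le_max_left _ _),
      lt_of_lt_of_le (by linarith) (le_trans (le_max_right N (τ+1)) (le_max_left _ _)),
      le_max_right _ _⟩
  have hsmallδ : ∀ t ≥ T₀, |u t| < δ := fun t ht => hN t (by linarith)
  have hf1 : ∀ t ≥ T₀, 1 ≤ f t := fun t ht => hM₁ t (by linarith)
  -- energy E
  obtain ⟨E, hEeq, hEd⟩ : ∃ E : ℝ → ℝ,
      (∀ t, E t = v t * v t/2 - β * (u t * u t/2 - u t * u t * u t/3)) ∧
      (∀ t, HasDerivAt E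
        ((w t * v t + v t * w t)/2 -
          β * ((v t * u t + u t * v t)/2 -
            ((v t * u t + u t * v t) * u t + u t * u t * v t)/3)) t) := by
    refine ⟨_, fun t => rfl, fun t => ?_⟩
    exact (((hvd t).mul (hvd t)).div_const 2).sub
      (((((hud t).mul (hud t)).div_const 2).sub
        ((((hud t).mul (hud t)).mul (hud t)).div_const 3)).const_mul β)
  have hposaux : ∀ t, T₀ ≤ t → 0 ≤ u t * u t/2 - u t * u t * u t/3 := by
    intro t ht
    have h2 := abs_lt.mp (hsmallδ t ht)
    have h3 : u t ≤ 1/2 := by linarith [h2.2]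
    have h4 : u t * (u t * u t) ≤ (1/2) * (u t * u t) := by
      nlinarith [mul_self_nonneg (u t)]
    nlinarith [mul_self_nonneg (u t)]
  have hEanti : AntitoneOn E (Ici T₀) := by
    apply anti_aux hEd
    intro t ht
    simp only [mem_Ioi] at ht
    rw [heq t (by simp only [mem_Ioi]; linarith)]
    have hft : 1 ≤ f t := hf1 t (by linarith)
    have key : ((β * u t * (1 - u t) - f t * v t) * v t + v t * (β * u t * (1 - u t) - f t * v t))/2 -
        β * ((v t * u t + u t * v t)/2 - ((v t * u t + u t * v t) * u t + u t * u t * v t)/3)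
        = -(f t * (v t * v t)) := by ring
    rw [key]
    nlinarith [mul_self_nonneg (v t)]
  have hEnonneg : ∀ t ≥ T₀, 0 ≤ E t := by
    intro t ht
    rw [hEeq t]
    have := hposaux t ht
    have hbne : 0 ≤ -β := by linarith
    nlinarith [mul_self_nonneg (v t), mul_nonneg hbne this]
  have hEbound : ∀ t ≥ T₀, E t ≤ E T₀ := fun t ht =>
    hEanti self_mem_Ici (mem_Ici.mpr ht) ht
  have hvsq : ∀ t ≥ T₀, v t * v t ≤ 2 * E T₀ := by
    intro t ht
    have h1 := hEbound t ht
    rw [hEeq t] at h1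
    have h2 := hposaux t ht
    have hbne : 0 ≤ -β := by linarith
    nlinarith [mul_nonneg hbne h2]
  obtain ⟨K, hK1, hKv⟩ : ∃ K, 1 ≤ K ∧ ∀ t ≥ T₀, |v t| ≤ K := by
    refine ⟨max 1 (2 * E T₀), le_max_left _ _, ?_⟩
    intro t ht
    have h1 := hvsq t ht
    have h2 : |v t| * |v t| = v t * v t := abs_mul_abs_self _
    rcases le_or_gt (|v t|) 1 with h | h
    · exact le_trans h (le_max_left _ _)
    · have : |v t| ≤ 2 * E T₀ := by nlinarith
      exact le_trans this (le_max_right _ _)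
  -- Q
  obtain ⟨Q, hQeq, hQd⟩ : ∃ Q : ℝ → ℝ,
      (∀ t, Q t = u t * v t + f t * (u t * u t)/2) ∧
      (∀ t, HasDerivAt Q
        ((v t * v t + u t * w t) + (u t * (u t * u t) + f t * (v t * u t + u t * v t))/2) t) := by
    refine ⟨_, fun t => rfl, fun t => ?_⟩
    exact ((hud t).mul (hvd t)).add (((hfd t).mul ((hud t).mul (hud t))).div_const 2)
  obtain ⟨c, hc, hcβ⟩ : ∃ c : ℝ, 0 < c ∧ c * β = -(2*(1-β)) := by
    refine ⟨2*(1-β)/(-β), div_pos (by linarith) (by linarith), ?_⟩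
    rw [div_mul_eq_mul_div, div_eq_iff (ne_of_gt (by linarith : (0:ℝ) < -β))]
    ring
  -- Z
  obtain ⟨Z, hZeq, hZd⟩ : ∃ Z : ℝ → ℝ,
      (∀ t, Z t = (v t + f t * u t - β * f t) + c * (Q t + E t)) ∧
      (∀ t, HasDerivAt Z
        ((w t + (u t * u t + f t * v t) - β * u t) +
          c * (((v t * v t + u t * w t) + (u t * (u t * u t) + f t * (v t * u t + u t * v t))/2) +
            ((w t * v t + v t * w t)/2 -
              β * ((v t * u t + u t * v t)/2 -
                ((v t * u t + u t * v t) * u t + u t * u t * v t)/3)))) t) := by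
    refine ⟨_, fun t => rfl, fun t => ?_⟩
    exact (((hvd t).add ((hfd t).mul (hud t))).sub ((hfd t).const_mul β)).add
      (((hQd t).add (hEd t)).const_mul c)
  have hZanti : AntitoneOn Z (Ici T₀) := by
    apply anti_aux hZd
    intro t ht
    simp only [mem_Ioi] at ht
    rw [heq t (by simp only [mem_Ioi]; linarith)]
    have hft : 1 ≤ f t := hf1 t (by linarith)
    have h2 := abs_lt.mp (hsmallδ t (le_of_lt ht))
    have expand : ((β * u t * (1 - u t) - f t * v t) + (u t * u t + f t * v t) - β * u t) +
        c * (((v t * v t + u t * ((β * u t * (1 - u t) - f t * v t))) +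
          (u t * (u t * u t) + f t * (v t * u t + u t * v t))/2) +
          (((β * u t * (1 - u t) - f t * v t) * v t + v t * (β * u t * (1 - u t) - f t * v t))/2 -
            β * ((v t * u t + u t * v t)/2 -
              ((v t * u t + u t * v t) * u t + u t * u t * v t)/3)))
        = (1-β)*(u t * u t) + c * ((u t * u t) * (β + u t * (1/2 - β)))
          + c * ((1 - f t) * (v t * v t)) := by ring
    rw [expand]
    have h12 : 0 < 1/2 - β := by linarith
    have hfac : β + u t * (1/2 - β) ≤ β/2 := by
      have : u t * (1/2 - β) ≤ δ * (1/2 - β) := by nlinarith [h2.2]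
      linarith [hδkey]
    have hterm1 : (u t * u t) * (β + u t * (1/2 - β)) ≤ (u t * u t) * (β/2) :=
      mul_le_mul_of_nonneg_left hfac (mul_self_nonneg _)
    have hterm2 : c * ((u t * u t) * (β + u t * (1/2 - β))) ≤ c * ((u t * u t) * (β/2)) := by
      nlinarith
    have hterm3 : c * ((u t * u t) * (β/2)) = -((1-β) * (u t * u t)) := by
      have h9 : c * ((u t * u t) * (β/2)) = (c * β) * (u t * u t) / 2 := by ring
      rw [h9, hcβ]; ring
    have hterm5 : c * ((u t * u t) * (β + u t * (1/2 - β))) ≤ -((1-β) * (u t * u t)) := by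
      rw [← hterm3]; exact hterm2
    have hterm4 : c * ((1 - f t) * (v t * v t)) ≤ 0 := by
      have h5 : (1 - f t) * (v t * v t) ≤ 0 := by
        nlinarith [mul_self_nonneg (v t)]
      nlinarith
    linarith [hterm5, hterm4]
  -- conclude
  have hZb : ∀ t ≥ T₀, Z t ≤ Z T₀ := fun t ht => hZanti self_mem_Ici (mem_Ici.mpr ht) ht
  have hfu : ∀ t ≥ T₀, f t * u t ≤ (Z T₀ + c * (δ * K) + K) + β * f t := by
    intro t ht
    have h1 := hZb t ht
    have h3 : -K ≤ v t := by
      have := abs_le.mp (hKv t ht)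
      linarith [this.1]
    have h4 : |u t * v t| ≤ δ * K := by
      rw [abs_mul]
      exact mul_le_mul (le_of_lt (hsmallδ t ht)) (hKv t ht) (abs_nonneg _) (le_of_lt hδpos)
    have h5 := neg_abs_le (u t * v t)
    have h6 : 0 ≤ f t * (u t * u t)/2 := by
      have := hf1 t ht
      nlinarith [mul_self_nonneg (u t)]
    have h7 := hEnonneg t ht
    have h8 : -(δ * K) ≤ Q t + E t := by
      rw [hQeq t]
      linarith
    have hc2 : c * (-(δ * K)) ≤ c * (Q t + E t) := by nlinarith
    have e9 : c * (-(δ * K)) = -(c * (δ * K)) := by ring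
    have hZt := hZeq t
    linarith
  obtain ⟨M₃, hM₃⟩ := eventually_atTop.mp
    (htop.eventually_ge_atTop ((Z T₀ + c * (δ * K) + K + 1)/(-β)))
  obtain ⟨T₅, hT₅T₀, hT₅M⟩ : ∃ T₅, T₀ ≤ T₅ ∧ M₃ ≤ T₅ :=
    ⟨max T₀ M₃, le_max_left _ _, le_max_right _ _⟩
  have hneg : ∀ t ≥ T₅, u t < 0 := by
    intro t ht
    have h1 := hfu t (by linarith)
    have h2 := hM₃ t (by linarith)
    have h3 : β * f t ≤ -(Z T₀ + c * (δ * K) + K + 1) := by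
      rw [div_le_iff₀ (by linarith : (0:ℝ) < -β)] at h2
      have e : f t * -β = -(β * f t) := by ring
      linarith
    have h4 : f t * u t ≤ -1 := by linarith
    have h5 : 1 ≤ f t := hf1 t (by linarith)
    nlinarith
  have hfanti : AntitoneOn f (Ici T₅) := by
    apply anti_aux hfd
    intro t ht
    simp only [mem_Ioi] at ht
    exact le_of_lt (hneg t (le_of_lt ht))
  obtain ⟨M₄, hM₄⟩ := eventually_atTop.mp (htop.eventually_ge_atTop (f T₅ + 1))
  have h1 : f (max T₅ M₄) ≤ f T₅ :=
    hfanti self_mem_Ici (mem_Ici.mpr (le_max_left _ _)) (le_max_left _ _)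
  have h2 : f T₅ + 1 ≤ f (max T₅ M₄) := hM₄ _ (le_max_right _ _)
  linarith

lemma caseD (β τ : ℝ) (hβ : β < 0) (f u v w : ℝ → ℝ)
    (hcu : Continuous u) (hcv : Continuous v)
    (hfd : ∀ t, HasDerivAt f (u t) t) (hud : ∀ t, HasDerivAt u (v t) t)
    (hvd : ∀ t, HasDerivAt v (w t) t)
    (heq : ∀ t ∈ Ioi τ, w t = β * u t * (1 - u t) - f t * v t)
    (hlim : Tendsto u atTop (𝓝 0))
    (hbot : Tendsto f atTop atBot) : False := by
  obtain ⟨N, hN⟩ := small_aux hlim (by norm_num : (0:ℝ) < 1/2)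
  obtain ⟨M₁, hM₁⟩ := eventually_atTop.mp (hbot.eventually_le_atBot 0)
  obtain ⟨T₀, hT₀N, hT₀τ, hT₀M⟩ : ∃ T₀, N ≤ T₀ ∧ τ < T₀ ∧ M₁ ≤ T₀ :=
    ⟨max (max N (τ+1)) M₁, le_trans (le_max_left _ _) (le_max_left _ _),
      lt_of_lt_of_le (by linarith) (le_trans (le_max_right N (τ+1)) (le_max_left _ _)),
      le_max_right _ _⟩
  have hsmall : ∀ t ≥ T₀, |u t| < 1/2 := fun t ht => hN t (by linarith)
  have hf0 : ∀ t ≥ T₀, f t ≤ 0 := fun t ht => hM₁ t (by linarith)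
  obtain ⟨E, hEeq, hEd⟩ : ∃ E : ℝ → ℝ,
      (∀ t, E t = v t * v t/2 - β * (u t * u t/2 - u t * u t * u t/3)) ∧
      (∀ t, HasDerivAt E
        ((w t * v t + v t * w t)/2 -
          β * ((v t * u t + u t * v t)/2 -
            ((v t * u t + u t * v t) * u t + u t * u t * v t)/3)) t) := by
    refine ⟨_, fun t => rfl, fun t => ?_⟩
    exact (((hvd t).mul (hvd t)).div_const 2).sub
      (((((hud t).mul (hud t)).div_const 2).sub
        ((((hud t).mul (hud t)).mul (hud t)).div_const 3)).const_mul β)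
  have hposaux : ∀ t, T₀ ≤ t → 0 ≤ u t * u t/2 - u t * u t * u t/3 := by
    intro t ht
    have h2 := abs_lt.mp (hsmall t ht)
    have h4 : u t * (u t * u t) ≤ (1/2) * (u t * u t) := by
      nlinarith [mul_self_nonneg (u t)]
    nlinarith [mul_self_nonneg (u t)]
  have hEmono : MonotoneOn E (Ici T₀) := by
    apply mono_aux hEd
    intro t ht
    simp only [mem_Ioi] at ht
    rw [heq t (by simp only [mem_Ioi]; linarith)]
    have hft : f t ≤ 0 := hf0 t (by linarith)
    have key : ((β * u t * (1 - u t) - f t * v t) * v t + v t * (β * u t * (1 - u t) - f t * v t))/2 -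
        β * ((v t * u t + u t * v t)/2 - ((v t * u t + u t * v t) * u t + u t * u t * v t)/3)
        = -(f t * (v t * v t)) := by ring
    rw [key]
    nlinarith [mul_self_nonneg (v t)]
  by_cases hE0 : ∃ t₀ ≥ T₀, 0 < E t₀
  · obtain ⟨t₀, ht₀, he⟩ := hE0
    obtain ⟨N₂, hN₂⟩ := small_aux hlim
      (show (0:ℝ) < Real.sqrt (E t₀ / (2 * -β)) from
        Real.sqrt_pos.mpr (div_pos he (by linarith)))
    obtain ⟨T₆, hT₆t₀, hT₆N₂⟩ : ∃ T₆, t₀ ≤ T₆ ∧ N₂ ≤ T₆ :=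
      ⟨max t₀ N₂, le_max_left _ _, le_max_right _ _⟩
    have hT₆T₀ : T₀ ≤ T₆ := by linarith
    have husq : ∀ t ≥ T₆, 2 * (-β) * (u t * u t) < E t₀ := by
      intro t ht
      have h1 := hN₂ t (by linarith)
      have h2 : |u t| * |u t| < Real.sqrt (E t₀ / (2 * -β)) * Real.sqrt (E t₀ / (2 * -β)) := by
        apply mul_lt_mul'' h1 h1 (abs_nonneg _) (abs_nonneg _)
      rw [abs_mul_abs_self, Real.mul_self_sqrt (le_of_lt (div_pos he (by linarith)))] at h2
      rw [lt_div_iff₀ (by linarith : (0:ℝ) < 2 * -β)] at h2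
      linarith [h2]
    have hvsq : ∀ t ≥ T₆, E t₀ ≤ v t * v t := by
      intro t ht
      have h1 : E t₀ ≤ E t := hEmono (mem_Ici.mpr (by linarith)) (mem_Ici.mpr (by linarith))
        (by linarith)
      rw [hEeq t] at h1
      have h2 := husq t ht
      have h3 := abs_lt.mp (hsmall t (by linarith))
      -- u²/2 - u³/3 ≤ u²  (since -u³/3 ≤ u²/2 when |u| ≤ 1/2)
      have h4 : -(u t * u t * u t) ≤ (1/2) * (u t * u t) := by
        nlinarith [mul_self_nonneg (u t)]
      have h5 : u t * u t/2 - u t * u t * u t/3 ≤ u t * u t := by nlinarith [mul_self_nonneg (u t)]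
      have h6 : -β * (u t * u t/2 - u t * u t * u t/3) ≤ -β * (u t * u t) := by
        apply mul_le_mul_of_nonneg_left h5 (by linarith)
      nlinarith
    have hvT₆ : v T₆ ≠ 0 := by
      intro h
      have := hvsq T₆ le_rfl
      rw [h] at this
      nlinarith
    have hsqrtpos : 0 < Real.sqrt (E t₀) := Real.sqrt_pos.mpr he
    rcases lt_or_gt_of_ne hvT₆ with hvneg | hvpos
    · -- v stays negative
      have hallneg : ∀ t ≥ T₆, v t < 0 := by
        intro t ht
        by_contra hge
        push_neg at hge
        obtain ⟨s, hsmem, hs0⟩ : ∃ s ∈ Icc T₆ t, v s = 0 := by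
          have hsub := intermediate_value_Icc ht (hcv.continuousOn (s := Icc T₆ t))
          have h0mem : (0:ℝ) ∈ Icc (v T₆) (v t) := ⟨le_of_lt hvneg, hge⟩
          obtain ⟨s, hs, hvs⟩ := hsub h0mem
          exact ⟨s, hs, hvs⟩
        have := hvsq s (hsmem.1)
        rw [hs0] at this
        nlinarith
      apply shrink_contra hud (show -Real.sqrt (E t₀) < 0 by linarith) (T := T₆) _ hlim
      intro t ht
      simp only [mem_Ici] at ht
      have h1 := hvsq t ht
      have h2 := hallneg t ht
      have h3 : Real.sqrt (E t₀) ≤ |v t| := by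
        rw [← Real.sqrt_mul_self (abs_nonneg (v t)), abs_mul_abs_self]
        exact Real.sqrt_le_sqrt h1
      rw [abs_of_neg h2] at h3
      linarith
    · -- v stays positive
      have hallpos : ∀ t ≥ T₆, 0 < v t := by
        intro t ht
        by_contra hge
        push_neg at hge
        obtain ⟨s, hsmem, hs0⟩ : ∃ s ∈ Icc T₆ t, v s = 0 := by
          have hsub := intermediate_value_Icc' ht (hcv.continuousOn (s := Icc T₆ t))
          have h0mem : (0:ℝ) ∈ Icc (v t) (v T₆) := ⟨hge, le_of_lt hvpos⟩
          obtain ⟨s, hs, hvs⟩ := hsub h0mem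
          exact ⟨s, hs, hvs⟩
        have := hvsq s (hsmem.1)
        rw [hs0] at this
        nlinarith
      apply grow_contra hud hsqrtpos (T := T₆) _ hlim
      intro t ht
      simp only [mem_Ici] at ht
      have h1 := hvsq t ht
      have h2 := hallpos t ht
      have h3 : Real.sqrt (E t₀) ≤ |v t| := by
        rw [← Real.sqrt_mul_self (abs_nonneg (v t)), abs_mul_abs_self]
        exact Real.sqrt_le_sqrt h1
      rw [abs_of_pos h2] at h3
      linarith
  · push_neg at hE0
    have huzero : ∀ t ≥ T₀, u t = 0 := by
      intro t ht
      have h1 : E t ≤ 0 := hE0 t ht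
      rw [hEeq t] at h1
      have h2 := hposaux t ht
      have h3 := abs_lt.mp (hsmall t ht)
      -- v²/2 + (-β)(u²/2-u³/3) ≤ 0 with both nonneg, and u²/2-u³/3 ≥ u²/3
      have h4 : u t * u t/2 - u t * u t * u t/3 ≥ (u t * u t)/3 := by
        nlinarith [mul_self_nonneg (u t)]
      have h5 : (-β) * ((u t * u t)/3) ≤ (-β) * (u t * u t/2 - u t * u t * u t/3) := by
        apply mul_le_mul_of_nonneg_left h4 (by linarith)
      have h6 : u t * u t ≤ 0 := by nlinarith [mul_self_nonneg (v t)]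
      nlinarith [mul_self_nonneg (u t)]
    have hfm : MonotoneOn f (Ici T₀) := by
      apply mono_aux hfd
      intro t ht
      simp only [mem_Ioi] at ht
      rw [huzero t (le_of_lt ht)]
    have hfa : AntitoneOn f (Ici T₀) := by
      apply anti_aux hfd
      intro t ht
      simp only [mem_Ioi] at ht
      rw [huzero t (le_of_lt ht)]
    obtain ⟨M₅, hM₅⟩ := eventually_atTop.mp (hbot.eventually_le_atBot (f T₀ - 1))
    have h1 : f T₀ ≤ f (max T₀ M₅) :=
      hfm self_mem_Ici (mem_Ici.mpr (le_max_left _ _)) (le_max_left _ _)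
    have h2 : f (max T₀ M₅) ≤ f T₀ - 1 := hM₅ _ (le_max_right _ _)
    linarith

/-- for a solution of `f\'\'\' + f f\'\' + β f\'(f\'-1) = 0` on `(τ,∞)`
with `β ≠ 0` and `f\'(t) → 0` as `t → +∞`, the function `f` tends neither to
`+∞` nor to `-∞`. -/
theorem stmt4 (β τ : ℝ) (hβ : β ≠ 0) (f : ℝ → ℝ) (hf : ContDiff ℝ 3 f)
    (heq : ∀ t ∈ Ioi τ, deriv (deriv (deriv f)) t + f t * deriv (deriv f) t
      + β * deriv f t * (deriv f t - 1) = 0)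
    (hlim : Tendsto (deriv f) atTop (𝓝 0)) :
    ¬ Tendsto f atTop atTop ∧ ¬ Tendsto f atTop atBot := by
  have hc3 : ContDiff ℝ 2 (deriv f) :=
    ((contDiff_succ_iff_deriv (n := 2)).mp (by exact_mod_cast hf)).2.2
  have hc2 : ContDiff ℝ 1 (deriv (deriv f)) :=
    ((contDiff_succ_iff_deriv (n := 1)).mp (by exact_mod_cast hc3)).2.2
  have hfd : ∀ t, HasDerivAt f (deriv f t) t := fun t =>
    (hf.differentiable (by norm_num) t).hasDerivAt
  have hud : ∀ t, HasDerivAt (deriv f) (deriv (deriv f) t) t := fun t =>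
    (hc3.differentiable (by norm_num) t).hasDerivAt
  have hvd : ∀ t, HasDerivAt (deriv (deriv f)) (deriv (deriv (deriv f)) t) t := fun t =>
    (hc2.differentiable (by norm_num) t).hasDerivAt
  have hcu : Continuous (deriv f) := hc3.continuous
  have hcv : Continuous (deriv (deriv f)) := hc2.continuous
  have heq2 : ∀ t ∈ Ioi τ, deriv (deriv (deriv f)) t =
      β * deriv f t * (1 - deriv f t) - f t * deriv (deriv f) t := by
    intro t ht
    have := heq t ht
    ring_nf
    ring_nf at this
    linarith
  rcases lt_or_gt_of_ne hβ with hneg | hpos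
  · exact ⟨fun htop => caseC β τ hneg f (deriv f) (deriv (deriv f)) (deriv (deriv (deriv f)))
        hcu hcv hfd hud hvd heq2 hlim htop,
      fun hbot => caseD β τ hneg f (deriv f) (deriv (deriv f)) (deriv (deriv (deriv f)))
        hcu hcv hfd hud hvd heq2 hlim hbot⟩
  · exact ⟨fun htop => caseA β τ hpos f (deriv f) (deriv (deriv f)) (deriv (deriv (deriv f)))
        hcu hcv hfd hud hvd heq2 hlim htop,
      fun hbot => caseB β τ hpos f (deriv f) (deriv (deriv f)) (deriv (deriv (deriv f)))
        hcu hcv hfd hud hvd heq2 hlim hbot⟩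
end

section
/- Let β > 0 and let f be a solution of the equation f''' + f·f'' + β·f'·(f'−1) = 0 on an interval [τ, T) (with T ≤ +∞) such that f ≥ 0 and f' ≥ 0 on [τ, T). Then f' is bounded on [τ, T); more precisely, the function L(t) = 3·f''(t)² + β·(2·f'(t) − 3)·f'(t)² is nonincreasing on [τ, T), so that β·(2·f'(t) − 3)·f'(t)² ≤ L(τ) for all t ∈ [τ, T). -/
open Set Filter Topology

/-- for a solution of `f''' + f f'' + β f'(f'-1) = 0` with `β > 0`
on `[τ,T)` (`T ≤ +∞`, modelled with `T : EReal`) with `f ≥ 0` and `f' ≥ 0`,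
the derivative `f'` is bounded; more precisely the Lyapunov function
`L(t) = 3 f''(t)² + β (2 f'(t) - 3) f'(t)²` is nonincreasing, so that
`β (2 f'(t) - 3) f'(t)² ≤ L(τ)` on `[τ,T)`. -/
theorem stmt5 (β τ : ℝ) (hβ : 0 < β) (T : EReal) (hT : (τ : EReal) < T)
    (f : ℝ → ℝ) (hf : ContDiff ℝ 3 f)
    (heq : ∀ t : ℝ, τ ≤ t → (t : EReal) < T →
      deriv (deriv (deriv f)) t + f t * deriv (deriv f) t
        + β * deriv f t * (deriv f t - 1) = 0)
    (hpos : ∀ t : ℝ, τ ≤ t → (t : EReal) < T → 0 ≤ f t ∧ 0 ≤ deriv f t) :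
    (∃ M : ℝ, ∀ t : ℝ, τ ≤ t → (t : EReal) < T → |deriv f t| ≤ M) ∧
    AntitoneOn (fun t => 3 * (deriv (deriv f) t) ^ 2
      + β * (2 * deriv f t - 3) * (deriv f t) ^ 2)
      {t : ℝ | τ ≤ t ∧ (t : EReal) < T} ∧
    (∀ t : ℝ, τ ≤ t → (t : EReal) < T →
      β * (2 * deriv f t - 3) * (deriv f t) ^ 2 ≤
        3 * (deriv (deriv f) τ) ^ 2 + β * (2 * deriv f τ - 3) * (deriv f τ) ^ 2) := by
  have h3 : (3 : WithTop ℕ∞) = 2 + 1 := by norm_num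
  rw [h3, contDiff_succ_iff_deriv] at hf
  have hg2 : ContDiff ℝ 2 (deriv f) := hf.2.2
  have h2 : (2 : WithTop ℕ∞) = 1 + 1 := by norm_num
  rw [h2, contDiff_succ_iff_deriv] at hg2
  have hgdiff : Differentiable ℝ (deriv f) := hg2.1
  have hh1 : ContDiff ℝ 1 (deriv (deriv f)) := hg2.2.2
  have hhdiff : Differentiable ℝ (deriv (deriv f)) := hh1.differentiable one_ne_zero
  set S : Set ℝ := {t : ℝ | τ ≤ t ∧ (t : EReal) < T} with hS
  set L : ℝ → ℝ := fun t => 3 * (deriv (deriv f) t) ^ 2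
      + β * (2 * deriv f t - 3) * (deriv f t) ^ 2 with hL
  -- derivative of L
  have hLD : ∀ t : ℝ, HasDerivAt L
      (6 * deriv (deriv f) t * deriv (deriv (deriv f)) t
        + β * (deriv (deriv f) t * (6 * (deriv f t) ^ 2 - 6 * deriv f t))) t := by
    intro t
    have h1 : HasDerivAt (deriv f) (deriv (deriv f) t) t := (hgdiff t).hasDerivAt
    have h2 : HasDerivAt (deriv (deriv f)) (deriv (deriv (deriv f)) t) t :=
      (hhdiff t).hasDerivAt
    have A := (h2.pow 2).const_mul (3:ℝ)
    have B := (((h1.const_mul (2:ℝ)).sub_const 3).const_mul β).mul (h1.pow 2)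
    refine (A.add B).congr_deriv ?_
    simp only [Pi.pow_apply]
    push_cast
    ring
  -- convexity
  have hconv : Convex ℝ S := by
    rw [convex_iff_ordConnected]
    constructor
    intro a ha b hb x hx
    exact ⟨ha.1.trans hx.1, lt_of_le_of_lt (EReal.coe_le_coe_iff.2 hx.2) hb.2⟩
  -- antitone
  have hanti : AntitoneOn L S := by
    apply antitoneOn_of_deriv_nonpos hconv
    · exact (Continuous.continuousOn (continuous_iff_continuousAt.2 fun x => (hLD x).continuousAt))
    · exact fun x _ => ((hLD x).differentiableAt).differentiableWithinAt
    · intro x hx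
      obtain ⟨hx1, hx2⟩ := interior_subset hx
      rw [(hLD x).deriv]
      have hode := heq x hx1 hx2
      have hfx := (hpos x hx1 hx2).1
      have key : 6 * deriv (deriv f) x * deriv (deriv (deriv f)) x
          + β * (deriv (deriv f) x * (6 * (deriv f x) ^ 2 - 6 * deriv f x))
          = -6 * f x * (deriv (deriv f) x) ^ 2 := by
        linear_combination 6 * deriv (deriv f) x * hode
      rw [key]
      have := mul_nonneg hfx (sq_nonneg (deriv (deriv f) x))
      linarith
  have hτS : τ ∈ S := ⟨le_rfl, hT⟩
  have hbound : ∀ t : ℝ, τ ≤ t → (t : EReal) < T →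
      β * (2 * deriv f t - 3) * (deriv f t) ^ 2 ≤
        3 * (deriv (deriv f) τ) ^ 2 + β * (2 * deriv f τ - 3) * (deriv f τ) ^ 2 := by
    intro t ht1 ht2
    have h' := hanti hτS ⟨ht1, ht2⟩ ht1
    have hLt : L t = 3 * (deriv (deriv f) t) ^ 2
        + β * (2 * deriv f t - 3) * (deriv f t) ^ 2 := rfl
    have hLτ : L τ = 3 * (deriv (deriv f) τ) ^ 2
        + β * (2 * deriv f τ - 3) * (deriv f τ) ^ 2 := rfl
    rw [hLt, hLτ] at h'
    nlinarith [sq_nonneg (deriv (deriv f) t)]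
  refine ⟨?_, hanti, hbound⟩
  set C : ℝ := 3 * (deriv (deriv f) τ) ^ 2 + β * (2 * deriv f τ - 3) * (deriv f τ) ^ 2
    with hC
  refine ⟨max 2 (C / (2 * β)), fun t ht1 ht2 => ?_⟩
  have hft := (hpos t ht1 ht2).2
  have hb := hbound t ht1 ht2
  rw [abs_of_nonneg hft]
  rcases le_or_gt (deriv f t) 2 with h | h
  · exact h.trans (le_max_left _ _)
  · refine le_trans ?_ (le_max_right _ _)
    rw [le_div_iff₀ (by positivity)]
    nlinarith [hb, mul_pos (mul_pos (mul_pos hβ (sub_pos.2 h))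
      (show (0:ℝ) < deriv f t from lt_trans two_pos h))
      (show (0:ℝ) < 2 * deriv f t + 1 by linarith)]
end

section
/- Let β > 0 and let f be a solution of the equation f''' + f·f'' + β·f'·(f'−1) = 0 on the interval [τ, +∞) such that f(τ) ≥ 0, f'(τ) ≥ 1 and f''(τ) > 0. Then there exists t₀ > τ such that f'' > 0 on [τ, t₀) and f''(t₀) = 0; in other words, f'' cannot stay positive on all of [τ, +∞). -/
open Set Filter Topology

/-- if `β > 0` and `f` solves `f''' + f f'' + β f'(f'-1) = 0` on
`[τ,∞)` with `f(τ) ≥ 0`, `f'(τ) ≥ 1` and `f''(τ) > 0`, then `f''` vanishes at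
some first point `t₀ > τ`: `f'' > 0` on `[τ,t₀)` and `f''(t₀) = 0`. -/
theorem stmt6 (β τ : ℝ) (hβ : 0 < β) (f : ℝ → ℝ) (hf : ContDiff ℝ 3 f)
    (heq : ∀ t ∈ Ici τ, deriv (deriv (deriv f)) t + f t * deriv (deriv f) t
      + β * deriv f t * (deriv f t - 1) = 0)
    (h0 : 0 ≤ f τ) (h1 : 1 ≤ deriv f τ) (h2 : 0 < deriv (deriv f) τ) :
    ∃ t₀ > τ, (∀ t ∈ Ico τ t₀, 0 < deriv (deriv f) t) ∧ deriv (deriv f) t₀ = 0 := by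
  -- regularity facts
  have hf1 : ContDiff ℝ 2 (deriv f) := by
    have h := ContDiff.iterate_deriv' 2 1 (f := f) (by exact_mod_cast hf)
    simpa using h
  have hf2 : ContDiff ℝ 1 (deriv (deriv f)) := by
    have h := ContDiff.iterate_deriv' 1 2 (f := f) (by exact_mod_cast hf)
    simpa [Function.iterate_succ'] using h
  have hD2cont : Continuous (deriv (deriv f)) := hf2.continuous
  have hD2diff : Differentiable ℝ (deriv (deriv f)) :=
    hf2.differentiable (by norm_num)
  set S : Set ℝ := Ici τ ∩ (deriv (deriv f)) ⁻¹' Iic 0 with hS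
  by_cases hne : S.Nonempty
  · -- there is a first zero
    have hScl : IsClosed S := isClosed_Ici.inter (isClosed_Iic.preimage hD2cont)
    have hbdd : BddBelow S := ⟨τ, fun x hx => hx.1⟩
    set t₀ := sInf S with ht₀
    have ht₀S : t₀ ∈ S := hScl.csInf_mem hne hbdd
    have ht₀τ : τ ≤ t₀ := ht₀S.1
    have ht₀lt : τ < t₀ := by
      rcases lt_or_eq_of_le ht₀τ with h | h
      · exact h
      · exact absurd (h ▸ ht₀S.2 : deriv (deriv f) τ ≤ 0) (not_le.mpr h2)
    have hpos : ∀ t ∈ Ico τ t₀, 0 < deriv (deriv f) t := by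
      intro t ⟨ht1, ht2⟩
      by_contra h
      exact absurd (csInf_le hbdd ⟨ht1, le_of_not_gt h⟩) (not_le.mpr ht2)
    refine ⟨t₀, ht₀lt, hpos, le_antisymm ht₀S.2 ?_⟩
    -- D2 t₀ ≥ 0 by continuity from the left
    have hmem : t₀ ∈ closure (Ico τ t₀) := by
      rw [closure_Ico (ne_of_lt ht₀lt)]; exact ⟨ht₀τ, le_rfl⟩
    haveI : Filter.NeBot (𝓝[Ico τ t₀] t₀) := mem_closure_iff_nhdsWithin_neBot.mp hmem
    have htend : Tendsto (deriv (deriv f)) (𝓝[Ico τ t₀] t₀) (𝓝 (deriv (deriv f) t₀)) :=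
      (hD2cont.tendsto t₀).mono_left nhdsWithin_le_nhds
    refine ge_of_tendsto htend ?_
    filter_upwards [self_mem_nhdsWithin] with t ht
    exact (hpos t ht).le
  · -- D2 > 0 everywhere on [τ,∞): derive a contradiction
    exfalso
    rw [Set.not_nonempty_iff_eq_empty] at hne
    have hD2pos : ∀ t, τ ≤ t → 0 < deriv (deriv f) t := by
      intro t ht
      by_contra h
      exact (eq_empty_iff_forall_notMem.mp hne t) ⟨ht, le_of_not_gt h⟩
    -- f' strictly increasing on [τ,∞)
    have hf'mono : StrictMonoOn (deriv f) (Ici τ) := by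
      apply strictMonoOn_of_deriv_pos (convex_Ici τ) hf1.continuous.continuousOn
      intro x hx
      rw [interior_Ici] at hx
      exact hD2pos x hx.le
    have hf'ge : ∀ t, τ ≤ t → 1 ≤ deriv f t := fun t ht =>
      h1.trans (hf'mono.monotoneOn (self_mem_Ici) ht ht)
    -- f nonnegative on [τ,∞)
    have hfmono : MonotoneOn f (Ici τ) := by
      apply monotoneOn_of_deriv_nonneg (convex_Ici τ)
        (hf.continuous.continuousOn)
        ((hf.differentiable (by norm_num)).differentiableOn)
      intro x hx
      rw [interior_Ici] at hx
      exact le_trans zero_le_one (hf'ge x hx.le)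
    have hfge : ∀ t, τ ≤ t → 0 ≤ f t := fun t ht =>
      h0.trans (hfmono self_mem_Ici ht ht)
    set c := deriv f (τ + 1) with hc
    have hc1 : 1 < c :=
      lt_of_le_of_lt h1 (hf'mono self_mem_Ici (by norm_num) (by norm_num))
    have hKpos : 0 < β * (c * (c - 1)) :=
      mul_pos hβ (mul_pos (by linarith) (by linarith))
    -- g(t) = D2 t + K t has nonpositive derivative on [τ+1, ∞)
    have hg : ∀ x : ℝ, HasDerivAt (fun t => deriv (deriv f) t + β * (c * (c - 1)) * t)
        (deriv (deriv (deriv f)) x + β * (c * (c - 1))) x := by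
      intro x
      have h1' := (hD2diff x).hasDerivAt
      have h2' : HasDerivAt (fun t : ℝ => β * (c * (c - 1)) * t) (β * (c * (c - 1))) x := by
        simpa using (hasDerivAt_id x).const_mul (β * (c * (c - 1)))
      exact h1'.add h2'
    have hganti : AntitoneOn (fun t => deriv (deriv f) t + β * (c * (c - 1)) * t)
        (Ici (τ + 1)) := by
      apply antitoneOn_of_deriv_nonpos (convex_Ici _)
        (Continuous.continuousOn (by fun_prop))
        (fun x _ => (hg x).differentiableAt.differentiableWithinAt)
      intro x hx
      rw [interior_Ici] at hx
      have hxτ : τ ≤ x := by linarith [(mem_Ioi.mp hx).le]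
      rw [(hg x).deriv]
      have he := heq x hxτ
      have hfx := hfge x hxτ
      have hD2x := hD2pos x hxτ
      have hcx : c ≤ deriv f x :=
        hf'mono.monotoneOn (by simp : (τ + 1 : ℝ) ∈ Ici τ)
          (by simpa using hxτ : x ∈ Ici τ) hx.le
      nlinarith [mul_nonneg hfx hD2x.le,
        mul_nonneg (mul_nonneg hβ.le (sub_nonneg.mpr hcx))
          (show (0:ℝ) ≤ deriv f x + c - 1 by linarith)]
    -- evaluate at a large time to contradict positivity of D2
    have hA : 0 < deriv (deriv f) (τ + 1) := hD2pos _ (by linarith)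
    have hdivnn : 0 ≤ deriv (deriv f) (τ + 1) / (β * (c * (c - 1))) :=
      div_nonneg hA.le hKpos.le
    have hTge : τ + 1 ≤ τ + 1 + deriv (deriv f) (τ + 1) / (β * (c * (c - 1))) + 1 := by
      linarith
    have key := hganti self_mem_Ici hTge hTge
    simp only at key
    have hD2T := hD2pos (τ + 1 + deriv (deriv f) (τ + 1) / (β * (c * (c - 1))) + 1)
      (by linarith)
    have hKT : β * (c * (c - 1)) *
        (τ + 1 + deriv (deriv f) (τ + 1) / (β * (c * (c - 1))) + 1)
        = β * (c * (c - 1)) * (τ + 1) + deriv (deriv f) (τ + 1) + β * (c * (c - 1)) := by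
      have hcan : β * (c * (c - 1)) * (deriv (deriv f) (τ + 1) / (β * (c * (c - 1))))
          = deriv (deriv f) (τ + 1) := by
        rw [mul_comm]; exact div_mul_cancel₀ _ hKpos.ne'
      linear_combination hcan
    linarith
end

section
/- Let β ∈ (0,1] and let f be a solution of the equation f''' + f·f'' + β·f'·(f'−1) = 0 on the interval [t₀, +∞) such that 0 < f'(t₀) < 1 and 0 ≤ f''(t₀) ≤ f(t₀)·(1 − f'(t₀)). Then f'' > 0 on (t₀, +∞), f'(t₀) < f'(t) < 1 for all t > t₀, and f'(t) → 1 as t → +∞. -/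
open Set Filter Topology

/-- Comparison of two functions via their derivatives on an interval. -/
private lemma mono_cmp {s t : ℝ} {P Q P' Q' : ℝ → ℝ}
    (hP : ∀ x ∈ Icc s t, HasDerivAt P (P' x) x)
    (hQ : ∀ x ∈ Icc s t, HasDerivAt Q (Q' x) x)
    (hst : s ≤ t) (h : ∀ x ∈ Ioo s t, P' x ≤ Q' x) : P t - P s ≤ Q t - Q s := by
  have hm : MonotoneOn (fun x => Q x - P x) (Icc s t) := by
    apply monotoneOn_of_deriv_nonneg (convex_Icc s t)
    · intro x hx
      exact (((hQ x hx).sub (hP x hx)).continuousAt).continuousWithinAt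
    · intro x hx
      rw [interior_Icc] at hx
      have hx' : x ∈ Icc s t := Ioo_subset_Icc_self hx
      exact (((hQ x hx').sub (hP x hx')).differentiableAt).differentiableWithinAt
    · intro x hx
      rw [interior_Icc] at hx
      have hx' : x ∈ Icc s t := Ioo_subset_Icc_self hx
      rw [(show HasDerivAt (fun x => Q x - P x) (Q' x - P' x) x from (hQ x hx').sub (hP x hx')).deriv]
      linarith [h x hx]
  have h2 := hm (left_mem_Icc.mpr hst) (right_mem_Icc.mpr hst) hst
  dsimp only at h2
  linarith

set_option maxHeartbeats 1000000 in
/-- for `β ∈ (0,1]` and a solution of `f''' + f f'' + β f'(f'-1) = 0`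
on `[t₀,∞)` with `0 < f'(t₀) < 1` and `0 ≤ f''(t₀) ≤ f(t₀)(1 - f'(t₀))`,
one has `f'' > 0` on `(t₀,∞)`, `f'(t₀) < f' < 1` on `(t₀,∞)` and `f' → 1`. -/
theorem stmt7 (β t₀ : ℝ) (hβ1 : 0 < β) (hβ2 : β ≤ 1) (f : ℝ → ℝ)
    (hf : ContDiff ℝ 3 f)
    (heq : ∀ t ∈ Ici t₀, deriv (deriv (deriv f)) t + f t * deriv (deriv f) t
      + β * deriv f t * (deriv f t - 1) = 0)
    (h1 : 0 < deriv f t₀) (h2 : deriv f t₀ < 1)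
    (h3 : 0 ≤ deriv (deriv f) t₀)
    (h4 : deriv (deriv f) t₀ ≤ f t₀ * (1 - deriv f t₀)) :
    (∀ t ∈ Ioi t₀, 0 < deriv (deriv f) t) ∧
    (∀ t ∈ Ioi t₀, deriv f t₀ < deriv f t ∧ deriv f t < 1) ∧
    Tendsto (deriv f) atTop (𝓝 1) := by
  -- regularity
  have h3eq : (3 : WithTop ℕ∞) = 2 + 1 := by norm_num
  rw [h3eq, contDiff_succ_iff_deriv] at hf
  obtain ⟨hfd, -, hf2⟩ := hf
  have h2eq : (2 : WithTop ℕ∞) = 1 + 1 := by norm_num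
  rw [h2eq, contDiff_succ_iff_deriv] at hf2
  obtain ⟨hgd, -, hf1⟩ := hf2
  rw [contDiff_one_iff_deriv] at hf1
  obtain ⟨hvd, hv'c⟩ := hf1
  set g := deriv f with hg_def
  set v := deriv g with hv_def
  have hfc : Continuous f := hfd.continuous
  have hgc : Continuous g := hgd.continuous
  have hvc : Continuous v := hvd.continuous
  have hdf : ∀ t, HasDerivAt f (g t) t := fun t => (hfd t).hasDerivAt
  have hdg : ∀ t, HasDerivAt g (v t) t := fun t => (hgd t).hasDerivAt
  have hdv : ∀ t, HasDerivAt v (deriv v t) t := fun t => (hvd t).hasDerivAt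
  clear_value g v
  have heq' : ∀ t ∈ Ici t₀, deriv v t = -(f t * v t) + β * (g t * (1 - g t)) := by
    intro t ht
    have := heq t ht
    linear_combination this
  -- the integrating factor
  set F : ℝ → ℝ := fun t => ∫ s in t₀..t, f s with hF_def
  have hFd : ∀ t, HasDerivAt F (f t) t := fun t =>
    (hfc.integral_hasStrictDerivAt t₀ t).hasDerivAt
  have hF0 : F t₀ = 0 := intervalIntegral.integral_same
  clear_value F
  set w : ℝ → ℝ := fun t => v t * Real.exp (F t) with hw_def
  have hwdAt : ∀ t, HasDerivAt w (deriv v t * Real.exp (F t)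
      + v t * (Real.exp (F t) * f t)) t := fun t => (hdv t).mul ((hFd t).exp)
  have hw' : ∀ t ∈ Ici t₀, HasDerivAt w (β * (g t * (1 - g t)) * Real.exp (F t)) t := by
    intro t ht
    have h := hwdAt t
    rw [heq' t ht] at h
    convert h using 1
    ring
  have hwdiff : Differentiable ℝ w := fun t => (hwdAt t).differentiableAt
  have hw0 : w t₀ = v t₀ := by simp [hw_def, hF0]
  clear_value w
  -- the auxiliary function q = v - f (1 - g)
  set q : ℝ → ℝ := fun t => v t - f t * (1 - g t) with hq_def
  have hqdAt : ∀ t, HasDerivAt q (deriv v t - (g t * (1 - g t) + f t * (0 - v t))) t :=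
    fun t => (hdv t).sub ((hdf t).mul ((hasDerivAt_const t 1).sub (hdg t)))
  have hq' : ∀ t ∈ Ici t₀, HasDerivAt q ((β - 1) * (g t * (1 - g t))) t := by
    intro t ht
    have h := hqdAt t
    rw [heq' t ht] at h
    convert h using 1
    ring
  have hqdiff : Differentiable ℝ q := fun t => (hqdAt t).differentiableAt
  clear_value q
  -- key monotonicity block
  have key : ∀ b, t₀ < b → (∀ s ∈ Ico t₀ b, 0 < g s ∧ g s < 1) →
      (∀ t ∈ Ioc t₀ b, 0 < v t) ∧ (∀ t ∈ Ioc t₀ b, g t₀ < g t) := by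
    intro b hb hio
    have hwm : StrictMonoOn w (Icc t₀ b) := by
      apply strictMonoOn_of_deriv_pos (convex_Icc _ _) hwdiff.continuous.continuousOn
      intro x hx
      rw [interior_Icc] at hx
      have hx' := hio x ⟨hx.1.le, hx.2⟩
      rw [(hw' x hx.1.le).deriv]
      have hgx1 : 0 < 1 - g x := by linarith [hx'.2]
      exact mul_pos (mul_pos hβ1 (mul_pos hx'.1 hgx1)) (Real.exp_pos _)
    have hv_pos : ∀ t ∈ Ioc t₀ b, 0 < v t := by
      intro t ht
      have h5 : w t₀ < w t := hwm (left_mem_Icc.mpr hb.le) ⟨ht.1.le, ht.2⟩ ht.1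
      rw [hw0] at h5
      have hwt : 0 < w t := lt_of_le_of_lt h3 h5
      rw [hw_def] at hwt
      dsimp only at hwt
      have hexp := Real.exp_pos (F t)
      by_contra hle
      push_neg at hle
      nlinarith [mul_nonneg (neg_nonneg.mpr hle) hexp.le]
    refine ⟨hv_pos, ?_⟩
    have hgm : StrictMonoOn g (Icc t₀ b) := by
      apply strictMonoOn_of_deriv_pos (convex_Icc _ _) hgc.continuousOn
      intro x hx
      rw [interior_Icc] at hx
      rw [(hdg x).deriv]
      exact hv_pos x ⟨hx.1, hx.2.le⟩
    intro t ht
    exact hgm (left_mem_Icc.mpr hb.le) ⟨ht.1.le, ht.2⟩ ht.1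
  -- Key 1 : g stays in (0,1)
  have hin : ∀ t ∈ Ici t₀, 0 < g t ∧ g t < 1 := by
    by_contra hcon
    push_neg at hcon
    obtain ⟨x, hx, hx2⟩ := hcon
    set B := {t | t ∈ Ici t₀ ∧ (g t ≤ 0 ∨ 1 ≤ g t)} with hB_def
    have hBne : B.Nonempty := by
      refine ⟨x, hx, ?_⟩
      rcases le_or_gt (g x) 0 with h | h
      · exact Or.inl h
      · exact Or.inr (hx2 h)
    have hBclosed : IsClosed B := by
      have : B = Ici t₀ ∩ g ⁻¹' (Iic 0 ∪ Ici 1) := by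
        ext y
        simp only [hB_def, mem_setOf_eq, mem_inter_iff, mem_preimage, mem_union, mem_Iic, mem_Ici]
      rw [this]
      exact isClosed_Ici.inter ((isClosed_Iic.union isClosed_Ici).preimage hgc)
    have hBbdd : BddBelow B := ⟨t₀, fun y hy => hy.1⟩
    set t₁ := sInf B with ht₁_def
    have ht₁B : t₁ ∈ B := hBclosed.csInf_mem hBne hBbdd
    have ht₁0 : t₀ ≤ t₁ := ht₁B.1
    have ht₁ne : t₀ < t₁ := by
      rcases eq_or_lt_of_le ht₁0 with h | h
      · exfalso
        rcases ht₁B.2 with h' | h' <;> rw [← h] at h' <;> linarith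
      · exact h
    have hIco : ∀ s ∈ Ico t₀ t₁, 0 < g s ∧ g s < 1 := by
      intro s hs
      have hsB : s ∉ B := fun hsB => absurd (csInf_le hBbdd hsB) (not_le.mpr hs.2)
      constructor
      · by_contra hle
        exact hsB ⟨hs.1, Or.inl (le_of_not_gt hle)⟩
      · by_contra hle
        exact hsB ⟨hs.1, Or.inr (le_of_not_gt hle)⟩
    obtain ⟨hvpos, hgmono⟩ := key t₁ ht₁ne hIco
    have hvt₁ : 0 < v t₁ := hvpos t₁ ⟨ht₁ne, le_refl _⟩
    have hg1 : g t₁ = 1 := by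
      have hle : g t₁ ≤ 1 := by
        have htend : Tendsto g (𝓝[<] t₁) (𝓝 (g t₁)) :=
          (hgc.continuousAt).continuousWithinAt.tendsto
        apply le_of_tendsto htend
        filter_upwards [Ioo_mem_nhdsLT_of_mem (right_mem_Ioc.mpr ht₁ne)] with s hs
        exact (hIco s ⟨hs.1.le, hs.2⟩).2.le
      have hge : 1 ≤ g t₁ := by
        rcases ht₁B.2 with h | h
        · exfalso
          have := hgmono t₁ ⟨ht₁ne, le_refl _⟩
          linarith
        · exact h
      linarith
    have hqa : AntitoneOn q (Icc t₀ t₁) := by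
      apply antitoneOn_of_deriv_nonpos (convex_Icc _ _) hqdiff.continuous.continuousOn
        hqdiff.differentiableOn
      intro y hy
      rw [interior_Icc] at hy
      rw [(hq' y hy.1.le).deriv]
      have hy' := hIco y ⟨hy.1.le, hy.2⟩
      nlinarith [mul_nonneg (by linarith : (0:ℝ) ≤ 1 - β)
        (mul_nonneg hy'.1.le (by linarith [hy'.2] : (0:ℝ) ≤ 1 - g y))]
    have hq10 : q t₁ ≤ q t₀ := hqa (left_mem_Icc.mpr ht₁0) (right_mem_Icc.mpr ht₁0) ht₁0
    have hqt₀ : q t₀ ≤ 0 := by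
      simp only [hq_def]
      linarith
    have hqt₁ : q t₁ = v t₁ := by
      simp [hq_def, hg1]
    linarith
  have hvpos : ∀ t ∈ Ioi t₀, 0 < v t := fun t ht =>
    (key t ht fun s hs => hin s hs.1).1 t ⟨ht, le_refl _⟩
  have hgup : ∀ t ∈ Ioi t₀, g t₀ < g t := fun t ht =>
    (key t ht fun s hs => hin s hs.1).2 t ⟨ht, le_refl _⟩
  refine ⟨hvpos, fun t ht => ⟨hgup t ht, (hin t (mem_Ici.mpr (le_of_lt ht))).2⟩, ?_⟩
  -- the limit
  have hgMono : MonotoneOn g (Ici t₀) := by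
    apply monotoneOn_of_deriv_nonneg (convex_Ici _) hgc.continuousOn hgd.differentiableOn
    intro y hy
    rw [interior_Ici] at hy
    rw [(hdg y).deriv]
    exact (hvpos y hy).le
  have hfMono : MonotoneOn f (Ici t₀) := by
    apply monotoneOn_of_deriv_nonneg (convex_Ici _) hfc.continuousOn hfd.differentiableOn
    intro y hy
    rw [interior_Ici] at hy
    rw [(hdf y).deriv]
    exact (hin y (mem_Ici.mpr (le_of_lt hy))).1.le
  have hmain : ∀ ε : ℝ, 0 < ε → ∃ T, t₀ ≤ T ∧ 1 - ε < g T := by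
    intro ε hε
    by_contra hcon
    push_neg at hcon
    set L := 1 - ε with hL_def
    set g0 := g t₀ with hg0_def
    clear_value L g0
    have hgl : ∀ t, t₀ ≤ t → g0 ≤ g t := fun t ht => by
      rw [hg0_def]; exact hgMono self_mem_Ici ht ht
    have hgu : ∀ t, t₀ ≤ t → g t ≤ L := fun t ht => hcon t ht
    set δ := β * (g0 * (1 - L)) with hδ_def
    have h1L : 1 - L = ε := by rw [hL_def]; ring
    clear_value δ
    have hδpos : 0 < δ := by
      rw [hδ_def]
      apply mul_pos hβ1
      apply mul_pos h1
      rw [h1L]; exact hε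
    -- linear bounds for f
    have hA : ∀ t, t₀ ≤ t → f t₀ + g0 * (t - t₀) ≤ f t := by
      intro t ht
      have := mono_cmp (P := fun u => f t₀ + g0 * (u - t₀)) (Q := f)
        (P' := fun _ => g0) (Q' := g)
        (fun y _ => by
          simpa using (((hasDerivAt_id y).sub_const t₀).const_mul g0).const_add (f t₀))
        (fun y _ => hdf y) ht
        (fun y hy => hgl y hy.1.le)
      simp only [sub_self, mul_zero, add_zero] at this
      linarith
    have hB : ∀ t, t₀ ≤ t → f t ≤ f t₀ + (t - t₀) := by
      intro t ht
      have := mono_cmp (P := f) (Q := fun u => f t₀ + 1 * (u - t₀))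
        (P' := g) (Q' := fun _ => (1 : ℝ))
        (fun y _ => hdf y)
        (fun y _ => by
          simpa using (((hasDerivAt_id y).sub_const t₀).const_mul 1).const_add (f t₀)) ht
        (fun y hy => (hin y hy.1.le).2.le)
      simp only [sub_self, mul_zero, add_zero] at this
      linarith
    -- lower bound on w via G
    set G : ℝ → ℝ := fun u => ∫ s in t₀..u, Real.exp (F s) with hG_def
    have hFdiff : Differentiable ℝ F := fun t => (hFd t).differentiableAt
    have hGd : ∀ u, HasDerivAt G (Real.exp (F u)) u := fun u =>
      ((Real.continuous_exp.comp hFdiff.continuous).integral_hasStrictDerivAt t₀ u).hasDerivAt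
    have hG0 : G t₀ = 0 := intervalIntegral.integral_same
    clear_value G
    have hC : ∀ t, t₀ ≤ t → δ * G t ≤ w t := by
      intro t ht
      have := mono_cmp (P := fun u => δ * G u) (Q := w)
        (P' := fun u => δ * Real.exp (F u)) (Q' := fun u => β * (g u * (1 - g u)) * Real.exp (F u))
        (fun y _ => (hGd y).const_mul δ)
        (fun y hy => hw' y hy.1) ht
        (fun y hy => by
          have e1 := hgl y hy.1.le
          have e2 := hgu y hy.1.le
          have e3 : 0 < g0 := h1
          have e4 : 0 ≤ 1 - L := by rw [h1L]; exact hε.le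
          have hgg : g0 * (1 - L) ≤ g y * (1 - g y) := by nlinarith
          rw [hδ_def]
          exact mul_le_mul_of_nonneg_right (mul_le_mul_of_nonneg_left hgg hβ1.le)
            (Real.exp_pos _).le)
      rw [hG0] at this
      simp only [mul_zero] at this
      linarith [h3, hw0, this]
    -- f t * G t ≥ exp (F t) - 1
    have hD : ∀ t, t₀ ≤ t → Real.exp (F t) - 1 ≤ f t * G t := by
      intro t ht
      have := mono_cmp (P := fun u => Real.exp (F u)) (Q := fun u => f t * G u)
        (P' := fun u => Real.exp (F u) * f u) (Q' := fun u => f t * Real.exp (F u))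
        (fun y _ => (hFd y).exp)
        (fun y _ => (hGd y).const_mul (f t)) ht
        (fun y hy => by
          have hfy : f y ≤ f t := hfMono (mem_Ici.mpr hy.1.le) (mem_Ici.mpr ht) hy.2.le
          nlinarith [mul_le_mul_of_nonneg_right hfy (Real.exp_pos (F y)).le])
      rw [hG0, hF0] at this
      simp only [Real.exp_zero, mul_zero] at this
      linarith
    -- thresholds
    set T₁ := max t₀ (t₀ + (1 - f t₀) / g0) with hT₁_def
    have ht₀T₁ : t₀ ≤ T₁ := le_max_left _ _
    clear_value T₁
    have hfT₁ : ∀ t, T₁ ≤ t → 1 ≤ f t := by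
      intro t ht
      have h5 := hA t (le_trans ht₀T₁ ht)
      have h6 : t₀ + (1 - f t₀) / g0 ≤ t :=
        le_trans (by rw [hT₁_def]; exact le_max_right _ _) ht
      have h7 : (1 - f t₀) / g0 ≤ t - t₀ := by linarith
      have h8 : 1 - f t₀ ≤ (t - t₀) * g0 := (div_le_iff₀ h1).mp h7
      nlinarith
    have hFlin : ∀ t, T₁ ≤ t → F T₁ + (t - T₁) ≤ F t := by
      intro t ht
      have := mono_cmp (P := fun u => F T₁ + 1 * (u - T₁)) (Q := F)
        (P' := fun _ => (1 : ℝ)) (Q' := f)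
        (fun y _ => by
          simpa using (((hasDerivAt_id y).sub_const T₁).const_mul 1).const_add (F T₁))
        (fun y _ => hFd y) ht
        (fun y hy => hfT₁ y hy.1.le)
      simp only [sub_self, mul_zero, add_zero] at this
      linarith
    set T₂ := max T₁ (T₁ + (Real.log 2 - F T₁)) with hT₂_def
    have hT₁T₂ : T₁ ≤ T₂ := le_max_left _ _
    clear_value T₂
    have ht₀T₂ : t₀ ≤ T₂ := le_trans ht₀T₁ hT₁T₂
    have hFT₂ : ∀ t, T₂ ≤ t → Real.log 2 ≤ F t := by
      intro t ht
      have h5 := hFlin t (le_trans hT₁T₂ ht)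
      have h6 : T₁ + (Real.log 2 - F T₁) ≤ t :=
        le_trans (by rw [hT₂_def]; exact le_max_right _ _) ht
      linarith
    -- lower bound on v
    set c := f t₀ - t₀ with hc_def
    clear_value c
    have hcub : ∀ t, T₂ ≤ t → f t ≤ c + t := by
      intro t ht
      have := hB t (le_trans ht₀T₂ ht)
      rw [hc_def]; linarith
    have hv_lb : ∀ t, T₂ ≤ t → δ / 2 ≤ v t * (c + t) := by
      intro t ht
      have ht₀t : t₀ ≤ t := le_trans ht₀T₂ ht
      have h1f : (1:ℝ) ≤ f t := hfT₁ t (le_trans hT₁T₂ ht)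
      have hft_ub : f t ≤ c + t := hcub t ht
      have hexp2 : (2:ℝ) ≤ Real.exp (F t) := by
        calc (2:ℝ) = Real.exp (Real.log 2) := (Real.exp_log two_pos).symm
        _ ≤ Real.exp (F t) := Real.exp_le_exp.mpr (hFT₂ t ht)
      set E := Real.exp (F t) with hE_def
      have hEpos : 0 < E := Real.exp_pos (F t)
      clear_value E
      have hwt : δ * G t ≤ w t := hC t ht₀t
      have hGt : E - 1 ≤ f t * G t := by rw [hE_def]; exact hD t ht₀t
      have s1 : δ * (E - 1) ≤ δ * (f t * G t) := mul_le_mul_of_nonneg_left hGt hδpos.le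
      have s3 : f t * (δ * G t) ≤ f t * w t :=
        mul_le_mul_of_nonneg_left hwt (by linarith : (0:ℝ) ≤ f t)
      have s4 : w t = v t * E := by rw [hw_def, hE_def]
      have s5 : δ * (E - 1) ≤ f t * (v t * E) := by
        calc δ * (E - 1) ≤ δ * (f t * G t) := s1
          _ = f t * (δ * G t) := by ring
          _ ≤ f t * w t := s3
          _ = f t * (v t * E) := by rw [s4]
      have s6 : δ / 2 * E ≤ δ * (E - 1) := by
        nlinarith [mul_nonneg hδpos.le (by linarith : (0:ℝ) ≤ E - 2)]
      have s7 : δ / 2 * E ≤ (f t * v t) * E := by nlinarith [s5, s6]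
      have s8 : δ / 2 ≤ f t * v t := le_of_mul_le_mul_right (by linarith) hEpos
      have hvt : 0 < v t := by
        rcases eq_or_lt_of_le ht₀t with h | h
        · have hv0 : 0 ≤ v t := h ▸ h3
          nlinarith [s8, hv0, h1f]
        · exact hvpos t h
      nlinarith [s8]
    -- comparison with the logarithm
    have hc1 : ∀ t, T₂ ≤ t → 1 ≤ c + t := fun t ht =>
      le_trans (hfT₁ t (le_trans hT₁T₂ ht)) (hcub t ht)
    have hglog : ∀ t, T₂ ≤ t →
        g T₂ + δ / 2 * (Real.log (c + t) - Real.log (c + T₂)) ≤ g t := by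
      intro t ht
      have := mono_cmp (P := fun u => δ / 2 * Real.log (c + u)) (Q := g)
        (P' := fun u => δ / 2 * ((c + u)⁻¹)) (Q' := v)
        (fun y hy => by
          have hcy : 1 ≤ c + y := hc1 y hy.1
          have hlog : HasDerivAt (fun u : ℝ => Real.log (c + u)) (1 / (c + y)) y := by
            have hid : HasDerivAt (fun u : ℝ => c + u) 1 y := (hasDerivAt_id y).const_add c
            have := hid.log (by linarith : c + y ≠ 0)
            simpa using this
          have h2' := HasDerivAt.const_mul (δ / 2) hlog
          rw [one_div] at h2'
          exact h2')
        (fun y _ => hdg y) ht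
        (fun y hy => by
          have hcy : 1 ≤ c + y := hc1 y hy.1.le
          have hvb := hv_lb y hy.1.le
          have hcy0 : 0 < c + y := by linarith
          have heqd : δ / 2 * (c + y)⁻¹ = δ / 2 / (c + y) := by ring
          rw [heqd, div_le_iff₀ hcy0]
          linarith [hvb])
      linarith
    -- contradiction : g would exceed 1
    have hlogtop : Tendsto (fun t => Real.log (c + t)) atTop atTop :=
      Real.tendsto_log_atTop.comp (tendsto_atTop_add_const_left _ c tendsto_id)
    have hev : ∀ᶠ t in atTop, (1 - g T₂) / (δ / 2) + Real.log (c + T₂) ≤ Real.log (c + t) :=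
      hlogtop.eventually_ge_atTop _
    obtain ⟨t, ht1, ht2⟩ := (hev.and (eventually_ge_atTop T₂)).exists
    have hgt : 1 ≤ g t := by
      have h5 := hglog t ht2
      have h6 : (1 - g T₂) ≤ δ / 2 * (Real.log (c + t) - Real.log (c + T₂)) := by
        have hδ2 : 0 < δ / 2 := by linarith
        have := (div_le_iff₀ hδ2).mp (by linarith : (1 - g T₂) / (δ / 2) ≤
          Real.log (c + t) - Real.log (c + T₂))
        linarith [this]
      linarith
    have := (hin t (le_trans ht₀T₂ ht2)).2
    linarith
  rw [Metric.tendsto_atTop]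
  intro ε hε
  obtain ⟨T, hT, hgT⟩ := hmain ε hε
  refine ⟨T, fun t ht => ?_⟩
  have h5 : g T ≤ g t := hgMono (mem_Ici.mpr hT) (mem_Ici.mpr (le_trans hT ht)) ht
  have h6 : g t < 1 := (hin t (le_trans hT ht)).2
  rw [Real.dist_eq, abs_of_neg (by linarith : g t - 1 < 0)]
  linarith
end

section
/- Let β ∈ (0,1] and let f be a solution of the equation f''' + f·f'' + β·f'·(f'−1) = 0 on the interval [t₀, +∞) such that f'(t₀) > 1 and f(t₀)·(1 − f'(t₀)) ≤ f''(t₀) ≤ 0. Then f'' < 0 on (t₀, +∞), 1 < f'(t) < f'(t₀) for all t > t₀, and f'(t) → 1 as t → +∞. -/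
open Set Filter Topology

set_option maxHeartbeats 1000000 in
/-- for `β ∈ (0,1]` and a solution of `f''' + f f'' + β f'(f'-1) = 0`
on `[t₀,∞)` with `f'(t₀) > 1` and `f(t₀)(1 - f'(t₀)) ≤ f''(t₀) ≤ 0`,
one has `f'' < 0` on `(t₀,∞)`, `1 < f' < f'(t₀)` on `(t₀,∞)` and `f' → 1`. -/
theorem stmt8 (β t₀ : ℝ) (hβ1 : 0 < β) (hβ2 : β ≤ 1) (f : ℝ → ℝ)
    (hf : ContDiff ℝ 3 f)
    (heq : ∀ t ∈ Ici t₀, deriv (deriv (deriv f)) t + f t * deriv (deriv f) t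
      + β * deriv f t * (deriv f t - 1) = 0)
    (h1 : 1 < deriv f t₀)
    (h2 : f t₀ * (1 - deriv f t₀) ≤ deriv (deriv f) t₀)
    (h3 : deriv (deriv f) t₀ ≤ 0) :
    (∀ t ∈ Ioi t₀, deriv (deriv f) t < 0) ∧
    (∀ t ∈ Ioi t₀, 1 < deriv f t ∧ deriv f t < deriv f t₀) ∧
    Tendsto (deriv f) atTop (𝓝 1) := by
  -- Smoothness bookkeeping
  have h0 : ContDiff ℝ ((2:ℕ)+1) f := by exact_mod_cast hf
  have hC1 : ContDiff ℝ 2 (deriv f) := (contDiff_succ_iff_deriv.mp h0).2.2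
  have hC1' : ContDiff ℝ ((1:ℕ)+1) (deriv f) := by exact_mod_cast hC1
  have hC2 : ContDiff ℝ 1 (deriv (deriv f)) := (contDiff_succ_iff_deriv.mp hC1').2.2
  have hC2' : ContDiff ℝ ((0:ℕ)+1) (deriv (deriv f)) := by exact_mod_cast hC2
  have hC3 : ContDiff ℝ 0 (deriv (deriv (deriv f))) := (contDiff_succ_iff_deriv.mp hC2').2.2
  set u := deriv f with hu_def
  set v := deriv u with hv_def
  have hdf : Differentiable ℝ f := hf.differentiable (by norm_num)
  have hdu : Differentiable ℝ u := hC1.differentiable (by norm_num)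
  have hdv : Differentiable ℝ v := hC2.differentiable (by norm_num)
  have hcf : Continuous f := hdf.continuous
  have hcu : Continuous u := hdu.continuous
  have hcv : Continuous v := hdv.continuous
  have hcdv : Continuous (deriv v) := hC3.continuous
  have hfu : ∀ t, HasDerivAt f (u t) t := fun t => (hdf t).hasDerivAt
  have huv : ∀ t, HasDerivAt u (v t) t := fun t => (hdu t).hasDerivAt
  have hvv : ∀ t, HasDerivAt v (deriv v t) t := fun t => (hdv t).hasDerivAt
  have hode : ∀ t ∈ Ici t₀, deriv v t = -(f t * v t) - β * u t * (u t - 1) := by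
    intro t ht; have := heq t ht; linarith
  -- Integrating factor
  set F : ℝ → ℝ := fun x => ∫ s in t₀..x, f s with hF_def
  have hF : ∀ t, HasDerivAt F (f t) t := fun t =>
    intervalIntegral.integral_hasDerivAt_right (hcf.intervalIntegrable _ _)
      hcf.stronglyMeasurable.stronglyMeasurableAtFilter hcf.continuousAt
  have hdF : Differentiable ℝ F := fun t => (hF t).differentiableAt
  have hcF : Continuous F := hdF.continuous
  set φ : ℝ → ℝ := fun t => v t * Real.exp (F t) with hφ_def
  have hφd : ∀ t, HasDerivAt φ ((deriv v t + f t * v t) * Real.exp (F t)) t := by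
    intro t
    have h := (hvv t).mul ((hF t).exp)
    exact h.congr_deriv (by ring)
  have hcφ : Continuous φ := hcv.mul (Real.continuous_exp.comp hcF)
  -- Lemma A : the integrating-factor expression is strictly decreasing while u > 1
  have lemA : ∀ b, t₀ < b → (∀ s ∈ Ico t₀ b, 1 < u s) → StrictAntiOn φ (Icc t₀ b) := by
    intro b hb hu1
    apply strictAntiOn_of_deriv_neg (convex_Icc _ _) hcφ.continuousOn
    intro x hx
    rw [interior_Icc] at hx
    have hx0 : t₀ ≤ x := hx.1.le
    rw [(hφd x).deriv, hode x hx0]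
    have h1x : 1 < u x := hu1 x ⟨hx0, hx.2⟩
    have he : (0:ℝ) < Real.exp (F x) := Real.exp_pos _
    have hb' : -(f x * v x) - β * u x * (u x - 1) + f x * v x = -(β * u x * (u x - 1)) := by
      ring
    rw [hb']
    have hp : 0 < β * u x * (u x - 1) :=
      mul_pos (mul_pos hβ1 (by linarith)) (by linarith)
    exact mul_neg_of_neg_of_pos (by linarith) he
  have negφ : ∀ b, t₀ < b → (∀ s ∈ Ico t₀ b, 1 < u s) → v b < 0 := by
    intro b hb hu1
    have h := lemA b hb hu1 (left_mem_Icc.2 hb.le) (right_mem_Icc.2 hb.le) hb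
    have he0 : (0:ℝ) < Real.exp (F t₀) := Real.exp_pos _
    have heb : (0:ℝ) < Real.exp (F b) := Real.exp_pos _
    have hφt₀ : φ t₀ ≤ 0 := mul_nonpos_of_nonpos_of_nonneg h3 he0.le
    have hb0 : v b * Real.exp (F b) < 0 := lt_of_lt_of_le h hφt₀
    nlinarith
  -- Lemma B : g = v + f (u-1) is nondecreasing while u ≥ 1
  set g : ℝ → ℝ := fun t => v t + f t * (u t - 1) with hg_def
  have hgd : ∀ t, HasDerivAt g (deriv v t + (u t * (u t - 1) + f t * v t)) t := by
    intro t
    exact (hvv t).add ((hfu t).mul ((huv t).sub_const 1))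
  have hcg : Continuous g := hcv.add (hcf.mul (hcu.sub continuous_const))
  have hdg : Differentiable ℝ g := fun t => (hgd t).differentiableAt
  have gmono : ∀ b, t₀ < b → (∀ s ∈ Icc t₀ b, 1 ≤ u s) → g t₀ ≤ g b := by
    intro b hb h1b
    have hm : MonotoneOn g (Icc t₀ b) := by
      apply monotoneOn_of_deriv_nonneg (convex_Icc _ _) hcg.continuousOn
        hdg.differentiableOn
      intro x hx
      rw [interior_Icc] at hx
      rw [(hgd x).deriv, hode x hx.1.le]
      have hux : 1 ≤ u x := h1b x ⟨hx.1.le, hx.2.le⟩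
      nlinarith [mul_nonneg (mul_nonneg (by linarith : (0:ℝ) ≤ 1 - β)
        (by linarith : (0:ℝ) ≤ u x)) (by linarith : (0:ℝ) ≤ u x - 1)]
    exact hm (left_mem_Icc.2 hb.le) (right_mem_Icc.2 hb.le) hb.le
  have hg0 : 0 ≤ g t₀ := by
    have : g t₀ = v t₀ + f t₀ * (u t₀ - 1) := rfl
    nlinarith [h2]
  -- Claim 1 : u > 1 on (t₀, ∞)
  have claim1 : ∀ t ∈ Ioi t₀, 1 < u t := by
    intro t1 ht1
    by_contra hle
    push_neg at hle
    set S : Set ℝ := Icc t₀ t1 ∩ u ⁻¹' (Iic 1) with hS_def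
    have hSne : S.Nonempty := ⟨t1, ⟨le_of_lt ht1, le_rfl⟩, hle⟩
    have hScl : IsClosed S := isClosed_Icc.inter (isClosed_Iic.preimage hcu)
    have hSbd : BddBelow S := ⟨t₀, fun x hx => hx.1.1⟩
    set s := sInf S with hs_def
    have hsS : s ∈ S := hScl.csInf_mem hSne hSbd
    have hst₀ : t₀ < s := by
      rcases lt_or_eq_of_le hsS.1.1 with h | h
      · exact h
      · exfalso; have hu1s : u s ≤ 1 := hsS.2; rw [← h] at hu1s; linarith
    have hIco : ∀ r ∈ Ico t₀ s, 1 < u r := by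
      intro r hr
      by_contra h
      push_neg at h
      have hrS : r ∈ S := ⟨⟨hr.1, hr.2.le.trans hsS.1.2⟩, h⟩
      exact absurd (csInf_le hSbd hrS) (not_le.2 hr.2)
    have hus : u s = 1 := by
      refine le_antisymm hsS.2 ?_
      have hne : (𝓝[Ico t₀ s] s).NeBot := by
        apply mem_closure_iff_nhdsWithin_neBot.mp
        rw [closure_Ico (ne_of_lt hst₀)]
        exact right_mem_Icc.2 hst₀.le
      exact ge_of_tendsto (hcu.continuousAt.continuousWithinAt)
        (eventually_nhdsWithin_of_forall (fun r hr => (hIco r hr).le))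
    have hvs : v s < 0 := negφ s hst₀ hIco
    have hIcc : ∀ r ∈ Icc t₀ s, 1 ≤ u r := by
      intro r hr
      rcases lt_or_eq_of_le hr.2 with h | h
      · exact (hIco r ⟨hr.1, h⟩).le
      · rw [h, hus]
    have hgm := gmono s hst₀ hIcc
    have hgs : g s = v s := by simp [hg_def, hus]
    linarith
  -- Claim 2 : v < 0 on (t₀, ∞)
  have claim2 : ∀ t ∈ Ioi t₀, v t < 0 := by
    intro t ht
    refine negφ t ht ?_
    intro s hs
    rcases eq_or_lt_of_le hs.1 with h | h
    · rwa [← h]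
    · exact claim1 s h
  -- u strictly decreasing on [t₀, ∞)
  have uanti : StrictAntiOn u (Ici t₀) := by
    apply strictAntiOn_of_deriv_neg (convex_Ici _) hcu.continuousOn
    intro x hx
    rw [interior_Ici] at hx
    show deriv u x < 0
    rw [← hv_def]
    exact claim2 x hx
  have upper : ∀ t ∈ Ioi t₀, u t < u t₀ := fun t ht =>
    uanti self_mem_Ici (mem_Ici.2 (le_of_lt ht)) ht
  have hugeL : ∀ t, t₀ ≤ t → 1 ≤ u t := by
    intro t ht
    rcases eq_or_lt_of_le ht with h | h
    · rw [← h]; exact h1.le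
    · exact (claim1 t h).le
  -- the limit L
  set w : ℝ → ℝ := fun t => u (max t t₀) with hw_def
  have huAnti : AntitoneOn u (Ici t₀) := uanti.antitoneOn
  have hwanti : Antitone w := by
    intro a b hab
    exact huAnti (le_max_right a t₀) (le_max_right b t₀) (max_le_max hab le_rfl)
  have hbdd : BddBelow (range w) := ⟨1, by rintro _ ⟨t, rfl⟩; exact hugeL _ (le_max_right _ _)⟩
  set L := ⨅ t, w t with hL_def
  have hwt : Tendsto w atTop (𝓝 L) := tendsto_atTop_ciInf hwanti hbdd
  have huw : u =ᶠ[atTop] w := by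
    filter_upwards [eventually_ge_atTop t₀] with t ht
    simp [hw_def, max_eq_left ht]
  have hut : Tendsto u atTop (𝓝 L) := hwt.congr' huw.symm
  have hL1 : 1 ≤ L := le_ciInf fun t => hugeL _ (le_max_right _ _)
  have hLle : ∀ t, t₀ ≤ t → L ≤ u t := by
    intro t ht
    have h := ciInf_le hbdd t
    simpa [hw_def, max_eq_left ht] using h
  -- growth of f
  have hfgrow : ∀ t, t₀ ≤ t → f t₀ + (t - t₀) ≤ f t := by
    have hmono : MonotoneOn (fun t => f t - t) (Ici t₀) := by
      apply monotoneOn_of_deriv_nonneg (convex_Ici _) ((hcf.sub continuous_id).continuousOn)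
        ((hdf.sub differentiable_id).differentiableOn)
      intro x hx
      rw [interior_Ici] at hx
      rw [((hfu x).sub (hasDerivAt_id x)).deriv]
      have := claim1 x hx
      linarith
    intro t ht
    have h' : f t₀ - t₀ ≤ f t - t := hmono self_mem_Ici ht ht
    linarith
  have fmono : MonotoneOn f (Ici t₀) := by
    apply monotoneOn_of_deriv_nonneg (convex_Ici _) hcf.continuousOn hdf.differentiableOn
    intro x hx
    rw [interior_Ici] at hx
    rw [(hfu x).deriv]
    have := claim1 x hx
    linarith
  -- main limit : L = 1
  have hLeq : L = 1 := by
    refine le_antisymm ?_ hL1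
    by_contra hL
    push_neg at hL
    set c := L * (L - 1) with hc_def
    have hc : 0 < c := by rw [hc_def]; nlinarith
    have hβc : 0 < β * c := by positivity
    set ε := min 1 (β * c / (2 * (L + 1))) with hε_def
    have hε0 : 0 < ε := lt_min one_pos (div_pos hβc (by linarith))
    have he2 : ε ≤ β * c / (2 * (L + 1)) := min_le_right _ _
    set M := L + ε with hM_def
    have hM1 : M ≤ L + 1 := by rw [hM_def]; linarith [min_le_left 1 (β * c / (2 * (L + 1)))]
    clear_value M ε c
    have hεM : ε * M ≤ β * c / 2 := by
      have e3 : ε * (2 * (L + 1)) ≤ β * c :=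
        (le_div_iff₀ (by linarith : (0:ℝ) < 2 * (L + 1))).mp he2
      have e4 : ε * M ≤ ε * (L + 1) := mul_le_mul_of_nonneg_left hM1 hε0.le
      linarith
    -- choose T
    set T₀ := t₀ + 1 + |f t₀| with hT₀_def
    have hT₀t₀ : t₀ ≤ T₀ := by
      rw [hT₀_def]; have := abs_nonneg (f t₀); linarith
    have hfT₀ : 1 ≤ f T₀ := by
      have hg1 := hfgrow T₀ hT₀t₀
      have hg2 := neg_abs_le (f t₀)
      rw [hT₀_def] at hg1 ⊢
      linarith
    have hev : ∀ᶠ t in atTop, u t < M := hut.eventually_lt_const (by rw [hM_def]; linarith)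
    obtain ⟨T₁, hT₁⟩ := eventually_atTop.mp hev
    set T := max T₀ T₁ with hT_def
    have hTt₀ : t₀ ≤ T := hT₀t₀.trans (le_max_left _ _)
    have hfT : ∀ t, T ≤ t → 0 ≤ f t := by
      intro t ht
      have := fmono (hT₀t₀ : T₀ ∈ Ici t₀) (hTt₀.trans ht : t ∈ Ici t₀)
        ((le_max_left _ _).trans ht)
      linarith
    have huM : ∀ t, T ≤ t → u t ≤ M := fun t ht => (hT₁ t ((le_max_right _ _).trans ht)).le
    have huL : ∀ t, T ≤ t → L ≤ u t := fun t ht => hLle t (hTt₀.trans ht)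
    -- key integral identity
    have key : ∀ t, T ≤ t → v t + f t * u t - (v T + f T * u T)
        = ∫ s in T..t, (u s * u s - β * u s * (u s - 1)) := by
      intro t ht
      have e1 : (∫ s in T..t, (deriv v s + (u s * u s + f s * v s)))
          = (v t + f t * u t) - (v T + f T * u T) := by
        apply intervalIntegral.integral_eq_sub_of_hasDerivAt
        · intro x _
          exact (hvv x).add ((hfu x).mul (huv x))
        · exact (hcdv.add ((hcu.mul hcu).add (hcf.mul hcv))).intervalIntegrable _ _
      rw [← e1]
      apply intervalIntegral.integral_congr
      intro s hs
      rw [uIcc_of_le ht] at hs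
      have hs0 : t₀ ≤ s := hTt₀.trans hs.1
      show deriv v s + (u s * u s + f s * v s) = u s * u s - β * u s * (u s - 1)
      rw [hode s hs0]
      ring
    -- bound the integral
    have ibound : ∀ t, T ≤ t → (∫ s in T..t, (u s * u s - β * u s * (u s - 1)))
        ≤ M * (f t - f T) - β * c * (t - T) := by
      intro t ht
      have m1 : (∫ s in T..t, (u s * u s - β * u s * (u s - 1)))
          ≤ ∫ s in T..t, (M * u s - β * c) := by
        apply intervalIntegral.integral_mono_on ht
          (((hcu.mul hcu).sub ((continuous_const.mul hcu).mul
            (hcu.sub continuous_const))).intervalIntegrable _ _)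
          (((continuous_const.mul hcu).sub continuous_const).intervalIntegrable _ _)
        intro s hs
        have hMs : u s ≤ M := huM s hs.1
        have hLs : L ≤ u s := huL s hs.1
        show u s * u s - β * u s * (u s - 1) ≤ M * u s - β * c
        have hcc : c ≤ u s * (u s - 1) := by rw [hc_def]; nlinarith
        have hq1 : 0 ≤ (M - u s) * u s := mul_nonneg (by linarith) (by linarith)
        nlinarith [mul_le_mul_of_nonneg_left hcc hβ1.le]
      have hfint : (∫ s in T..t, u s) = f t - f T := by
        apply intervalIntegral.integral_eq_sub_of_hasDerivAt
        · intro x _; exact hfu x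
        · exact hcu.intervalIntegrable _ _
      have m2 : (∫ s in T..t, (M * u s - β * c)) = M * (f t - f T) - β * c * (t - T) := by
        rw [intervalIntegral.integral_sub (f := fun s => M * u s) (g := fun _ => β * c) ((continuous_const.mul hcu).intervalIntegrable _ _)
          ((continuous_const).intervalIntegrable _ _),
          intervalIntegral.integral_const_mul, hfint, intervalIntegral.integral_const,
          smul_eq_mul]
        ring
      rw [m2] at m1
      exact m1
    -- bound on f
    have fbound : ∀ t, T ≤ t → f t ≤ f T + M * (t - T) := by
      intro t ht
      have hmono : MonotoneOn (fun t => M * t - f t) (Ici T) := by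
        apply monotoneOn_of_deriv_nonneg (convex_Ici _)
          ((continuous_const.mul continuous_id).sub hcf).continuousOn
          (((differentiable_const M).mul differentiable_id).sub hdf).differentiableOn
        intro x hx
        rw [interior_Ici] at hx
        show 0 ≤ deriv ((fun y => M * id y) - f) x
        rw [(((hasDerivAt_id x).const_mul M).sub (hfu x)).deriv]
        have := huM x hx.le
        linarith
      have h' : M * T - f T ≤ M * t - f t := hmono self_mem_Ici ht ht
      linarith
    -- v decays linearly
    have vbound : ∀ t, T ≤ t → v t ≤ (v T + ε * f T) - (β * c / 2) * (t - T) := by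
      intro t ht
      have hkey := key t ht
      have hib := ibound t ht
      have hft : 0 ≤ f t := hfT t ht
      have hfT0 : 0 ≤ f T := hfT T le_rfl
      have hMt : u t ≤ M := huM t ht
      have hLt : L ≤ u t := huL t ht
      have hMT : u T ≤ M := huM T le_rfl
      have hfb := fbound t ht
      have htT : (0:ℝ) ≤ t - T := by linarith
      have step1 : v t ≤ v T + (M - u t) * f t + (u T - M) * f T - β * c * (t - T) := by
        nlinarith [hkey, hib]
      have hMε : M - u t ≤ ε := by rw [hM_def]; linarith
      have step2 : (M - u t) * f t ≤ ε * f t :=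
        mul_le_mul_of_nonneg_right hMε hft
      have step3 : (u T - M) * f T ≤ 0 :=
        mul_nonpos_of_nonpos_of_nonneg (by linarith) hfT0
      have step4 : ε * f t ≤ ε * (f T + M * (t - T)) :=
        mul_le_mul_of_nonneg_left hfb hε0.le
      have step5 : ε * M * (t - T) - β * c * (t - T) ≤ -(β * c / 2) * (t - T) := by
        nlinarith [mul_nonneg (by linarith : (0:ℝ) ≤ β * c / 2 - ε * M) htT]
      linarith
    set C := v T + ε * f T with hC_def
    clear_value C
    set T' := max T (T + (C + 1) * (2 / (β * c))) with hT'_def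
    have hT'T : T ≤ T' := le_max_left _ _
    have hT'2 : T + (C + 1) * (2 / (β * c)) ≤ T' := le_max_right _ _
    clear_value T'
    have hvneg : ∀ t, T' ≤ t → v t ≤ -1 := by
      intro t ht
      have htT : T ≤ t := hT'T.trans ht
      have hb := vbound t htT
      have h1t : (C + 1) * (2 / (β * c)) ≤ t - T := by
        have h := hT'2.trans ht
        linarith
      have h2t : C + 1 ≤ β * c / 2 * (t - T) := by
        have hmul := mul_le_mul_of_nonneg_right h1t (by positivity : (0:ℝ) ≤ β * c / 2)
        have heq2 : (C + 1) * (2 / (β * c)) * (β * c / 2) = C + 1 := by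
          field_simp
        rw [heq2] at hmul
        linarith
      linarith
    -- contradiction
    have hanti : AntitoneOn (fun t => u t + t) (Ici T') := by
      apply antitoneOn_of_deriv_nonpos (convex_Ici _) ((hcu.add continuous_id).continuousOn)
        ((hdu.add differentiable_id).differentiableOn)
      intro x hx
      rw [interior_Ici] at hx
      rw [((huv x).add (hasDerivAt_id x)).deriv]
      have hvx := hvneg x hx.le
      linarith
    have hT't₀ : t₀ ≤ T' := hTt₀.trans hT'T
    have huT' : 1 ≤ u T' := hugeL T' hT't₀
    have ht2 : T' ≤ T' + u T' := by linarith
    have hc2 : u (T' + u T') + (T' + u T') ≤ u T' + T' :=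
      hanti self_mem_Ici (ht2 : T' + u T' ∈ Ici T') ht2
    have hu2 : 1 ≤ u (T' + u T') := hugeL _ (hT't₀.trans ht2)
    linarith
  exact ⟨claim2, fun t ht => ⟨claim1 t ht, upper t ht⟩, hLeq ▸ hut⟩
end

section
/- Let β > 0, a ≥ 0 and b ≥ 1, and let f be a solution of the equation f''' + f·f'' + β·f'·(f'−1) = 0 on [0, +∞) with f(0) = a, f'(0) = b and f''(0) = c ≤ 0, such that f' > 0 on [0, +∞). Then f'(t) ≤ max{b, 3/2} for all t ≥ 0. -/
open Set Filter Topology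

/-- for `β > 0`, `a ≥ 0`, `b ≥ 1`, a solution of
`f''' + f f'' + β f'(f'-1) = 0` on `[0,∞)` with `f(0) = a`, `f'(0) = b`,
`f''(0) = c ≤ 0` and `f' > 0` on `[0,∞)` satisfies `f' ≤ max {b, 3/2}`. -/
theorem stmt9 (β a b c : ℝ) (hβ : 0 < β) (ha : 0 ≤ a) (hb : 1 ≤ b)
    (f : ℝ → ℝ) (hf : ContDiff ℝ 3 f)
    (heq : ∀ t ∈ Ici (0 : ℝ), deriv (deriv (deriv f)) t + f t * deriv (deriv f) t
      + β * deriv f t * (deriv f t - 1) = 0)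
    (h0 : f 0 = a) (h0' : deriv f 0 = b) (h0'' : deriv (deriv f) 0 = c)
    (hc : c ≤ 0)
    (hpos : ∀ t ∈ Ici (0 : ℝ), 0 < deriv f t) :
    ∀ t ∈ Ici (0 : ℝ), deriv f t ≤ max b (3 / 2) := by
  set u := deriv f with hu
  set w := deriv u with hw
  -- regularity
  have hfd : Differentiable ℝ f := hf.differentiable (by norm_num)
  have hfu : ContDiff ℝ 2 u :=
    (contDiff_succ_iff_deriv.mp (by exact_mod_cast hf : ContDiff ℝ (2+1) f)).2.2
  have hud : Differentiable ℝ u := hfu.differentiable (by norm_num)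
  have hucont : Continuous u := hud.continuous
  have hfw : ContDiff ℝ 1 w :=
    (contDiff_succ_iff_deriv.mp (by exact_mod_cast hfu : ContDiff ℝ (1+1) u)).2.2
  have hwd : Differentiable ℝ w := hfw.differentiable (by norm_num)
  have hwcont : Continuous w := hwd.continuous
  -- f nonneg on Ici 0
  have hfmono : StrictMonoOn f (Ici 0) := by
    apply strictMonoOn_of_deriv_pos (convex_Ici 0) hfd.continuous.continuousOn
    intro x hx
    rw [interior_Ici] at hx
    exact hpos x (mem_Ici.mpr (le_of_lt hx))
  have hfnn : ∀ t ∈ Ici (0:ℝ), 0 ≤ f t := by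
    intro t ht
    rcases eq_or_lt_of_le (show (0:ℝ) ≤ t from ht) with h | h
    · rw [← h, h0]; exact ha
    · have := hfmono (self_mem_Ici) ht h
      rw [h0] at this; linarith
  -- Lyapunov function
  set L : ℝ → ℝ := fun t => (w t)^2/2 + β * ((u t)^3/3 - (u t)^2/2) with hL
  have hLd : ∀ t : ℝ, HasDerivAt L
      (w t * deriv w t + β * ((u t)^2 * w t - u t * w t)) t := by
    intro t
    have h2u : HasDerivAt u (w t) t := (hud t).hasDerivAt
    have h2w : HasDerivAt w (deriv w t) t := (hwd t).hasDerivAt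
    have h1 : HasDerivAt (fun x => (w x)^2 / 2) (w t * deriv w t) t := by
      have := (h2w.fun_pow 2).div_const 2
      exact this.congr_deriv (by ring)
    have h2 : HasDerivAt (fun x => β * ((u x)^3/3 - (u x)^2/2))
        (β * ((u t)^2 * w t - u t * w t)) t := by
      have h3 := (h2u.fun_pow 3).div_const 3
      have h4 := (h2u.fun_pow 2).div_const 2
      have := (h3.sub h4).const_mul β
      exact this.congr_deriv (by ring)
    exact h1.add h2
  have hLanti : AntitoneOn L (Ici 0) := by
    apply antitoneOn_of_deriv_nonpos (convex_Ici 0)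
    · exact (((hwcont.pow 2).div_const 2).add (continuous_const.mul
        (((hucont.pow 3).div_const 3).sub ((hucont.pow 2).div_const 2)))).continuousOn
    · intro x _
      exact (hLd x).differentiableAt.differentiableWithinAt
    · intro x hx
      rw [interior_Ici] at hx
      rw [(hLd x).deriv]
      have heqx := heq x (mem_Ici.mpr (le_of_lt hx))
      have hdw : deriv w x = -(f x * w x) - β * u x * (u x - 1) := by linarith
      rw [hdw]
      have hfx := hfnn x (mem_Ici.mpr (le_of_lt hx))
      nlinarith [sq_nonneg (w x), mul_nonneg hfx (sq_nonneg (w x))]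
  -- main argument
  intro s hs
  by_contra hcon
  push_neg at hcon
  have hub : b < u s := lt_of_le_of_lt (le_max_left _ _) hcon
  have hu32 : (3:ℝ)/2 < u s := lt_of_le_of_lt (le_max_right _ _) hcon
  have hs0 : 0 < s := by
    rcases eq_or_lt_of_le (show (0:ℝ) ≤ s from hs) with h | h
    · exfalso; rw [← h, h0'] at hub; exact lt_irrefl b hub
    · exact h
  -- find t₀ ∈ [0,s] with w t₀ = 0 and u t₀ ≤ b
  obtain ⟨t₀, ht₀s, hwt₀, hut₀⟩ : ∃ t₀, t₀ ∈ Icc 0 s ∧ w t₀ = 0 ∧ u t₀ ≤ b := by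
    rcases eq_or_lt_of_le hc with hc0 | hclt
    · exact ⟨0, ⟨le_refl 0, le_of_lt hs0⟩, by rw [h0'', ← hc0], le_of_eq h0'⟩
    · -- c < 0 : MVT gives ξ with w ξ > 0
      obtain ⟨ξ, hξmem, hξval⟩ := exists_deriv_eq_slope u hs0
        hucont.continuousOn hud.differentiableOn
      rw [← hw] at hξval
      have hwξ : 0 < w ξ := by
        rw [hξval, h0']
        apply div_pos <;> linarith
      set S : Set ℝ := {t | t ∈ Icc 0 ξ ∧ w t = 0} with hS
      have hSclosed : IsClosed S := by
        have : S = Icc 0 ξ ∩ w ⁻¹' {0} := by ext x; simp [hS, mem_inter_iff]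
        rw [this]; exact isClosed_Icc.inter (isClosed_singleton.preimage hwcont)
      have hSne : S.Nonempty := by
        have hsub := intermediate_value_Icc (le_of_lt hξmem.1) hwcont.continuousOn
        have h0mem : (0:ℝ) ∈ Icc (w 0) (w ξ) := ⟨by rw [h0'']; linarith, le_of_lt hwξ⟩
        obtain ⟨t', ht'mem, ht'val⟩ := hsub h0mem
        exact ⟨t', ht'mem, ht'val⟩
      have hSbdd : BddBelow S := ⟨0, fun x hx => hx.1.1⟩
      set t₀ := sInf S with ht₀
      have ht₀S : t₀ ∈ S := hSclosed.csInf_mem hSne hSbdd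
      have hwnonpos : ∀ x ∈ Icc 0 t₀, w x ≤ 0 := by
        intro x hx
        by_contra hxp
        push_neg at hxp
        have hsub := intermediate_value_Icc hx.1 hwcont.continuousOn
        have h0m : (0:ℝ) ∈ Icc (w 0) (w x) := ⟨by rw [h0'']; linarith, le_of_lt hxp⟩
        obtain ⟨y, hymem, hyval⟩ := hsub h0m
        have hyS : y ∈ S := ⟨⟨hymem.1, le_trans hymem.2 (le_trans hx.2 ht₀S.1.2)⟩, hyval⟩
        have hty : t₀ ≤ y := csInf_le hSbdd hyS
        have hxeq : x = t₀ := le_antisymm hx.2 (le_trans hty hymem.2)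
        rw [hxeq, ht₀S.2] at hxp
        exact lt_irrefl 0 hxp
      have hanti : AntitoneOn u (Icc 0 t₀) := by
        apply antitoneOn_of_deriv_nonpos (convex_Icc 0 t₀) hucont.continuousOn
          (hud.differentiableOn)
        intro x hx
        rw [interior_Icc] at hx
        rw [← hw]
        exact hwnonpos x ⟨le_of_lt hx.1, le_of_lt hx.2⟩
      have hub' : u t₀ ≤ u 0 :=
        hanti (left_mem_Icc.mpr ht₀S.1.1) ⟨ht₀S.1.1, le_refl _⟩ ht₀S.1.1
      exact ⟨t₀, ⟨ht₀S.1.1, le_trans ht₀S.1.2 (le_of_lt hξmem.2)⟩, ht₀S.2,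
        by rw [h0'] at hub'; exact hub'⟩
  -- use Lyapunov monotonicity
  have hLle : L s ≤ L t₀ := hLanti (show t₀ ∈ Ici 0 from ht₀s.1) hs ht₀s.2
  have hut₀pos : 0 < u t₀ := hpos t₀ ht₀s.1
  simp only [hL] at hLle
  rw [hwt₀] at hLle
  nlinarith [sq_nonneg (w s), mul_pos hβ (mul_pos (sub_pos.mpr (lt_of_le_of_lt hut₀ hub))
    (show (0:ℝ) < 2*(u s)^2 + 2*(u s)*(u t₀) + 2*(u t₀)^2 - 3*(u s) - 3*(u t₀) by
      nlinarith [mul_pos (show (0:ℝ) < 2*(u s)-3 by linarith) hut₀pos, sq_nonneg (u t₀),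
        mul_pos (show (0:ℝ) < 2*(u s)-3 by linarith) (show (0:ℝ) < u s by linarith)]))]
end

section
/- Let β > 0, a ≥ 0 and b ≥ 1, and let f be a solution of the equation f''' + f·f'' + β·f'·(f'−1) = 0 on [0, +∞) with f(0) = a, f'(0) = b and f''(0) = c ≤ 0, such that f' > 0 on [0, +∞). Then, setting d = max{b, 3/2}, one has c ≥ −a·b − √((2b + a²)·(β + d)·d). In particular, the set of such shooting parameters c is bounded from below. -/
open Set Filter Topology

private lemma mono_aux10 {φ φ' : ℝ → ℝ} (h : ∀ x, HasDerivAt φ (φ' x) x)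
    {p q : ℝ} (hnn : ∀ x ∈ Icc p q, 0 ≤ φ' x) :
    ∀ x ∈ Icc p q, φ p ≤ φ x := by
  intro x hx
  have hm : MonotoneOn φ (Icc p q) :=
    monotoneOn_of_deriv_nonneg (convex_Icc p q)
      (fun y _ => (h y).continuousAt.continuousWithinAt)
      (fun y _ => ((h y).differentiableAt).differentiableWithinAt)
      (fun y hy => by
        rw [(h y).deriv]
        exact hnn y (interior_subset hy))
  exact hm ⟨le_refl p, hx.1.trans hx.2⟩ hx hx.1

private lemma anti_aux10 {φ φ' : ℝ → ℝ} (h : ∀ x, HasDerivAt φ (φ' x) x)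
    {p q : ℝ} (hnp : ∀ x ∈ Icc p q, φ' x ≤ 0) :
    ∀ x ∈ Icc p q, φ x ≤ φ p := by
  intro x hx
  have := mono_aux10 (φ := fun y => -φ y) (φ' := fun y => -φ' y)
    (fun y => (h y).neg) (fun y hy => neg_nonneg.2 (hnp y hy)) x hx
  simpa using this

set_option maxHeartbeats 1000000 in
/-- for `β > 0`, `a ≥ 0`, `b ≥ 1`, if a solution of
`f''' + f f'' + β f'(f'-1) = 0` on `[0,∞)` with `f(0) = a`, `f'(0) = b`,
`f''(0) = c ≤ 0` has `f' > 0` on `[0,∞)`, then, with `d = max {b, 3/2}`,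
`c ≥ -ab - √((2b + a²)(β + d) d)`. -/
theorem stmt10 (β a b c : ℝ) (hβ : 0 < β) (ha : 0 ≤ a) (hb : 1 ≤ b)
    (f : ℝ → ℝ) (hf : ContDiff ℝ 3 f)
    (heq : ∀ t ∈ Ici (0 : ℝ), deriv (deriv (deriv f)) t + f t * deriv (deriv f) t
      + β * deriv f t * (deriv f t - 1) = 0)
    (h0 : f 0 = a) (h0' : deriv f 0 = b) (h0'' : deriv (deriv f) 0 = c)
    (hc : c ≤ 0)
    (hpos : ∀ t ∈ Ici (0 : ℝ), 0 < deriv f t) :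
    -(a * b) - Real.sqrt ((2 * b + a ^ 2) * (β + max b (3 / 2)) * max b (3 / 2)) ≤ c := by
  by_contra hcon
  push_neg at hcon
  set d : ℝ := max b (3 / 2) with hd
  have hd32 : (3 / 2 : ℝ) ≤ d := le_max_right _ _
  have hbd : b ≤ d := le_max_left _ _
  have hd0 : (0 : ℝ) < d := by linarith
  set K : ℝ := (β + d) * d with hK
  have hK0 : 0 < K := mul_pos (by linarith) hd0
  set X : ℝ := (2 * b + a ^ 2) * (β + d) * d with hX
  have hX0 : (0 : ℝ) ≤ X := by
    have : (0:ℝ) ≤ 2 * b + a ^ 2 := by nlinarith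
    positivity
  set m : ℝ := -(c + a * b) with hm
  have hmX : Real.sqrt X < m := by
    have : c < -(a * b) - Real.sqrt X := hcon
    simp only [hm]; linarith
  have hm0 : 0 < m := lt_of_le_of_lt (Real.sqrt_nonneg X) hmX
  have hm2 : X < m ^ 2 := by
    nlinarith [Real.sq_sqrt hX0, Real.sqrt_nonneg X]
  set T' : ℝ := m / K with hT'
  have hT'0 : 0 < T' := div_pos hm0 hK0
  have hKT' : K * T' = m := by
    rw [hT']; field_simp
  -- differentiability
  have hsplit1 := (contDiff_succ_iff_deriv (n := 2)).1 (by exact_mod_cast hf)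
  have hd1 : Differentiable ℝ f := hsplit1.1
  have hf2 : ContDiff ℝ 2 (deriv f) := hsplit1.2.2
  have hsplit2 := (contDiff_succ_iff_deriv (n := 1)).1 (by exact_mod_cast hf2)
  have hd2 : Differentiable ℝ (deriv f) := hsplit2.1
  have hf1 : ContDiff ℝ 1 (deriv (deriv f)) := hsplit2.2.2
  have hd3 : Differentiable ℝ (deriv (deriv f)) := hf1.differentiable one_ne_zero
  have hcf : Continuous f := hd1.continuous
  have hcf' : Continuous (deriv f) := hd2.continuous
  have hcf'' : Continuous (deriv (deriv f)) := hd3.continuous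
  -- G = F' where F = f^2/2 + f'
  set G : ℝ → ℝ := fun t => f t * deriv f t + deriv (deriv f) t with hGdef
  have hcG : Continuous G := (hcf.mul hcf').add hcf''
  have hG : ∀ t, HasDerivAt G
      (deriv f t * deriv f t + f t * deriv (deriv f) t + deriv (deriv (deriv f)) t) t :=
    fun t => (((hd1 t).hasDerivAt.mul (hd2 t).hasDerivAt).add (hd3 t).hasDerivAt)
  have hG0 : G 0 = -m := by
    simp only [hGdef, h0, h0', h0'', hm]; ring
  -- f is at least a on [0, ∞)
  have hfa : ∀ s, 0 ≤ s → a ≤ f s := by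
    intro s hs
    have := mono_aux10 (φ := f) (φ' := deriv f) (fun x => (hd1 x).hasDerivAt)
      (p := 0) (q := s) (fun x hx => (hpos x hx.1).le) s ⟨hs, le_refl s⟩
    rwa [h0] at this
  -- derivative bound for G when f' ≤ d
  have hGd : ∀ s, 0 ≤ s → deriv f s ≤ d →
      deriv f s * deriv f s + f s * deriv (deriv f) s + deriv (deriv (deriv f)) s ≤ K := by
    intro s hs hsd
    have he := heq s hs
    have hp := hpos s hs
    nlinarith [mul_nonneg hβ.le (sq_nonneg (deriv f s - 1/2)),
      mul_nonneg (sub_nonneg.2 hsd) (by linarith : (0:ℝ) ≤ d + deriv f s),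
      mul_nonneg hβ.le (by linarith : (0:ℝ) ≤ d - 1/4)]
  -- the invariant set
  set C : Set ℝ := {s | deriv f s ≤ b} ∩ {s | G s ≤ K * s - m} with hCdef
  have hCclosed : IsClosed C :=
    (isClosed_le hcf' continuous_const).inter
      (isClosed_le hcG ((continuous_const.mul continuous_id).sub continuous_const))
  set A : Set ℝ := {τ | τ ∈ Icc 0 T' ∧ Icc 0 τ ⊆ C} with hAdef
  have h0C : (0 : ℝ) ∈ C := by
    constructor
    · exact le_of_eq h0'
    · simp only [mem_setOf_eq, hG0]; linarith
  have h0A : (0 : ℝ) ∈ A := by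
    refine ⟨⟨le_refl 0, hT'0.le⟩, ?_⟩
    intro s hs
    have : s = 0 := le_antisymm hs.2 hs.1
    rwa [this]
  have hbdd : BddAbove A := ⟨T', fun τ hτ => hτ.1.2⟩
  set T : ℝ := sSup A with hT
  have hAne : A.Nonempty := ⟨0, h0A⟩
  have hT0 : 0 ≤ T := le_csSup hbdd h0A
  have hTT' : T ≤ T' := csSup_le hAne (fun τ hτ => hτ.1.2)
  have hTC : Icc 0 T ⊆ C := by
    rcases eq_or_lt_of_le hT0 with h | h
    · intro s hs
      have hs0 : s = 0 := le_antisymm (h ▸ hs.2) hs.1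
      rwa [hs0]
    · have hsub : Ico 0 T ⊆ C := by
        intro s hs
        obtain ⟨τ, hτA, hsτ⟩ := exists_lt_of_lt_csSup hAne hs.2
        exact hτA.2 ⟨hs.1, hsτ.le⟩
      calc Icc 0 T = closure (Ico 0 T) := (closure_Ico h.ne).symm
        _ ⊆ C := closure_minimal hsub hCclosed
  -- key: given f' ≤ d on [0,q] with q ≥ 0, G s ≤ K s - m on [0,q]
  have hGlin : ∀ q, 0 ≤ q → (∀ s ∈ Icc (0:ℝ) q, deriv f s ≤ d) →
      ∀ s ∈ Icc (0:ℝ) q, G s ≤ K * s - m := by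
    intro q hq hled s hs
    have := mono_aux10 (φ := fun s => K * s - m - G s)
      (φ' := fun s => K - (deriv f s * deriv f s + f s * deriv (deriv f) s
        + deriv (deriv (deriv f)) s))
      (fun x => by
        have h1 : HasDerivAt (fun s => K * s - m) K x := by
          simpa using ((hasDerivAt_id x).const_mul K).sub_const m
        exact h1.sub (hG x))
      (p := 0) (q := q)
      (fun x hx => sub_nonneg.2 (hGd x hx.1 (hled x hx))) s hs
    simp only [mul_zero, zero_sub, hG0] at this
    linarith
  -- T = T'
  have hTeq : T = T' := by
    by_contra hne
    have hTlt : T < T' := lt_of_le_of_ne hTT' hne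
    have hGT : G T ≤ K * T - m := (hTC ⟨hT0, le_refl T⟩).2
    have hGTneg : G T < 0 := by
      have : K * T < K * T' := by nlinarith
      rw [hKT'] at this; linarith
    have hf''T : deriv (deriv f) T < 0 := by
      have h1 : 0 ≤ f T * deriv f T :=
        mul_nonneg (le_trans ha (hfa T hT0)) (hpos T hT0).le
      have : f T * deriv f T + deriv (deriv f) T < 0 := hGTneg
      linarith
    -- find δ
    have hopen : IsOpen {x | deriv (deriv f) x < 0} := isOpen_lt hcf'' continuous_const
    obtain ⟨ε, hε0, hball⟩ := Metric.mem_nhds_iff.1 (hopen.mem_nhds hf''T)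
    set δ : ℝ := min (ε / 2) (T' - T) with hδ
    have hδ0 : 0 < δ := lt_min (by linarith) (by linarith)
    have hδε : δ < ε := lt_of_le_of_lt (min_le_left _ _) (by linarith)
    have hδle : δ ≤ T' - T := min_le_right _ _
    have hneg : ∀ s ∈ Icc T (T + δ), deriv (deriv f) s < 0 := by
      intro s hs
      apply hball
      rw [Metric.mem_ball, Real.dist_eq, abs_lt]
      constructor <;> [linarith [hs.1]; linarith [hs.2]]
    -- f' ≤ b on [0, T+δ]
    have hf'leb : ∀ s ∈ Icc (0:ℝ) (T + δ), deriv f s ≤ b := by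
      intro s hs
      rcases le_or_gt s T with h | h
      · exact (hTC ⟨hs.1, h⟩).1
      · have := anti_aux10 (φ := deriv f) (φ' := deriv (deriv f))
          (fun x => (hd2 x).hasDerivAt) (p := T) (q := T + δ)
          (fun x hx => (hneg x hx).le) s ⟨h.le, hs.2⟩
        exact le_trans this (hTC ⟨hT0, le_refl T⟩).1
    have hGle : ∀ s ∈ Icc (0:ℝ) (T + δ), G s ≤ K * s - m :=
      hGlin (T + δ) (by linarith) (fun s hs => le_trans (hf'leb s hs) hbd)
    have hmemA : T + δ ∈ A := by
      refine ⟨⟨by linarith, by linarith⟩, ?_⟩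
      intro s hs
      exact ⟨hf'leb s hs, hGle s hs⟩
    have : T + δ ≤ T := le_csSup hbdd hmemA
    linarith
  -- final contradiction: F(T') < 0
  have hGleT' : ∀ s ∈ Icc (0:ℝ) T', G s ≤ K * s - m := by
    apply hGlin T' hT'0.le
    intro s hs
    exact le_trans ((hTC (hTeq ▸ hs)).1) hbd
  have hHanti := anti_aux10
    (φ := fun s => f s * f s / 2 + deriv f s - (K * s * s / 2 - m * s))
    (φ' := fun s => G s - (K * s - m))
    (fun x => by
      have h1 : HasDerivAt (fun s => f s * f s / 2) (f x * deriv f x) x := by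
        have := ((hd1 x).hasDerivAt.mul (hd1 x).hasDerivAt).div_const 2
        exact this.congr_deriv (by ring)
      have h2 : HasDerivAt (fun s : ℝ => K * s * s / 2 - m * s) (K * x - m) x := by
        have ha1 : HasDerivAt (fun s : ℝ => K * s * s / 2) (K * x) x := by
          have := (((hasDerivAt_id x).const_mul K).mul (hasDerivAt_id x)).div_const 2
          simp only [id_eq] at this
          exact this.congr_deriv (by ring)
        exact (ha1.sub (((hasDerivAt_id x).const_mul m))).congr_deriv (by ring)
      have := (h1.add (hd2 x).hasDerivAt).sub h2
      exact this)
    (p := 0) (q := T')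
    (fun x hx => sub_nonpos.2 (hGleT' x hx)) T' ⟨hT'0.le, le_refl T'⟩
  simp only [h0, h0'] at hHanti
  have hfT' : 0 < deriv f T' := hpos T' hT'0.le
  have hfT'2 : 0 ≤ f T' * f T' := mul_self_nonneg _
  -- hHanti : f T' * f T' / 2 + deriv f T' - (K*T'*T'/2 - m*T') ≤ a*a/2 + b - (K*0*0/2 - m*0)
  have hmT' : m * T' * K = m ^ 2 := by
    rw [hT']; field_simp
  have h4 : K * T' * T' = m * T' := by rw [hKT']
  have h5 : m * T' < a * a + 2 * b := by nlinarith [hHanti, hfT', hfT'2, h4]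
  have h6 : X = (a * a + 2 * b) * K := by rw [hX, hK]; ring
  have h7 := mul_lt_mul_of_pos_right h5 hK0
  linarith [hm2, hmT', h6, h7]
end

section
/- Let β > 0, a ≥ 0 and b ≥ 1, and let f be a solution of the equation f''' + f·f'' + β·f'·(f'−1) = 0 on [0, T) (with T ≤ +∞) with f(0) = a, f'(0) = b and f''(0) = c, where either c < 0, or c = 0 and b > 1. If there exists s ∈ (0, T) such that f' > 0 on [0, s) and f'(s) = 0, then f'' < 0 on (0, T), i.e. f is strictly concave on [0, T). -/
open Set Filter Topology

/-- for `β > 0`, `a ≥ 0`, `b ≥ 1`, a solution of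
`f''' + f f'' + β f'(f'-1) = 0` on `[0,T)` (`T ≤ +∞`, modelled with `T : EReal`)
with `f(0) = a`, `f'(0) = b`, `f''(0) = c`, where `c < 0` or (`c = 0` and `b > 1`):
if `f' > 0` on `[0,s)` and `f'(s) = 0` for some `s ∈ (0,T)`, then `f'' < 0`
on `(0,T)`, i.e. `f` is strictly concave. -/
theorem stmt11 (β a b c : ℝ) (hβ : 0 < β) (ha : 0 ≤ a) (hb : 1 ≤ b)
    (T : EReal) (f : ℝ → ℝ) (hf : ContDiff ℝ 3 f)
    (heq : ∀ t : ℝ, 0 ≤ t → (t : EReal) < T →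
      deriv (deriv (deriv f)) t + f t * deriv (deriv f) t
        + β * deriv f t * (deriv f t - 1) = 0)
    (h0 : f 0 = a) (h0' : deriv f 0 = b) (h0'' : deriv (deriv f) 0 = c)
    (hc : c < 0 ∨ (c = 0 ∧ 1 < b))
    (hs : ∃ s : ℝ, 0 < s ∧ (s : EReal) < T ∧
      (∀ t : ℝ, 0 ≤ t → t < s → 0 < deriv f t) ∧ deriv f s = 0) :
    ∀ t : ℝ, 0 < t → (t : EReal) < T → deriv (deriv f) t < 0 := by
  obtain ⟨s, hs0, hsT, hspos, hs'⟩ := hs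
  set f1 : ℝ → ℝ := deriv f with hf1def
  set f2 : ℝ → ℝ := deriv f1 with hf2def
  set f3 : ℝ → ℝ := deriv f2 with hf3def
  -- smoothness facts
  have hf1c : ContDiff ℝ 2 f1 := by
    have h : ContDiff ℝ ((2:ℕ∞)+1) f := by exact_mod_cast hf
    rw [contDiff_succ_iff_deriv] at h
    exact h.2.2
  have hf2c : ContDiff ℝ 1 f2 := by
    have h : ContDiff ℝ ((1:ℕ∞)+1) f1 := by exact_mod_cast hf1c
    rw [contDiff_succ_iff_deriv] at h
    exact h.2.2
  have hf2cont : Continuous f2 := hf2c.continuous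
  have hd : ∀ x, HasDerivAt f (f1 x) x :=
    fun x => ((hf.differentiable (by norm_num)) x).hasDerivAt
  have hd1 : ∀ x, HasDerivAt f1 (f2 x) x :=
    fun x => ((hf1c.differentiable (by norm_num)) x).hasDerivAt
  have hd2 : ∀ x, HasDerivAt f2 (f3 x) x :=
    fun x => ((hf2c.differentiable (by norm_num)) x).hasDerivAt
  -- ODE in convenient form
  have hode : ∀ u : ℝ, 0 ≤ u → (u : EReal) < T →
      f3 u = -(f u * f2 u) - β * f1 u * (f1 u - 1) := by
    intro u hu huT
    have := heq u hu huT
    linarith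
  -- f2 < 0 near 0
  have hneg0 : ∃ ε > 0, ∀ u : ℝ, 0 < u → u ≤ ε → f2 u < 0 := by
    rcases hc with hc | ⟨hc0, hb1⟩
    · have h1 : ∀ᶠ u in 𝓝 (0:ℝ), f2 u < 0 := by
        have : Tendsto f2 (𝓝 0) (𝓝 (f2 0)) := hf2cont.tendsto 0
        have h2 : f2 0 < 0 := by rw [h0'']; exact hc
        exact this.eventually (eventually_lt_nhds h2)
      rcases Metric.eventually_nhds_iff.1 h1 with ⟨ε, hε, hball⟩
      refine ⟨ε/2, by linarith, fun u hu hu' => hball ?_⟩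
      rw [Real.dist_eq, sub_zero, abs_of_pos hu]; linarith
    · have h0T : ((0:ℝ) : EReal) < T :=
        lt_trans (by exact_mod_cast hs0) hsT
      have hf30 : f3 0 < 0 := by
        have := hode 0 le_rfl h0T
        rw [h0, h0', h0'', hc0] at this
        rw [this]
        have hbpos : (0:ℝ) < b := lt_of_lt_of_le one_pos hb
        have := mul_pos (mul_pos hβ hbpos) (show (0:ℝ) < b - 1 by linarith)
        linarith
      have hT := hasDerivAt_iff_tendsto_slope.1 (hd2 0)
      have hT' : Tendsto (slope f2 0) (𝓝[>] 0) (𝓝 (f3 0)) :=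
        hT.mono_left (nhdsWithin_mono 0 (fun y hy => ne_of_gt hy))
      have hev : ∀ᶠ y in 𝓝[>] (0:ℝ), f2 y < 0 := by
        filter_upwards [hT'.eventually (eventually_lt_nhds hf30),
          self_mem_nhdsWithin] with y hy hy'
        rw [slope_def_field, h0'', hc0, sub_zero, sub_zero, div_lt_iff₀ hy'] at hy
        simpa using hy
      rcases mem_nhdsGT_iff_exists_Ioc_subset.1 hev with ⟨ε, hε, hsub⟩
      exact ⟨ε, hε, fun u hu hu' => hsub ⟨hu, hu'⟩⟩
  obtain ⟨ε, hε, hεneg⟩ := hneg0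
  -- main argument
  intro t ht htT
  by_contra hcon
  push_neg at hcon
  have hεt : ε < t := by
    by_contra h
    push_neg at h
    exact absurd (hεneg t ht (le_of_not_gt (fun h' => h.not_gt h'))) (not_lt.2 hcon)
  set S : Set ℝ := {u | u ∈ Ioc (0:ℝ) t ∧ 0 ≤ f2 u} with hSdef
  have htS : t ∈ S := ⟨⟨ht, le_rfl⟩, hcon⟩
  have hSne : S.Nonempty := ⟨t, htS⟩
  have hSbdd : BddBelow S := ⟨0, fun u hu => hu.1.1.le⟩
  set t0 : ℝ := sInf S with ht0def
  have hεS : ∀ u ∈ S, ε ≤ u := by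
    intro u hu
    by_contra h
    push_neg at h
    exact absurd hu.2 (not_le.2 (hεneg u hu.1.1 h.le))
  have hεt0 : ε ≤ t0 := le_csInf hSne hεS
  have ht0pos : 0 < t0 := lt_of_lt_of_le hε hεt0
  have ht0t : t0 ≤ t := csInf_le hSbdd htS
  have hbelow : ∀ u : ℝ, 0 < u → u < t0 → f2 u < 0 := by
    intro u hu hut0
    by_contra h
    push_neg at h
    exact absurd (csInf_le hSbdd ⟨⟨hu, hut0.le.trans ht0t⟩, h⟩) (not_le.2 hut0)
  have hf2t0_ge : 0 ≤ f2 t0 := by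
    have hcl : t0 ∈ closure S := csInf_mem_closure hSne hSbdd
    have : closure S ⊆ {u | 0 ≤ f2 u} :=
      closure_minimal (fun u hu => hu.2) (isClosed_le continuous_const hf2cont)
    exact this hcl
  have hf2t0 : f2 t0 = 0 := by
    refine le_antisymm ?_ hf2t0_ge
    have hT : Tendsto f2 (𝓝[<] t0) (𝓝 (f2 t0)) :=
      (hf2cont.tendsto t0).mono_left nhdsWithin_le_nhds
    refine le_of_tendsto hT ?_
    filter_upwards [Ioo_mem_nhdsLT_of_mem (⟨ht0pos, le_rfl⟩ : t0 ∈ Ioc 0 t0)] with y hy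
    exact (hbelow y hy.1 hy.2).le
  -- one-sided derivative sign at t0
  have hf3t0 : 0 ≤ f3 t0 := by
    have hT := hasDerivAt_iff_tendsto_slope.1 (hd2 t0)
    have hT' : Tendsto (slope f2 t0) (𝓝[<] t0) (𝓝 (f3 t0)) :=
      hT.mono_left (nhdsWithin_mono t0 (fun y hy => ne_of_lt hy))
    refine ge_of_tendsto hT' ?_
    filter_upwards [Ioo_mem_nhdsLT_of_mem (⟨ht0pos, le_rfl⟩ : t0 ∈ Ioc 0 t0)] with y hy
    rw [slope_def_field]
    exact div_nonneg_of_nonpos (by linarith [hbelow y hy.1 hy.2, hf2t0])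
      (by linarith [hy.2])
  have ht0T : (t0 : EReal) < T :=
    lt_of_le_of_lt (by exact_mod_cast ht0t) htT
  have hodet0 : f3 t0 = - β * f1 t0 * (f1 t0 - 1) := by
    have := hode t0 ht0pos.le ht0T
    rw [hf2t0] at this
    linarith
  have hp0 : 0 ≤ f1 t0 := by
    by_contra h
    push_neg at h
    have h1 : 0 < f1 t0 * (f1 t0 - 1) := mul_pos_of_neg_of_neg h (by linarith)
    have := mul_pos hβ h1
    rw [hodet0] at hf3t0
    nlinarith
  have hp1 : f1 t0 ≤ 1 := by
    by_contra h
    push_neg at h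
    have h1 : 0 < f1 t0 * (f1 t0 - 1) := mul_pos (by linarith) (by linarith)
    have := mul_pos hβ h1
    rw [hodet0] at hf3t0
    nlinarith
  -- f1 is strictly decreasing on [0, t0]
  have hstrict : StrictAntiOn f1 (Icc 0 t0) := by
    refine strictAntiOn_of_deriv_neg (convex_Icc _ _) hf1c.continuous.continuousOn ?_
    intro u hu
    rw [interior_Icc] at hu
    exact hbelow u hu.1 hu.2
  rcases lt_or_ge s t0 with hst0 | ht0s
  · -- t0 > s : f1 t0 < f1 s = 0, contradiction with hp0
    have : f1 t0 < f1 s := hstrict ⟨hs0.le, hst0.le⟩ ⟨ht0pos.le, le_rfl⟩ hst0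
    rw [hs'] at this
    linarith
  · rcases hp0.lt_or_eq with hp | hp
    · -- 0 < f1 t0 ≤ 1 : energy argument on [t0, s]
      have ht0ne : t0 ≠ s := by
        intro h
        rw [h, hs'] at hp
        exact lt_irrefl 0 hp
      have ht0s' : t0 < s := lt_of_le_of_ne ht0s ht0ne
      set E : ℝ → ℝ := fun u => (f2 u)^2/2 + β*((f1 u)^3/3 - (f1 u)^2/2) with hEdef
      have hET : ∀ u ∈ Icc (0:ℝ) s, (u : EReal) < T := by
        intro u hu
        exact lt_of_le_of_lt (by exact_mod_cast hu.2) hsT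
      have hE : ∀ u ∈ Icc (0:ℝ) s, HasDerivAt E (-(f u) * (f2 u)^2) u := by
        intro u hu
        have h3 := hode u hu.1 (hET u hu)
        have hD : HasDerivAt E
            ((2 * f2 u ^ 1 * f3 u)/2
              + β * ((3 * f1 u ^ 2 * f2 u)/3 - (2 * f1 u ^ 1 * f2 u)/2)) u := by
          exact (((hd2 u).pow 2).div_const 2).add
            (HasDerivAt.const_mul β ((((hd1 u).pow 3).div_const 3).sub
              (((hd1 u).pow 2).div_const 2)))
        convert hD using 1
        rw [h3]; ring
      have hfm : MonotoneOn f (Icc 0 s) := by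
        refine monotoneOn_of_deriv_nonneg (convex_Icc _ _) hf.continuous.continuousOn
          (fun u hu => ((hd u).differentiableAt).differentiableWithinAt) ?_
        intro u hu
        rw [interior_Icc] at hu
        rw [(hd u).deriv]
        exact (hspos u hu.1.le hu.2).le
      have hfnn : ∀ u ∈ Icc (0:ℝ) s, 0 ≤ f u := by
        intro u hu
        have := hfm ⟨le_rfl, hs0.le⟩ hu hu.1
        rw [h0] at this
        linarith
      have hEmono : AntitoneOn E (Icc 0 s) := by
        refine antitoneOn_of_deriv_nonpos (convex_Icc _ _)
          (fun u hu => (hE u hu).continuousAt.continuousWithinAt)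
          (fun u hu => ((hE u (interior_subset hu)).differentiableAt).differentiableWithinAt) ?_
        intro u hu
        rw [(hE u (interior_subset hu)).deriv]
        have := hfnn u (interior_subset hu)
        nlinarith [sq_nonneg (f2 u)]
      have hcomp : E s ≤ E t0 :=
        hEmono ⟨ht0pos.le, ht0s⟩ ⟨hs0.le, le_rfl⟩ ht0s
      rw [hEdef] at hcomp
      simp only [hs', hf2t0] at hcomp
      nlinarith [sq_nonneg (f2 s), mul_pos hβ (mul_pos hp hp)]
    · -- f1 t0 = 0 : then t0 = s, and f1 s = f2 s = 0; backward uniqueness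
      have ht0s' : t0 = s := by
        rcases lt_or_eq_of_le ht0s with h | h
        · exact absurd (hspos t0 ht0pos.le h) (by rw [← hp]; exact lt_irrefl 0)
        · exact h
      have hf2s : f2 s = 0 := by rw [← ht0s']; exact hf2t0
      -- bounds on f and f1 on [0, s]
      obtain ⟨M, hM⟩ := (isCompact_Icc (a := (0:ℝ)) (b := s)).exists_bound_of_continuousOn
        hf.continuous.continuousOn
      obtain ⟨C, hC⟩ := (isCompact_Icc (a := (0:ℝ)) (b := s)).exists_bound_of_continuousOn
        hf1c.continuous.continuousOn
      have hM0 : 0 ≤ M := le_trans (norm_nonneg _) (hM 0 ⟨le_rfl, hs0.le⟩)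
      have hC0 : 0 ≤ C := le_trans (norm_nonneg _) (hC 0 ⟨le_rfl, hs0.le⟩)
      set K : ℝ := M + β*(C+1) + 1 with hKdef
      set v : ℝ → ℝ × ℝ := fun u => (f1 (s-u), f2 (s-u)) with hvdef
      set v' : ℝ → ℝ × ℝ := fun u => (-f2 (s-u), -f3 (s-u)) with hv'def
      have hv : ∀ u, HasDerivAt v (v' u) u := by
        intro u
        have hsub : HasDerivAt (fun u:ℝ => s - u) (-1) u := (hasDerivAt_id u).const_sub s
        have h1 : HasDerivAt (fun u => f1 (s-u)) (-f2 (s-u)) u := by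
          simpa [Function.comp_def] using (hd1 (s-u)).comp u hsub
        have h2 : HasDerivAt (fun u => f2 (s-u)) (-f3 (s-u)) u := by
          simpa [Function.comp_def] using (hd2 (s-u)).comp u hsub
        exact h1.prodMk h2
      have hinit : ‖v 0‖ ≤ 0 := by
        have hv0 : v 0 = (0, 0) := by
          rw [hvdef]
          simp only [sub_zero, hs', hf2s]
        rw [hv0]
        simp [Prod.norm_def]
      have hK1 : (1:ℝ) ≤ K := by
        have := mul_nonneg hβ.le (by linarith : (0:ℝ) ≤ C + 1)
        rw [hKdef]; linarith
      have hbound : ∀ x ∈ Ico (0:ℝ) s, ‖v' x‖ ≤ K * ‖v x‖ + 0 := by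
        intro x hx
        have hw : s - x ∈ Icc (0:ℝ) s := ⟨by linarith [hx.2], by linarith [hx.1]⟩
        have hwT : ((s - x : ℝ) : EReal) < T := lt_of_le_of_lt (by exact_mod_cast hw.2) hsT
        have h3 := hode (s-x) hw.1 hwT
        have hvx1 : |f1 (s-x)| ≤ ‖v x‖ := by
          rw [hvdef, Prod.norm_def]
          exact le_max_of_le_left (le_of_eq (Real.norm_eq_abs _).symm)
        have hvx2 : |f2 (s-x)| ≤ ‖v x‖ := by
          rw [hvdef, Prod.norm_def]
          exact le_max_of_le_right (le_of_eq (Real.norm_eq_abs _).symm)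
        have hvnn : (0:ℝ) ≤ ‖v x‖ := norm_nonneg _
        have hfb : |f (s-x)| ≤ M := by
          have := hM (s-x) hw
          rwa [Real.norm_eq_abs] at this
        have hf1b : |f1 (s-x)| ≤ C := by
          have := hC (s-x) hw
          rwa [Real.norm_eq_abs] at this
        have hbound3 : |f3 (s-x)| ≤ (M + β*(C+1)) * ‖v x‖ := by
          rw [h3]
          have h1 : |-(f (s-x) * f2 (s-x)) - β * f1 (s-x) * (f1 (s-x) - 1)|
              ≤ |f (s-x) * f2 (s-x)| + |β * f1 (s-x) * (f1 (s-x) - 1)| := by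
            have := abs_sub (-(f (s-x) * f2 (s-x))) (β * f1 (s-x) * (f1 (s-x) - 1))
            rwa [abs_neg] at this
          have e1 : |f (s-x) * f2 (s-x)| ≤ M * ‖v x‖ := by
            rw [abs_mul]
            exact mul_le_mul hfb hvx2 (abs_nonneg _) hM0
          have e2 : |β * f1 (s-x) * (f1 (s-x) - 1)| ≤ β * ((C+1) * ‖v x‖) := by
            rw [abs_mul, abs_mul, abs_of_pos hβ, mul_assoc]
            refine mul_le_mul_of_nonneg_left ?_ hβ.le
            have h4 : |f1 (s-x) - 1| ≤ |f1 (s-x)| + 1 := by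
              have := abs_sub (f1 (s-x)) (1:ℝ)
              rwa [abs_one] at this
            have h5 : |f1 (s-x)| * |f1 (s-x) - 1| ≤ |f1 (s-x)| * (|f1 (s-x)| + 1) :=
              mul_le_mul_of_nonneg_left h4 (abs_nonneg _)
            refine le_trans h5 ?_
            have h6 : |f1 (s-x)| * |f1 (s-x)| ≤ C * ‖v x‖ :=
              mul_le_mul hf1b hvx1 (abs_nonneg _) hC0
            have h7 : |f1 (s-x)| * (|f1 (s-x)| + 1)
                = |f1 (s-x)| * |f1 (s-x)| + |f1 (s-x)| := by ring
            rw [h7]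
            have := le_trans hvx1 (le_refl ‖v x‖)
            calc |f1 (s-x)| * |f1 (s-x)| + |f1 (s-x)| ≤ C * ‖v x‖ + ‖v x‖ :=
                  add_le_add h6 (le_trans hvx1 (le_refl _))
              _ = (C+1) * ‖v x‖ := by ring
          calc |-(f (s-x) * f2 (s-x)) - β * f1 (s-x) * (f1 (s-x) - 1)|
              ≤ |f (s-x) * f2 (s-x)| + |β * f1 (s-x) * (f1 (s-x) - 1)| := h1
            _ ≤ M * ‖v x‖ + β * ((C+1) * ‖v x‖) := add_le_add e1 e2
            _ = (M + β*(C+1)) * ‖v x‖ := by ring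
        have hvx' : ‖v' x‖ = max |f2 (s-x)| |f3 (s-x)| := by
          rw [hv'def, Prod.norm_def]
          simp [Real.norm_eq_abs]
        rw [hvx', add_zero]
        refine max_le ?_ ?_
        · calc |f2 (s-x)| ≤ ‖v x‖ := hvx2
            _ = 1 * ‖v x‖ := (one_mul _).symm
            _ ≤ K * ‖v x‖ := mul_le_mul_of_nonneg_right hK1 hvnn
        · refine le_trans hbound3 ?_
          refine mul_le_mul_of_nonneg_right ?_ hvnn
          rw [hKdef]; linarith
      have hgron := norm_le_gronwallBound_of_norm_deriv_right_le
        (fun u _ => (hv u).continuousAt.continuousWithinAt)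
        (fun u _ => (hv u).hasDerivWithinAt)
        hinit hbound s ⟨hs0.le, le_rfl⟩
      rw [gronwallBound_ε0, zero_mul] at hgron
      have hb' : |b| ≤ ‖v s‖ := by
        rw [hvdef]
        simp only [sub_self, h0']
        rw [Prod.norm_def]
        exact le_max_of_le_left (le_of_eq (Real.norm_eq_abs b).symm)
      rw [abs_of_pos (by linarith : (0:ℝ) < b)] at hb'
      linarith
end
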